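/- arXiv:1205.5758 — 8 statements merged into one kernel-verified Lean document; each statement's English description precedes it below -/
import Mathlib

section
/- For every infinite word ω ∈ Σ the limit s(ω) = lim_{k→∞} μ̃(I_{ω_k}) / μ̃(I_{σ*(ω_k)}) exists, where σ*(i_1, …, i_k) = (i_2, …, i_k). Moreover s(ω) = lim_{k→∞} μ(C_{ω_k}) / μ(C_{σ*(ω_k)}), where μ is the Borel probability on Σ determined by μ(C_γ) = ∫_{I_γ} v dμ̃ on cylinders; that is, the scaling function s is the Jacobian of the measure μ with respect to the shift. -/
/-!
Write `m(γ) = μ̃(I_γ)`. Since `f ∘ φ_i = id` on `[0,1]` for the real traces `φ_i` of the inverse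
branches, `φ_l(x) ∈ φ_i(I_γ)` forces `x ∈ I_γ` and `φ_l(x) = φ_i(x)`; by the identity theorem the
latter happens either everywhere or at finitely many points, a `μ̃`-null set. Applying conformality
to continuous approximations of the indicator of `I_{γi} = φ_i(I_γ)` therefore gives
`α m(γi) = ∫_{I_γ} G_i dμ̃`, where `G_i` is the (Lipschitz, positive) weight of the branch `i`.
Hence the ratio `r_k = m(ω_k) / m(σ*(ω_k))` satisfies
`r_{k+1} / r_k = ⨍_{I_{ω_k}} G / ⨍_{I_{σ*(ω_k)}} G` with `G = G_{ω(k)}`; both averages are over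
nested intervals of length `≤ λ^{k-1}`, so this quotient is `1 + O(λ^k)` and `log r_k` converges.
Finally `μ(C_γ) = m(γ) ⨍_{I_γ} v`, and the averages of the Hölder function `v` over the same
nested intervals have quotient tending to `1`.
-/

open MeasureTheory Set Filter Topology
open scoped NNReal ENNReal

def wordMap {ι α : Type*} (φ : ι → α → α) (γ : List ι) (x : α) : α :=
  γ.foldl (fun y i => φ i y) x

section wordMap

variable {ι α : Type*} {φ : ι → α → α} {S : Set α}

lemma wordMap_append_singleton (γ : List ι) (i : ι) (x : α) :
    wordMap φ (γ ++ [i]) x = φ i (wordMap φ γ x) := by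
  simp [wordMap, List.foldl_append]

lemma mapsTo_wordMap (hmaps : ∀ i, MapsTo (φ i) S S) (γ : List ι) :
    MapsTo (wordMap φ γ) S S := by
  induction γ with
  | nil => exact mapsTo_id S
  | cons j γ ih => exact ih.comp (hmaps j)

lemma injOn_wordMap (hmaps : ∀ i, MapsTo (φ i) S S) (hinj : ∀ i, InjOn (φ i) S)
    (γ : List ι) : InjOn (wordMap φ γ) S := by
  induction γ with
  | nil => exact injOn_id S
  | cons j γ ih => exact ih.comp (hinj j) (hmaps j)

lemma wordMap_cons_image_subset (hmaps : ∀ i, MapsTo (φ i) S S) (j : ι) (γ : List ι) :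
    wordMap φ (j :: γ) '' S ⊆ wordMap φ γ '' S := by
  rintro _ ⟨x, hx, rfl⟩
  exact ⟨φ j x, hmaps j hx, rfl⟩

lemma lipschitzOnWith_wordMap [PseudoEMetricSpace α] {Λ : ℝ≥0} (hmaps : ∀ i, MapsTo (φ i) S S)
    (hlip : ∀ i, LipschitzOnWith Λ (φ i) S) (γ : List ι) :
    LipschitzOnWith (Λ ^ γ.length) (wordMap φ γ) S := by
  induction γ with
  | nil => exact LipschitzWith.id.lipschitzOnWith
  | cons j γ ih => rw [List.length_cons, pow_succ]; exact ih.comp (hlip j) (hmaps j)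

end wordMap

lemma LipschitzOnWith.finsetSum {ι X : Type*} [PseudoEMetricSpace X] {s : Finset ι}
    {f : ι → X → ℝ} {K : ι → ℝ≥0} {S : Set X} (hf : ∀ i ∈ s, LipschitzOnWith (K i) (f i) S) :
    LipschitzOnWith (∑ i ∈ s, K i) (fun x => ∑ i ∈ s, f i x) S := by
  classical
  induction s using Finset.induction_on with
  | empty =>
    simpa only [Finset.sum_empty] using (LipschitzWith.const (α := X) (0 : ℝ)).lipschitzOnWith
  | insert j s hj ih =>
    simp only [Finset.sum_insert hj]
    exact (hf j (s.mem_insert_self j)).add (ih fun i hi => hf i (Finset.mem_insert_of_mem hi))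

lemma measure_image_Icc_pos {μ : Measure ℝ} {T : Set ℝ}
    (hfull : ∀ s, IsOpen s → (s ∩ T).Nonempty → 0 < μ s) {h : ℝ → ℝ} {a b : ℝ} (hab : a < b)
    (hc : ContinuousOn h (Icc a b)) (hinj : InjOn h (Icc a b)) (hT : h '' Icc a b ⊆ T) :
    0 < μ (h '' Icc a b) := by
  have hne : h a ≠ h b := fun e =>
    hab.ne (hinj (left_mem_Icc.2 hab.le) (right_mem_Icc.2 hab.le) e)
  have hsub : Ioo (min (h a) (h b)) (max (h a) (h b)) ⊆ h '' Icc a b := by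
    rw [← uIcc_of_le hab.le] at hc ⊢
    exact Ioo_subset_Icc_self.trans (intermediate_value_uIcc hc)
  obtain ⟨c, hc⟩ := nonempty_Ioo.2 (min_lt_max.2 hne)
  exact (hfull _ isOpen_Ioo ⟨c, hc, hT (hsub hc)⟩).trans_le (measure_mono hsub)

section setAverage

variable {X : Type*} [MeasurableSpace X] {μ : Measure X} {A : Set X} {w : X → ℝ}

lemma abs_setAverage_sub_le (hA : MeasurableSet A) (h0 : μ A ≠ 0) (hfin : μ A ≠ ∞)
    (hw : IntegrableOn w A μ) {c ε : ℝ} (h : ∀ x ∈ A, |w x - c| ≤ ε) :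
    |⨍ x in A, w x ∂μ - c| ≤ ε := by
  have := (convex_closedBall c ε).set_average_mem Metric.isClosed_closedBall h0 hfin
    (ae_restrict_of_forall_mem hA fun x hx => Metric.mem_closedBall.2 (h x hx)) hw
  rwa [Metric.mem_closedBall, Real.dist_eq] at this

lemma le_setAverage (hA : MeasurableSet A) (h0 : μ A ≠ 0) (hfin : μ A ≠ ∞)
    (hw : IntegrableOn w A μ) {δ : ℝ} (h : ∀ x ∈ A, δ ≤ w x) : δ ≤ ⨍ x in A, w x ∂μ :=
  (convex_Ici δ).set_average_mem isClosed_Ici h0 hfin (ae_restrict_of_forall_mem hA h) hw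

end setAverage

lemma abs_log_sub_log_le_div {a b δ : ℝ} (hδ : 0 < δ) (ha : δ ≤ a) (hb : δ ≤ b) :
    |Real.log a - Real.log b| ≤ |a - b| / δ := by
  have key {x y : ℝ} (hx : δ ≤ x) (hy : δ ≤ y) : Real.log x - Real.log y ≤ |x - y| / δ := by
    have hx0 := hδ.trans_le hx
    have hy0 := hδ.trans_le hy
    calc Real.log x - Real.log y = Real.log (x / y) := (Real.log_div hx0.ne' hy0.ne').symm
      _ ≤ x / y - 1 := Real.log_le_sub_one_of_pos (div_pos hx0 hy0)
      _ = (x - y) / y := by field_simp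
      _ ≤ |x - y| / y := div_le_div_of_nonneg_right (le_abs_self _) hy0.le
      _ ≤ |x - y| / δ := div_le_div_of_nonneg_left (abs_nonneg _) hδ hy
  rw [abs_sub_le_iff]
  exact ⟨key ha hb, abs_sub_comm a b ▸ key hb ha⟩

lemma exists_tendsto_of_succ_eq_mul_div {r a b : ℕ → ℝ} {δ C ρ : ℝ} (hδ : 0 < δ) (hρ : ρ < 1)
    (hr : ∀ n, 0 < r n) (ha : ∀ n, δ ≤ a n) (hb : ∀ n, δ ≤ b n)
    (hab : ∀ n, |a n - b n| ≤ C * ρ ^ n) (hrec : ∀ n, r (n + 1) = r n * a n / b n) :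
    ∃ s, Tendsto r atTop (𝓝 s) := by
  have hstep (n : ℕ) : dist (Real.log (r n)) (Real.log (r (n + 1))) ≤ C / δ * ρ ^ n := by
    have ha0 := hδ.trans_le (ha n)
    have hb0 := hδ.trans_le (hb n)
    rw [Real.dist_eq, abs_sub_comm, hrec, Real.log_div (mul_pos (hr n) ha0).ne' hb0.ne',
      Real.log_mul (hr n).ne' ha0.ne', add_sub_assoc, add_sub_cancel_left]
    calc |Real.log (a n) - Real.log (b n)|
        ≤ |a n - b n| / δ := abs_log_sub_log_le_div hδ (ha n) (hb n)
      _ ≤ C * ρ ^ n / δ := div_le_div_of_nonneg_right (hab n) hδ.le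
      _ = C / δ * ρ ^ n := by ring
  obtain ⟨L, hL⟩ := cauchySeq_tendsto_of_complete (cauchySeq_of_le_geometric ρ (C / δ) hρ hstep)
  exact ⟨Real.exp L, ((Real.continuous_exp.tendsto L).comp hL).congr fun n => Real.exp_log (hr n)⟩

lemma tendsto_div_of_tendsto_sub {a b : ℕ → ℝ} {δ : ℝ} (hδ : 0 < δ) (hb : ∀ n, δ ≤ b n)
    (hab : Tendsto (fun n => a n - b n) atTop (𝓝 0)) :
    Tendsto (fun n => a n / b n) atTop (𝓝 1) := by
  have hquot : Tendsto (fun n => (a n - b n) / b n) atTop (𝓝 0) := by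
    refine squeeze_zero_norm (fun n => ?_) (by simpa using hab.abs.div_const δ)
    rw [Real.norm_eq_abs, abs_div, abs_of_pos (hδ.trans_le (hb n))]
    exact div_le_div_of_nonneg_left (abs_nonneg _) hδ (hb n)
  refine (add_zero (1 : ℝ) ▸ hquot.const_add 1).congr fun n => ?_
  field_simp [(hδ.trans_le (hb n)).ne']
  ring

theorem setIntegral_sum_mul_indicator_comp {ι : Type*} [Fintype ι] {μ : Measure ℝ}
    [IsFiniteMeasure μ] {S : Set ℝ} (hS : IsCompact S) {φ w : ι → ℝ → ℝ}
    (hφ : ∀ i, ContinuousOn (φ i) S) (hw : ∀ i, ContinuousOn (w i) S) {α : ℝ}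
    (hconf : ∀ q : ℝ → ℝ, Continuous q →
      ∫ x in S, ∑ i, w i x * q (φ i x) ∂μ = α * ∫ x in S, q x ∂μ)
    {J : Set ℝ} (hJ : IsClosed J) :
    ∫ x in S, ∑ i, w i x * J.indicator 1 (φ i x) ∂μ = α * μ.real (J ∩ S) := by
  set q : ℕ → ℝ → ℝ := fun n x => hJ.apprSeq n x
  have hq_cont (n : ℕ) : Continuous (q n) :=
    NNReal.continuous_coe.comp (hJ.apprSeq n).continuous
  have hq_le (n : ℕ) (x : ℝ) : ‖q n x‖ ≤ 1 := by
    simpa [q] using HasOuterApproxClosed.apprSeq_apply_le_one hJ n x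
  have hq_lim (x : ℝ) : Tendsto (fun n => q n x) atTop (𝓝 (J.indicator 1 x)) := by
    have := (NNReal.continuous_coe.tendsto _).comp
      (tendsto_pi_nhds.1 (HasOuterApproxClosed.tendsto_apprSeq hJ) x)
    simpa [q, Function.comp_def, indicator_apply, Pi.one_def] using this
  have hS_meas := hS.measurableSet
  have lhs : Tendsto (fun n => ∫ x in S, ∑ i, w i x * q n (φ i x) ∂μ) atTop
      (𝓝 (∫ x in S, ∑ i, w i x * J.indicator 1 (φ i x) ∂μ)) := by
    refine tendsto_integral_of_dominated_convergence (fun x => ∑ i, |w i x|)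
      (fun n => (continuousOn_finsetSum _ fun i _ =>
        (hw i).mul ((hq_cont n).comp_continuousOn (hφ i))).aestronglyMeasurable hS_meas)
      ((continuousOn_finsetSum _ fun i _ => (hw i).abs).integrableOn_compact hS)
      (fun n => ae_of_all _ fun x => ?_)
      (ae_of_all _ fun x => tendsto_finsetSum _ fun i _ => (hq_lim _).const_mul _)
    refine (norm_sum_le _ _).trans (Finset.sum_le_sum fun i _ => ?_)
    rw [norm_mul, Real.norm_eq_abs]
    exact mul_le_of_le_one_right (abs_nonneg _) (hq_le n _)
  have rhs : Tendsto (fun n => ∫ x in S, q n x ∂μ) atTop (𝓝 (μ.real (J ∩ S))) := by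
    rw [← measureReal_restrict_apply hJ.measurableSet, ← integral_indicator_one hJ.measurableSet]
    exact tendsto_integral_of_dominated_convergence (fun _ => 1)
      (fun n => (hq_cont n).aestronglyMeasurable) (integrable_const _)
      (fun n => ae_of_all _ (hq_le n)) (ae_of_all _ hq_lim)
  simp_rw [hconf _ (hq_cont _)] at lhs
  exact tendsto_nhds_unique (rhs.const_mul α) lhs |>.symm

lemma mem_image_iff_of_leftInvOn {α β : Type*} {S A : Set α} {f : β → α} {g₁ g₂ : α → β}
    (h₁ : LeftInvOn f g₁ S) (h₂ : LeftInvOn f g₂ S) (hAS : A ⊆ S) {x : α} (hx : x ∈ S) :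
    g₁ x ∈ g₂ '' A ↔ x ∈ A ∧ g₁ x = g₂ x := by
  refine ⟨?_, fun ⟨hxA, h⟩ => ⟨x, hxA, h.symm⟩⟩
  rintro ⟨y, hyA, hy⟩
  obtain rfl : y = x := by rw [← h₂ (hAS hyA), hy, h₁ hx]
  exact ⟨hyA, hy.symm⟩

/-- The branches `φ l` are not assumed to be distinct: those agreeing with `φ i` on `S` pool their
weights. -/
noncomputable def coincidentWeight {ι : Type*} [Fintype ι] (φ w : ι → ℝ → ℝ) (S : Set ℝ) (i : ι)
    (x : ℝ) : ℝ :=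
  open Classical in ∑ l with EqOn (φ l) (φ i) S, w l x

section Conformal

variable {ι : Type*} [Fintype ι] {φ w : ι → ℝ → ℝ} {f : ℝ → ℝ} {μ : Measure ℝ} {α : ℝ}
  {S A : Set ℝ}

theorem mul_measureReal_image_eq_setIntegral [IsFiniteMeasure μ] (hS : IsCompact S)
    (hmaps : ∀ i, MapsTo (φ i) S S) (hφ : ∀ i, ContinuousOn (φ i) S)
    (hw : ∀ i, ContinuousOn (w i) S) (hsec : ∀ i, LeftInvOn f (φ i) S)
    (hconf : ∀ q : ℝ → ℝ, Continuous q →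
      ∫ x in S, ∑ i, w i x * q (φ i x) ∂μ = α * ∫ x in S, q x ∂μ)
    (hA : IsCompact A) (hAS : A ⊆ S) (i : ι) :
    α * μ.real (φ i '' A) = ∫ x in A, ∑ l, if φ l x = φ i x then w l x else 0 ∂μ := by
  have hJ : IsClosed (φ i '' A) := (hA.image_of_continuousOn ((hφ i).mono hAS)).isClosed
  rw [← inter_eq_self_of_subset_left ((image_mono hAS).trans (hmaps i).image_subset),
    ← setIntegral_sum_mul_indicator_comp hS hφ hw hconf hJ]
  have hrestrict (g : ℝ → ℝ) : ∫ x in A, g x ∂μ = ∫ x in S, A.indicator g x ∂μ := by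
    rw [setIntegral_indicator hA.measurableSet, inter_eq_self_of_subset_right hAS]
  rw [hrestrict]
  refine setIntegral_congr_fun hS.measurableSet fun x hx => ?_
  have hmem (l : ι) : φ l x ∈ φ i '' A ↔ x ∈ A ∧ φ l x = φ i x :=
    mem_image_iff_of_leftInvOn (hsec l) (hsec i) hAS hx
  classical
  by_cases hxA : x ∈ A <;> simp [indicator_apply, hmem, hxA]

theorem setIntegral_sum_ite_eq_coincidentWeight [NullSingletonClass μ]
    (hdich : ∀ l i, EqOn (φ l) (φ i) S ∨ {x ∈ S | φ l x = φ i x}.Finite)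
    (hA : MeasurableSet A) (hAS : A ⊆ S) (i : ι) :
    ∫ x in A, (∑ l, if φ l x = φ i x then w l x else 0) ∂μ =
      ∫ x in A, coincidentWeight φ w S i x ∂μ := by
  classical
  set B := ⋃ l, {x ∈ S | φ l x = φ i x ∧ ¬EqOn (φ l) (φ i) S}
  have hB : B.Finite := finite_iUnion fun l => by
    rcases hdich l i with h | h
    · exact finite_empty.subset fun x hx => hx.2.2 h
    · exact h.subset fun x hx => ⟨hx.1, hx.2.1⟩
  refine setIntegral_congr_ae hA ?_
  filter_upwards [measure_eq_zero_iff_ae_notMem.1 (hB.measure_zero μ)] with x hxB hxA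
  simp only [B, mem_iUnion, not_exists, mem_ofPred_eq, not_and, not_not] at hxB
  rw [coincidentWeight, Finset.sum_filter]
  refine Finset.sum_congr rfl fun l _ => ?_
  by_cases h : EqOn (φ l) (φ i) S
  · simp [h, h (hAS hxA)]
  · simp [h, mt (hxB l (hAS hxA)) h]

end Conformal

/-- `I_γ` of the paper. -/
def wordInterval {ι : Type*} (φ : ι → ℝ → ℝ) (γ : List ι) : Set ℝ :=
  wordMap φ γ '' Icc 0 1

lemma wordInterval_append_singleton {ι : Type*} (φ : ι → ℝ → ℝ) (γ : List ι) (i : ι) :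
    wordInterval φ (γ ++ [i]) = φ i '' wordInterval φ γ := by
  simp only [wordInterval, image_image, wordMap_append_singleton]

/-- The real model of the setting: `φ i` are the inverse branches on `[0,1]`, `w i = g ∘ φ i`
their weights, and `μ` is conformal with eigenvalue `α` for the transfer operator
`q ↦ ∑ i, w i * q ∘ φ i`. -/
structure ConformalSystem {ι : Type*} [Fintype ι] (φ w : ι → ℝ → ℝ) (μ : Measure ℝ) (α : ℝ)
    (Λ : ℝ≥0) : Prop where
  mapsTo : ∀ i, MapsTo (φ i) (Icc 0 1) (Icc 0 1)
  lipschitzOnWith : ∀ i, LipschitzOnWith Λ (φ i) (Icc 0 1)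
  exists_leftInvOn : ∃ f : ℝ → ℝ, ∀ i, LeftInvOn f (φ i) (Icc 0 1)
  eqOn_or_finite : ∀ l i, EqOn (φ l) (φ i) (Icc 0 1) ∨ {x ∈ Icc 0 1 | φ l x = φ i x}.Finite
  weight_lipschitzOnWith : ∀ i, ∃ K, LipschitzOnWith K (w i) (Icc 0 1)
  weight_pos : ∀ i, ∀ x ∈ Icc (0 : ℝ) 1, 0 < w i x
  integral_transfer : ∀ q : ℝ → ℝ, Continuous q →
    ∫ x in Icc 0 1, ∑ i, w i x * q (φ i x) ∂μ = α * ∫ x in Icc 0 1, q x ∂μ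
  measure_pos : ∀ s, IsOpen s → (s ∩ Icc 0 1).Nonempty → 0 < μ s

namespace ConformalSystem

variable {ι : Type*} [Fintype ι] {φ w : ι → ℝ → ℝ} {μ : Measure ℝ} {α : ℝ} {Λ : ℝ≥0}

lemma continuousOn_weight (h : ConformalSystem φ w μ α Λ) (i : ι) :
    ContinuousOn (w i) (Icc 0 1) :=
  (h.weight_lipschitzOnWith i).choose_spec.continuousOn

lemma isCompact_wordInterval (h : ConformalSystem φ w μ α Λ) (γ : List ι) :
    IsCompact (wordInterval φ γ) :=
  isCompact_Icc.image_of_continuousOn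
    (lipschitzOnWith_wordMap h.mapsTo h.lipschitzOnWith γ).continuousOn

lemma wordInterval_subset (h : ConformalSystem φ w μ α Λ) (γ : List ι) :
    wordInterval φ γ ⊆ Icc 0 1 :=
  (mapsTo_wordMap h.mapsTo γ).image_subset

lemma wordInterval_cons_subset (h : ConformalSystem φ w μ α Λ) (j : ι) (γ : List ι) :
    wordInterval φ (j :: γ) ⊆ wordInterval φ γ :=
  wordMap_cons_image_subset h.mapsTo j γ

lemma measure_wordInterval_pos (h : ConformalSystem φ w μ α Λ) (γ : List ι) :
    0 < μ (wordInterval φ γ) := by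
  obtain ⟨f, hf⟩ := h.exists_leftInvOn
  exact measure_image_Icc_pos h.measure_pos zero_lt_one
    (lipschitzOnWith_wordMap h.mapsTo h.lipschitzOnWith γ).continuousOn
    (injOn_wordMap h.mapsTo (fun i => (hf i).injOn) γ) (h.wordInterval_subset γ)

lemma measureReal_wordInterval_pos (h : ConformalSystem φ w μ α Λ) [IsFiniteMeasure μ]
    (γ : List ι) :
    0 < μ.real (wordInterval φ γ) :=
  ENNReal.toReal_pos (h.measure_wordInterval_pos γ).ne' (measure_ne_top μ _)

lemma abs_sub_le_of_mem_wordInterval (h : ConformalSystem φ w μ α Λ) {γ : List ι} {x y : ℝ}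
    (hx : x ∈ wordInterval φ γ) (hy : y ∈ wordInterval φ γ) : |x - y| ≤ Λ ^ γ.length := by
  obtain ⟨a, ha, rfl⟩ := hx
  obtain ⟨b, hb, rfl⟩ := hy
  calc |wordMap φ γ a - wordMap φ γ b|
      ≤ (Λ ^ γ.length : ℝ≥0) * dist a b :=
        (lipschitzOnWith_wordMap h.mapsTo h.lipschitzOnWith γ).dist_le_mul a ha b hb
    _ ≤ Λ ^ γ.length := by
      push_cast
      exact mul_le_of_le_one_right (by positivity) (Real.dist_le_of_mem_Icc_01 ha hb)

lemma integrableOn_wordInterval (h : ConformalSystem φ w μ α Λ) [IsFiniteMeasure μ]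
    {v : ℝ → ℝ} (hv : ContinuousOn v (Icc 0 1)) (γ : List ι) :
    IntegrableOn v (wordInterval φ γ) μ :=
  (hv.mono (h.wordInterval_subset γ)).integrableOn_compact (h.isCompact_wordInterval γ)

lemma le_setAverage_wordInterval (h : ConformalSystem φ w μ α Λ) [IsFiniteMeasure μ]
    {v : ℝ → ℝ} (hv : ContinuousOn v (Icc 0 1)) {δ : ℝ} (hδ : ∀ x ∈ Icc (0 : ℝ) 1, δ ≤ v x)
    (γ : List ι) : δ ≤ ⨍ x in wordInterval φ γ, v x ∂μ :=
  le_setAverage (h.isCompact_wordInterval γ).measurableSet (h.measure_wordInterval_pos γ).ne'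
    (measure_ne_top μ _) (h.integrableOn_wordInterval hv γ)
    fun x hx => hδ x (h.wordInterval_subset γ hx)

lemma abs_setAverage_cons_sub_le (h : ConformalSystem φ w μ α Λ) [IsFiniteMeasure μ]
    {v : ℝ → ℝ} {C r : ℝ≥0} (hr : 0 < r) (hv : HolderOnWith C r v (Icc 0 1)) (j : ι)
    (γ : List ι) :
    |⨍ x in wordInterval φ (j :: γ), v x ∂μ - ⨍ x in wordInterval φ γ, v x ∂μ|
      ≤ 2 * C * ((Λ : ℝ) ^ (r : ℝ)) ^ γ.length := by
  obtain ⟨z, hz⟩ : (wordInterval φ (j :: γ)).Nonempty := (nonempty_Icc.2 zero_le_one).image _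
  have hzγ := h.wordInterval_cons_subset j γ hz
  set ε := (C : ℝ) * ((Λ : ℝ) ^ (r : ℝ)) ^ γ.length
  have havg {γ' : List ι} (hγ' : wordInterval φ γ' ⊆ wordInterval φ γ) :
      |⨍ x in wordInterval φ γ', v x ∂μ - v z| ≤ ε := by
    refine abs_setAverage_sub_le (h.isCompact_wordInterval γ').measurableSet
      (h.measure_wordInterval_pos γ').ne' ?_ ?_ fun x hx => ?_
    · exact measure_ne_top μ _
    · exact h.integrableOn_wordInterval (hv.continuousOn hr) γ'
    · have hvxz := hv.dist_le_of_le (h.wordInterval_subset γ (hγ' hx))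
        (h.wordInterval_subset γ hzγ) (d := (Λ : ℝ) ^ γ.length)
        (by rw [Real.dist_eq]; exact h.abs_sub_le_of_mem_wordInterval (hγ' hx) hzγ)
      rwa [Real.dist_eq, ← Real.rpow_pow_comm Λ.coe_nonneg] at hvxz
  have h₁ := havg (h.wordInterval_cons_subset j γ)
  have h₂ := havg subset_rfl
  rw [abs_le] at h₁ h₂ ⊢
  constructor <;> linarith

lemma exists_lipschitzOnWith_coincidentWeight (h : ConformalSystem φ w μ α Λ) :
    ∃ K, ∀ i, LipschitzOnWith K (coincidentWeight φ w (Icc 0 1) i) (Icc 0 1) := by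
  classical
  choose K hK using h.weight_lipschitzOnWith
  exact ⟨∑ l, K l, fun i => (LipschitzOnWith.finsetSum fun l _ => hK l).weaken
    (Finset.sum_le_sum_of_subset (Finset.filter_subset _ _))⟩

lemma exists_pos_le_coincidentWeight (h : ConformalSystem φ w μ α Λ) [Nonempty ι] :
    ∃ δ > 0, ∀ i, ∀ x ∈ Icc (0 : ℝ) 1, δ ≤ coincidentWeight φ w (Icc 0 1) i x := by
  choose δ hδ hδle using fun i =>
    isCompact_Icc.exists_forall_le' (h.continuousOn_weight i) (h.weight_pos i)
  obtain ⟨i₀, hi₀⟩ := Finite.exists_min δ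
  classical
  refine ⟨δ i₀, hδ i₀, fun i x hx => (hi₀ i).trans ((hδle i x hx).trans ?_)⟩
  exact Finset.single_le_sum (f := fun l => w l x) (fun l _ => (h.weight_pos l x hx).le)
    (Finset.mem_filter.2 ⟨Finset.mem_univ i, fun _ _ => rfl⟩)

lemma measureReal_wordInterval_append_singleton (h : ConformalSystem φ w μ α Λ)
    [IsFiniteMeasure μ] [NullSingletonClass μ] (hα : α ≠ 0) (γ : List ι) (i : ι) :
    μ.real (wordInterval φ (γ ++ [i])) = μ.real (wordInterval φ γ) *
      (⨍ x in wordInterval φ γ, coincidentWeight φ w (Icc 0 1) i x ∂μ) / α := by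
  obtain ⟨f, hf⟩ := h.exists_leftInvOn
  rw [← smul_eq_mul, measure_smul_setAverage _ (measure_ne_top μ _), eq_div_iff hα, mul_comm,
    wordInterval_append_singleton,
    mul_measureReal_image_eq_setIntegral isCompact_Icc h.mapsTo
      (fun i => (h.lipschitzOnWith i).continuousOn) h.continuousOn_weight hf h.integral_transfer
      (h.isCompact_wordInterval γ) (h.wordInterval_subset γ) i,
    setIntegral_sum_ite_eq_coincidentWeight h.eqOn_or_finite
      (h.isCompact_wordInterval γ).measurableSet (h.wordInterval_subset γ) i]

lemma measureReal_cons_div_append_singleton (h : ConformalSystem φ w μ α Λ) [IsFiniteMeasure μ]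
    [NullSingletonClass μ] (hα : α ≠ 0) (j : ι) (γ : List ι) (i : ι) :
    μ.real (wordInterval φ (j :: (γ ++ [i]))) / μ.real (wordInterval φ (γ ++ [i])) =
      μ.real (wordInterval φ (j :: γ)) / μ.real (wordInterval φ γ) *
        (⨍ x in wordInterval φ (j :: γ), coincidentWeight φ w (Icc 0 1) i x ∂μ) /
        ⨍ x in wordInterval φ γ, coincidentWeight φ w (Icc 0 1) i x ∂μ := by
  rw [← List.cons_append, h.measureReal_wordInterval_append_singleton hα,
    h.measureReal_wordInterval_append_singleton hα]
  field_simp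

theorem exists_tendsto_measureReal_ratio (h : ConformalSystem φ w μ α Λ) [IsFiniteMeasure μ]
    [NullSingletonClass μ] (hΛ : Λ < 1) (hα : α ≠ 0) (ω : ℕ → ι) :
    ∃ s, Tendsto (fun k => μ.real (wordInterval φ (List.ofFn fun j : Fin k => ω j)) /
      μ.real (wordInterval φ (List.ofFn fun j : Fin k => ω j).tail)) atTop (𝓝 s) := by
  have : Nonempty ι := ⟨ω 0⟩
  obtain ⟨δ, hδ, hδG⟩ := h.exists_pos_le_coincidentWeight
  obtain ⟨K, hK⟩ := h.exists_lipschitzOnWith_coincidentWeight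
  set G := coincidentWeight φ w (Icc 0 1)
  -- the prefix of length `n + 1` is `ω 0 :: γ n`, and its tail is `γ n`
  set γ : ℕ → List ι := fun n => List.ofFn fun j : Fin n => ω (j + 1)
  have hγ (n : ℕ) : γ (n + 1) = γ n ++ [ω (n + 1)] := by
    simp only [γ, List.ofFn_succ', List.concat_eq_append, Fin.val_castSucc, Fin.val_last]
  have hG_avg (γ' : List ι) (i : ι) : δ ≤ ⨍ x in wordInterval φ γ', G i x ∂μ :=
    h.le_setAverage_wordInterval (hK i).continuousOn (hδG i) γ'
  obtain ⟨s, hs⟩ := exists_tendsto_of_succ_eq_mul_div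
    (r := fun n => μ.real (wordInterval φ (ω 0 :: γ n)) / μ.real (wordInterval φ (γ n)))
    (a := fun n => ⨍ x in wordInterval φ (ω 0 :: γ n), G (ω (n + 1)) x ∂μ)
    (b := fun n => ⨍ x in wordInterval φ (γ n), G (ω (n + 1)) x ∂μ)
    hδ (by exact_mod_cast hΛ : (Λ : ℝ) < 1)
    (fun n => div_pos (h.measureReal_wordInterval_pos _) (h.measureReal_wordInterval_pos _))
    (fun n => hG_avg _ _) (fun n => hG_avg _ _)
    (fun n => by
      simpa [γ] using h.abs_setAverage_cons_sub_le one_pos (hK _).holderOnWith (ω 0) (γ n))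
    (fun n => by simp only [hγ]; exact h.measureReal_cons_div_append_singleton hα _ _ _)
  refine ⟨s, (tendsto_add_atTop_iff_nat 1).1 (hs.congr fun n => ?_)⟩
  rw [List.ofFn_succ, List.tail_cons]
  rfl

theorem tendsto_setIntegral_ratio (h : ConformalSystem φ w μ α Λ) [IsFiniteMeasure μ]
    (hΛ : Λ < 1) {v : ℝ → ℝ} {C r : ℝ≥0} (hr : 0 < r) (hv : HolderOnWith C r v (Icc 0 1))
    (hv_pos : ∀ x ∈ Icc (0 : ℝ) 1, 0 < v x) (ω : ℕ → ι) {s : ℝ}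
    (hs : Tendsto (fun k => μ.real (wordInterval φ (List.ofFn fun j : Fin k => ω j)) /
      μ.real (wordInterval φ (List.ofFn fun j : Fin k => ω j).tail)) atTop (𝓝 s)) :
    Tendsto (fun k => (∫ x in wordInterval φ (List.ofFn fun j : Fin k => ω j), v x ∂μ) /
      ∫ x in wordInterval φ (List.ofFn fun j : Fin k => ω j).tail, v x ∂μ) atTop (𝓝 s) := by
  obtain ⟨δ, hδ, hδv⟩ := isCompact_Icc.exists_forall_le' (hv.continuousOn hr) hv_pos
  set γ : ℕ → List ι := fun n => List.ofFn fun j : Fin n => ω (j + 1)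
  set a := fun n => ⨍ x in wordInterval φ (ω 0 :: γ n), v x ∂μ
  set b := fun n => ⨍ x in wordInterval φ (γ n), v x ∂μ
  have hρ : (Λ : ℝ) ^ (r : ℝ) < 1 := Real.rpow_lt_one Λ.coe_nonneg (by exact_mod_cast hΛ) hr
  have hab : Tendsto (fun n => a n - b n) atTop (𝓝 0) := by
    refine squeeze_zero_norm (fun n => ?_) (by simpa using
      (tendsto_pow_atTop_nhds_zero_of_lt_one (by positivity) hρ).const_mul (2 * (C : ℝ)))
    simpa [γ] using h.abs_setAverage_cons_sub_le hr hv (ω 0) (γ n)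
  have hsplit (n : ℕ) : (∫ x in wordInterval φ (ω 0 :: γ n), v x ∂μ) /
      ∫ x in wordInterval φ (γ n), v x ∂μ =
      μ.real (wordInterval φ (ω 0 :: γ n)) / μ.real (wordInterval φ (γ n)) * (a n / b n) := by
    rw [← measure_smul_setAverage _ (measure_ne_top μ _),
      ← measure_smul_setAverage _ (measure_ne_top μ _), smul_eq_mul, smul_eq_mul,
      mul_div_mul_comm]
  have hlim := ((tendsto_add_atTop_iff_nat 1).2 hs).mul
    (tendsto_div_of_tendsto_sub hδ
      (fun n => h.le_setAverage_wordInterval (hv.continuousOn hr) hδv (γ n)) hab)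
  rw [mul_one] at hlim
  refine (tendsto_add_atTop_iff_nat 1).1 (hlim.congr fun n => ?_)
  rw [List.ofFn_succ, List.tail_cons]
  exact (hsplit n).symm

end ConformalSystem

section Complex

variable {O : Set ℂ} {S : Set ℝ}

lemma Convex.ofReal_image (hS : Convex ℝ S) : Convex ℝ (Complex.ofReal '' S) :=
  hS.linear_image Complex.ofRealCLM.toLinearMap

lemma lipschitzOnWith_re_comp_ofReal {F : ℂ → ℂ} (hO : IsOpen O) (hF : DifferentiableOn ℂ F O)
    (hS : Convex ℝ S) (hSO : ∀ x ∈ S, (x : ℂ) ∈ O) {C : ℝ≥0}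
    (hC : ∀ x ∈ S, ‖deriv F x‖ ≤ C) : LipschitzOnWith C (fun x : ℝ => (F x).re) S := by
  refine LipschitzOnWith.of_dist_le_mul fun x hx y hy => ?_
  have hmvt := hS.ofReal_image.norm_image_sub_le_of_norm_deriv_le (f := F)
    (by rintro _ ⟨t, ht, rfl⟩; exact hF.differentiableAt (hO.mem_nhds (hSO t ht)))
    (by rintro _ ⟨t, ht, rfl⟩; exact hC t ht) ⟨y, hy, rfl⟩ ⟨x, hx, rfl⟩
  rw [← Complex.ofReal_sub, Complex.norm_real, Real.norm_eq_abs] at hmvt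
  rw [Real.dist_eq, Real.dist_eq, ← Complex.sub_re]
  exact (Complex.abs_re_le_norm _).trans hmvt

lemma exists_lipschitzOnWith_re_comp_ofReal {F : ℂ → ℂ} (hO : IsOpen O)
    (hF : DifferentiableOn ℂ F O) (hS : Convex ℝ S) (hSc : IsCompact S)
    (hSO : ∀ x ∈ S, (x : ℂ) ∈ O) : ∃ C, LipschitzOnWith C (fun x : ℝ => (F x).re) S := by
  obtain ⟨C, hC⟩ := (hSc.image Complex.continuous_ofReal).exists_bound_of_continuousOn
    ((hF.analyticOnNhd hO).deriv.continuousOn.mono (image_subset_iff.2 hSO))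
  exact ⟨C.toNNReal, lipschitzOnWith_re_comp_ofReal hO hF hS hSO fun x hx =>
    (hC _ ⟨x, hx, rfl⟩).trans (Real.le_coe_toNNReal C)⟩

lemma eqOn_or_finite_of_differentiableOn {F₁ F₂ : ℂ → ℂ} (hO : IsOpen O)
    (hF₁ : DifferentiableOn ℂ F₁ O) (hF₂ : DifferentiableOn ℂ F₂ O) (hS : Convex ℝ S)
    (hSc : IsCompact S) (hSO : ∀ x ∈ S, (x : ℂ) ∈ O) :
    EqOn (fun x : ℝ => F₁ x) (fun x : ℝ => F₂ x) S ∨ {x ∈ S | F₁ x = F₂ x}.Finite := by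
  refine or_iff_not_imp_right.2 fun hinf => ?_
  obtain ⟨x₀, hx₀, hacc⟩ := Set.Infinite.exists_accPt_of_subset_isCompact hinf hSc (sep_subset _ _)
  have hofReal : Tendsto Complex.ofReal (𝓝[≠] x₀) (𝓝[≠] (x₀ : ℂ)) :=
    tendsto_nhdsWithin_of_tendsto_nhds_of_eventually_within _
      (Complex.continuous_ofReal.continuousWithinAt.tendsto)
      (eventually_nhdsWithin_of_forall fun x hx => by simpa using hx)
  have hfreq : ∃ᶠ z in 𝓝[≠] (x₀ : ℂ), F₁ z = F₂ z :=
    hofReal.frequently ((accPt_iff_frequently_nhdsNE.1 hacc).mono fun x hx => hx.2)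
  obtain ⟨δ, hδ, hU⟩ := (hSc.image Complex.continuous_ofReal).exists_thickening_subset_open hO
    (image_subset_iff.2 hSO)
  have hmem (x : ℝ) (hx : x ∈ S) : (x : ℂ) ∈ Metric.thickening δ (Complex.ofReal '' S) :=
    Metric.self_subset_thickening hδ _ ⟨x, hx, rfl⟩
  have hEq := AnalyticOnNhd.eqOn_of_preconnected_of_frequently_eq
    ((hF₁.mono hU).analyticOnNhd Metric.isOpen_thickening)
    ((hF₂.mono hU).analyticOnNhd Metric.isOpen_thickening)
    (hS.ofReal_image.thickening δ).isPreconnected (hmem x₀ hx₀) hfreq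
  exact fun x hx => hEq (hmem x hx)

lemma foldl_ofReal_eq_wordMap {ι : Type*} {F : ι → ℂ → ℂ} {φ : ι → ℝ → ℝ}
    (hmaps : ∀ i, MapsTo (φ i) S S) (hF : ∀ i, ∀ x ∈ S, F i x = φ i x) (γ : List ι) :
    ∀ x ∈ S, γ.foldl (fun z i => F i z) (x : ℂ) = ((wordMap φ γ x : ℝ) : ℂ) := by
  induction γ with
  | nil => exact fun x _ => rfl
  | cons j γ ih =>
    intro x hx
    rw [List.foldl_cons, hF j x hx]
    exact ih _ (hmaps j hx)

lemma re_mem_and_eq_ofReal_re {z : ℂ} {S : Set ℝ} (h : ∃ y ∈ S, z = y) :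
    z.re ∈ S ∧ z = z.re := by
  obtain ⟨y, hy, rfl⟩ := h
  simpa using hy

end Complex

theorem ConformalSystem.of_differentiableOn {ι : Type*} [Fintype ι] {O : Set ℂ} (hO : IsOpen O)
    (hIO : ∀ x ∈ Icc (0 : ℝ) 1, (x : ℂ) ∈ O) {ψ g : ι → ℂ → ℂ} {lam : ℝ}
    (hψ : ∀ i, DifferentiableOn ℂ (ψ i) O) (hψ_deriv : ∀ i, ∀ x ∈ O, ‖deriv (ψ i) x‖ ≤ lam)
    (hψ_real : ∀ i, ∀ x ∈ Icc (0 : ℝ) 1, ∃ y ∈ Icc (0 : ℝ) 1, ψ i (x : ℂ) = (y : ℂ))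
    {f : ℝ → ℝ} (hf : ∀ i, ∀ x ∈ Icc (0 : ℝ) 1, f ((ψ i (x : ℂ)).re) = x)
    (hg : ∀ i, DifferentiableOn ℂ (g i) (ψ i '' O))
    (hg_pos : ∀ i, ∀ z ∈ ψ i '' O, z.im = 0 → (g i z).im = 0 ∧ 0 < (g i z).re)
    {μ : Measure ℝ} (hμ : ∀ s, IsOpen s → (s ∩ Icc 0 1).Nonempty → 0 < μ s) {α : ℝ}
    (hconf : ∀ q : ℝ → ℝ, Continuous q →
      ∫ x in Icc 0 1, ∑ i, (g i (ψ i x)).re * q (ψ i x).re ∂μ = α * ∫ x in Icc 0 1, q x ∂μ) :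
    ConformalSystem (fun i x => (ψ i x).re) (fun i x => (g i (ψ i x)).re) μ α lam.toNNReal where
  mapsTo i x hx := (re_mem_and_eq_ofReal_re (hψ_real i x hx)).1
  lipschitzOnWith i := lipschitzOnWith_re_comp_ofReal hO (hψ i) (convex_Icc 0 1) hIO
    fun x hx => (hψ_deriv i x (hIO x hx)).trans lam.le_coe_toNNReal
  exists_leftInvOn := ⟨f, hf⟩
  eqOn_or_finite l i := by
    have hre (j : ι) {x : ℝ} (hx : x ∈ Icc (0 : ℝ) 1) :=
      (re_mem_and_eq_ofReal_re (hψ_real j x hx)).2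
    refine (eqOn_or_finite_of_differentiableOn hO (hψ l) (hψ i) (convex_Icc 0 1) isCompact_Icc
      hIO).imp (fun h x hx => congrArg Complex.re (h hx)) fun h => h.subset ?_
    rintro x ⟨hx, hxe⟩
    exact ⟨hx, by rw [hre l hx, hre i hx, hxe]⟩
  weight_lipschitzOnWith i := exists_lipschitzOnWith_re_comp_ofReal hO
    ((hg i).comp (hψ i) (mapsTo_image _ _)) (convex_Icc 0 1) isCompact_Icc hIO
  weight_pos i x hx := (hg_pos i _ ⟨x, hIO x hx, rfl⟩
    (by rw [(re_mem_and_eq_ofReal_re (hψ_real i x hx)).2]; simp)).2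
  integral_transfer := hconf
  measure_pos := hμ

lemma setOf_foldl_eq_wordInterval {ι : Type*} {F : ι → ℂ → ℂ} {φ : ι → ℝ → ℝ}
    (hmaps : ∀ i, MapsTo (φ i) (Icc 0 1) (Icc 0 1)) (hF : ∀ i, ∀ x ∈ Icc (0 : ℝ) 1, F i x = φ i x)
    (γ : List ι) :
    {y : ℝ | ∃ x ∈ Icc (0 : ℝ) 1, γ.foldl (fun z i => F i z) (x : ℂ) = (y : ℂ)} =
      wordInterval φ γ := by
  ext y
  refine exists_congr fun x => and_congr_right fun hx => ?_
  rw [foldl_ofReal_eq_wordMap hmaps hF γ x hx, Complex.ofReal_inj]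

lemma toReal_measure_ofFn_eq {ι : Type*} [MeasurableSpace ι] {μ : Measure (ℕ → ι)}
    {V : List ι → ℝ} (hV : ∀ γ, 0 ≤ V γ)
    (hμ : ∀ γ : List ι, μ {ω | (List.ofFn fun j : Fin γ.length => ω j) = γ} = ENNReal.ofReal (V γ))
    {n : ℕ} {γ : List ι} (hγ : γ.length = n) :
    (μ {ω | (List.ofFn fun j : Fin n => ω j) = γ}).toReal = V γ := by
  subst hγ
  rw [hμ, ENNReal.toReal_ofReal (hV γ)]

theorem stmt2_general
    (d : ℕ)
    -- the complex neighborhood O of I = [0,1]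
    (O : Set ℂ) (hOopen : IsOpen O)
    (hIO : ∀ x : ℝ, x ∈ Icc (0:ℝ) 1 → (x : ℂ) ∈ O)
    -- the expanding map f and its inverse branches ψ_i, extended univalently to O
    (f : ℝ → ℝ) (ψ : Fin d → ℂ → ℂ) (lam : ℝ) (hlam : lam < 1)
    (hψdiff : ∀ i, DifferentiableOn ℂ (ψ i) O)
    (hψderiv : ∀ i, ∀ x ∈ O, ‖deriv (ψ i) x‖ ≤ lam)
    (hψreal : ∀ i, ∀ x ∈ Icc (0:ℝ) 1, ∃ y ∈ Icc (0:ℝ) 1, ψ i (x : ℂ) = (y : ℂ))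
    (hψsection : ∀ i, ∀ x ∈ Icc (0:ℝ) 1, f ((ψ i (x : ℂ)).re) = x)
    -- the complex analytic potential g, through its branches g_i
    (g : Fin d → ℂ → ℂ)
    (hgdiff : ∀ i, DifferentiableOn ℂ (g i) (ψ i '' O))
    (hgpos : ∀ i, ∀ z ∈ ψ i '' O, z.im = 0 → (g i z).im = 0 ∧ 0 < (g i z).re)
    -- compositions ψ_γ along finite words γ = (i₁,…,i_k), the intervals I_γ = ψ_γ(I)
    (ψw : List (Fin d) → ℂ → ℂ)
    (hψw : ∀ γ x, ψw γ x = γ.foldl (fun z i => ψ i z) x)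
    (Iw : List (Fin d) → Set ℝ)
    (hIw : ∀ γ, Iw γ = {y : ℝ | ∃ x ∈ Icc (0:ℝ) 1, ψw γ (x : ℂ) = (y : ℂ)})
    -- the conformal measure μ̃, the eigenvalue α and the eigenfunction v
    (μt : Measure ℝ) [IsProbabilityMeasure μt] [NullSingletonClass μt]
    (hμtfull : ∀ s : Set ℝ, IsOpen s → (s ∩ Icc (0:ℝ) 1).Nonempty → 0 < μt s)
    (α : ℝ) (hα : 0 < α)
    (v : ℝ → ℝ) (hvpos : ∀ x ∈ Icc (0:ℝ) 1, 0 < v x)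
    (hvHolder : ∃ (C r : ℝ≥0), 0 < r ∧ HolderWith C r v)
    (hconf : ∀ q : ℝ → ℝ, ContinuousOn q (Icc (0:ℝ) 1) →
      ∫ x in Icc (0:ℝ) 1, (∑ i : Fin d, (g i (ψ i (x : ℂ))).re * q ((ψ i (x : ℂ)).re)) ∂μt
        = α * ∫ x in Icc (0:ℝ) 1, q x ∂μt)
    -- the Borel probability μ on Σ determined by μ(C_γ) = ∫_{I_γ} v dμ̃
    (μ : Measure (ℕ → Fin d))
    (hμcyl : ∀ γ : List (Fin d),
      μ {ω : ℕ → Fin d | (List.ofFn fun j : Fin γ.length => ω j) = γ}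
        = ENNReal.ofReal (∫ t in Iw γ, v t ∂μt)) :
    -- conclusion
    ∀ ω : ℕ → Fin d, ∃ s : ℝ,
      Tendsto (fun k : ℕ =>
          (μt (Iw (List.ofFn fun j : Fin k => ω j))).toReal
            / (μt (Iw (List.ofFn fun j : Fin k => ω j).tail)).toReal)
        atTop (nhds s) ∧
      Tendsto (fun k : ℕ =>
          (μ {ω' : ℕ → Fin d |
              (List.ofFn fun j : Fin k => ω' j) = (List.ofFn fun j : Fin k => ω j)}).toReal
            / (μ {ω' : ℕ → Fin d |
              (List.ofFn fun j : Fin (List.ofFn fun j : Fin k => ω j).tail.length => ω' j)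
                = (List.ofFn fun j : Fin k => ω j).tail}).toReal)
        atTop (nhds s) := by
  set φ : Fin d → ℝ → ℝ := fun i x => (ψ i x).re
  have hsys := ConformalSystem.of_differentiableOn hOopen hIO hψdiff hψderiv hψreal hψsection
    hgdiff hgpos hμtfull fun q hq => hconf q hq.continuousOn
  have hIw_eq (γ : List (Fin d)) : Iw γ = wordInterval φ γ := by
    simp only [hIw, hψw]
    exact setOf_foldl_eq_wordInterval hsys.mapsTo
      (fun i x hx => (re_mem_and_eq_ofReal_re (hψreal i x hx)).2) γ
  intro ω
  obtain ⟨C, r, hr, hvC⟩ := hvHolder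
  have hΛ := Real.toNNReal_lt_one.2 hlam
  obtain ⟨s, hs⟩ := hsys.exists_tendsto_measureReal_ratio hΛ hα.ne' ω
  have hcyl {n : ℕ} {γ : List (Fin d)} (hγ : γ.length = n) :=
    toReal_measure_ofFn_eq (fun γ => setIntegral_nonneg
      (hsys.isCompact_wordInterval γ).measurableSet
      fun x hx => (hvpos x (hsys.wordInterval_subset γ hx)).le) (fun γ => hIw_eq γ ▸ hμcyl γ) hγ
  refine ⟨s, hs.congr fun k => by simp only [hIw_eq]; rfl, ?_⟩
  refine (hsys.tendsto_setIntegral_ratio hΛ hr (hvC.holderOnWith _) hvpos ω hs).congr fun k => ?_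
  rw [hcyl List.length_ofFn, hcyl rfl]

/-- scaling function, Section 4 of the paper.
For every `ω ∈ Σ` the limit `s(ω) = lim_k μ̃(I_{ω_k}) / μ̃(I_{σ*(ω_k)})` exists, where
`σ*` drops the first symbol of a finite word; moreover `s(ω)` also equals
`lim_k μ(C_{ω_k}) / μ(C_{σ*(ω_k)})` for the probability `μ` on `Σ` determined by
`μ(C_γ) = ∫_{I_γ} v dμ̃`: the scaling function is the Jacobian of `μ`. -/
theorem stmt2
    (d : ℕ) (hd : 1 ≤ d)
    -- the complex neighborhood O of I = [0,1]
    (O : Set ℂ) (hOopen : IsOpen O) (hObdd : Bornology.IsBounded O)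
    (hOsc : SimplyConnectedSpace O)
    (hIO : ∀ x : ℝ, x ∈ Icc (0:ℝ) 1 → (x : ℂ) ∈ O)
    -- the expanding map f and its inverse branches ψ_i, extended univalently to O
    (f : ℝ → ℝ) (ψ : Fin d → ℂ → ℂ) (lam : ℝ) (hlam : lam < 1)
    (hψdiff : ∀ i, DifferentiableOn ℂ (ψ i) O)
    (hψinj : ∀ i, InjOn (ψ i) O)
    (hψcont : ∀ i, ContinuousOn (ψ i) (closure O))
    (hψmap : ∀ i, ψ i '' (closure O) ⊆ O)
    (hψderiv : ∀ i, ∀ x ∈ O, ‖deriv (ψ i) x‖ ≤ lam)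
    (hψreal : ∀ i, ∀ x ∈ Icc (0:ℝ) 1, ∃ y ∈ Icc (0:ℝ) 1, ψ i (x : ℂ) = (y : ℂ))
    (hψsection : ∀ i, ∀ x ∈ Icc (0:ℝ) 1, f ((ψ i (x : ℂ)).re) = x)
    -- the complex analytic potential g, through its branches g_i
    (g : Fin d → ℂ → ℂ)
    (hgdiff : ∀ i, DifferentiableOn ℂ (g i) (ψ i '' O))
    (hgcont : ∀ i, ContinuousOn (g i) (closure (ψ i '' O)))
    (hgne : ∀ i, ∀ z ∈ closure (ψ i '' O), g i z ≠ 0)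
    (hgpos : ∀ i, ∀ z ∈ ψ i '' O, z.im = 0 → (g i z).im = 0 ∧ 0 < (g i z).re)
    -- compositions ψ_γ along finite words γ = (i₁,…,i_k), the intervals I_γ = ψ_γ(I)
    (ψw : List (Fin d) → ℂ → ℂ)
    (hψw : ∀ γ x, ψw γ x = γ.foldl (fun z i => ψ i z) x)
    (Iw : List (Fin d) → Set ℝ)
    (hIw : ∀ γ, Iw γ = {y : ℝ | ∃ x ∈ Icc (0:ℝ) 1, ψw γ (x : ℂ) = (y : ℂ)})
    -- the twisted products h̃_γ
    (htil : List (Fin d) → ℂ → ℂ)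
    (htilone : ∀ i x, htil [i] x = g i (ψ i x))
    (htilrec : ∀ γ, γ ≠ [] → ∀ i x, htil (γ ++ [i]) x = htil γ x * g i (ψw (γ ++ [i]) x))
    -- the conformal measure μ̃, the eigenvalue α and the eigenfunction v
    (μt : Measure ℝ) [IsProbabilityMeasure μt] [NullSingletonClass μt]
    (hμtI : μt (Icc (0:ℝ) 1) = 1)
    (hμtfull : ∀ s : Set ℝ, IsOpen s → (s ∩ Icc (0:ℝ) 1).Nonempty → 0 < μt s)
    (α : ℝ) (hα : 0 < α)
    (v : ℝ → ℝ) (hvpos : ∀ x ∈ Icc (0:ℝ) 1, 0 < v x)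
    (hvHolder : ∃ (C r : ℝ≥0), 0 < r ∧ HolderWith C r v)
    (hveig : ∀ x ∈ Icc (0:ℝ) 1,
      (∑ i : Fin d, (g i (ψ i (x : ℂ))).re * v ((ψ i (x : ℂ)).re)) = α * v x)
    (hvnorm : ∫ x in Icc (0:ℝ) 1, v x ∂μt = 1)
    (hconf : ∀ q : ℝ → ℝ, ContinuousOn q (Icc (0:ℝ) 1) →
      ∫ x in Icc (0:ℝ) 1, (∑ i : Fin d, (g i (ψ i (x : ℂ))).re * q ((ψ i (x : ℂ)).re)) ∂μt
        = α * ∫ x in Icc (0:ℝ) 1, q x ∂μt)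
    -- the normalized products h_γ = h̃_γ / (α^{|γ|} μ̃(I_γ))
    (hγ : List (Fin d) → ℂ → ℂ)
    (hhγ : ∀ γ x, hγ γ x = htil γ x / ((α ^ γ.length * (μt (Iw γ)).toReal : ℝ) : ℂ))
    -- the Borel probability μ on Σ determined by μ(C_γ) = ∫_{I_γ} v dμ̃
    (μ : Measure (ℕ → Fin d)) (hμprob : IsProbabilityMeasure μ)
    (hμcyl : ∀ γ : List (Fin d),
      μ {ω : ℕ → Fin d | (List.ofFn fun j : Fin γ.length => ω j) = γ}
        = ENNReal.ofReal (∫ t in Iw γ, v t ∂μt)) :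
    -- conclusion
    ∀ ω : ℕ → Fin d, ∃ s : ℝ,
      Tendsto (fun k : ℕ =>
          (μt (Iw (List.ofFn fun j : Fin k => ω j))).toReal
            / (μt (Iw (List.ofFn fun j : Fin k => ω j).tail)).toReal)
        atTop (nhds s) ∧
      Tendsto (fun k : ℕ =>
          (μ {ω' : ℕ → Fin d |
              (List.ofFn fun j : Fin k => ω' j) = (List.ofFn fun j : Fin k => ω j)}).toReal
            / (μ {ω' : ℕ → Fin d |
              (List.ofFn fun j : Fin (List.ofFn fun j : Fin k => ω j).tail.length => ω' j)
                = (List.ofFn fun j : Fin k => ω j).tail}).toReal)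
        atTop (nhds s) :=
  stmt2_general d O hOopen hIO f ψ lam hlam hψdiff hψderiv hψreal hψsection g hgdiff hgpos ψw hψw Iw
    hIw μt hμtfull α hα v hvpos hvHolder hconf μ hμcyl
end

section
/- The function H_∞ restricted to Σ × I is an involution kernel for A = log g: there exists a function A* : Σ → ℝ such that for every w = (w_0, w_1, …) ∈ Σ and every x ∈ I, A*(w) = log g(ψ_{w_0}(x)) + H_∞(σ(w), ψ_{w_0}(x)) − H_∞(w, x); in particular the right-hand side depends only on w. -/
/-!
The twisted products satisfy the cocycle identity
`h̃^β_{(w₀, w₁, …, w_k)}(x) = e^{β r_{w₀}(x)} h̃^β_{(w₁, …, w_k)}(ψ_{w₀} x)`, so in the ratio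
`h_β(w_k, x) / (e^{β r_{w₀}(x)} h_β(σ(w)_{k-1}, ψ_{w₀} x))` everything depending on `x` cancels
and only the normalising constants `α_β, μ̃_β(I_γ)` remain. Letting `k → ∞`, taking `(1/β) log`
and letting `β = β_n → ∞` shows that `log g(ψ_{w₀} x) + H_∞(σ(w), ψ_{w₀} x) − H_∞(w, x)` does not
depend on `x`; `A*(w)` is its value at `x = 0`.
-/

open MeasureTheory Set Filter Topology

theorem List.ofFn_succ_eq_cons {ι : Type*} (ω : ℕ → ι) (k : ℕ) :
    (List.ofFn fun j : Fin (k + 1) => ω j) = ω 0 :: List.ofFn fun j : Fin k => ω (j + 1) := by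
  simp [List.ofFn_succ, Fin.val_succ]

theorem cons_eq_mul_of_append_singleton {ι α M : Type*} [CommMonoid M] {ψ : ι → α → α}
    {c : ι → α → M} {F : List ι → α → M} (hone : ∀ i x, F [i] x = c i x)
    (hrec : ∀ γ, γ ≠ [] → ∀ i x, F (γ ++ [i]) x = F γ x * c i (γ.foldl (fun z j => ψ j z) x))
    (i : ι) {γ : List ι} (hγ : γ ≠ []) (x : α) :
    F (i :: γ) x = c i x * F γ (ψ i x) := by
  induction γ using List.reverseRecOn with
  | nil => exact absurd rfl hγ
  | append_singleton γ j ih =>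
    rcases eq_or_ne γ [] with rfl | hγ'
    · rw [List.nil_append, ← List.singleton_append, hrec [i] (List.cons_ne_nil _ _), hone, hone]
      rfl
    · rw [← List.cons_append, hrec _ (List.cons_ne_nil _ _), ih hγ', hrec γ hγ', List.foldl_cons,
        mul_assoc]

theorem mul_eq_mul_of_tendsto {R : Type*} [TopologicalSpace R] [CommMonoid R] [ContinuousMul R]
    [T2Space R] {u₁ u₂ v₁ v₂ : ℕ → R} {a b c d : R} (hu₁ : Tendsto u₁ atTop (𝓝 a))
    (hv₁ : Tendsto v₁ atTop (𝓝 b)) (hu₂ : Tendsto u₂ atTop (𝓝 c)) (hv₂ : Tendsto v₂ atTop (𝓝 d))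
    (h : ∀ k, u₁ k * v₂ k = u₂ k * v₁ k) : a * d = c * b :=
  tendsto_nhds_unique ((hu₁.mul hv₂).congr h) (hu₂.mul hv₁)

theorem one_div_mul_log_sub_eq_of_mul_eq {β a b c d s t : ℝ} (hβ : β ≠ 0) (ha : 0 < a)
    (hb : 0 < b) (hc : 0 < c) (hd : 0 < d)
    (h : a * (Real.exp (β * t) * d) = c * (Real.exp (β * s) * b)) :
    1 / β * Real.log a - s - 1 / β * Real.log b = 1 / β * Real.log c - t - 1 / β * Real.log d := by
  have hlog := congrArg Real.log h
  rw [Real.log_mul ha.ne' (by positivity), Real.log_mul (by positivity) hd.ne',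
    Real.log_mul hc.ne' (by positivity), Real.log_mul (by positivity) hb.ne',
    Real.log_exp, Real.log_exp] at hlog
  field_simp
  linarith

theorem one_div_mul_log_sub_eq_of_tendsto {β a b c d s t : ℝ} {u₁ u₂ v₁ v₂ : ℕ → ℂ} (hβ : β ≠ 0)
    (ha : 0 < a) (hb : 0 < b) (hc : 0 < c) (hd : 0 < d) (hu₁ : Tendsto u₁ atTop (𝓝 a))
    (hv₁ : Tendsto v₁ atTop (𝓝 b)) (hu₂ : Tendsto u₂ atTop (𝓝 c)) (hv₂ : Tendsto v₂ atTop (𝓝 d))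
    (h : ∀ k, u₁ k * (Real.exp (β * t) * v₂ k) = u₂ k * (Real.exp (β * s) * v₁ k)) :
    1 / β * Real.log a - s - 1 / β * Real.log b = 1 / β * Real.log c - t - 1 / β * Real.log d :=
  one_div_mul_log_sub_eq_of_mul_eq hβ ha hb hc hd <| by
    exact_mod_cast mul_eq_mul_of_tendsto hu₁ (tendsto_const_nhds.mul hv₁) hu₂
      (tendsto_const_nhds.mul hv₂) h

theorem stmt8_general
    -- the degree
    (d : ℕ)
    -- the complex neighborhood O of I = [0,1]
    (O : Set ℂ)
    (hIO : ∀ x : ℝ, x ∈ Icc (0:ℝ) 1 → (x : ℂ) ∈ O)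
    -- the expanding map f and its inverse branches ψ_i, extended univalently to O
    (ψ : Fin d → ℂ → ℂ)
    (hψreal : ∀ i, ∀ x ∈ Icc (0:ℝ) 1, ∃ y ∈ Icc (0:ℝ) 1, ψ i (x : ℂ) = (y : ℂ))
    -- the complex analytic potential g, through its branches g_i
    (g : Fin d → ℂ → ℂ)
    -- the holomorphic branches r_i of log(g_i ∘ ψ_i), real on O ∩ ℝ
    (r : Fin d → ℂ → ℂ)
    (hrexp : ∀ i, ∀ z ∈ O, g i (ψ i z) = Complex.exp (r i z))
    (hrreal : ∀ i, ∀ x : ℝ, (x : ℂ) ∈ O → (r i (x : ℂ)).im = 0)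
    -- compositions ψ_γ along finite words γ = (i₁,…,i_k), the intervals I_γ = ψ_γ(I)
    (ψw : List (Fin d) → ℂ → ℂ)
    (hψw : ∀ γ x, ψw γ x = γ.foldl (fun z i => ψ i z) x)
    (Iw : List (Fin d) → Set ℝ)
    -- the β-twisted products h̃^β_γ
    (htilβ : ℝ → List (Fin d) → ℂ → ℂ)
    (htilβone : ∀ β : ℝ, ∀ i x, htilβ β [i] x = Complex.exp (β * r i x))
    (htilβrec : ∀ β : ℝ, ∀ γ, γ ≠ [] → ∀ i x,
      htilβ β (γ ++ [i]) x = htilβ β γ x * Complex.exp (β * r i (ψw γ x)))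
    -- for each β ≥ 1, the eigenvalue α_β and the conformal probability μ̃_β for P_{β log g}
    (αβ : ℝ → ℝ) (μβ : ℝ → Measure ℝ)
    -- the normalized products h_β(γ, ·) = h̃^β_γ / (α_β^{|γ|} μ̃_β(I_γ))
    (hβf : ℝ → List (Fin d) → ℂ → ℂ)
    (hhβf : ∀ β γ x, hβf β γ x = htilβ β γ x / ((αβ β ^ γ.length * (μβ β (Iw γ)).toReal : ℝ) : ℂ))
    -- the positive limits h_β(ω,x) = lim_k h_β(ω_k,x) on Σ × I
    (hβR : ℝ → (ℕ → Fin d) → ℝ → ℝ)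
    (hhβR : ∀ β : ℝ, 1 ≤ β → ∀ ω : ℕ → Fin d, ∀ x ∈ Icc (0:ℝ) 1,
      0 < hβR β ω x ∧
      Tendsto (fun k : ℕ => hβf β (List.ofFn fun j : Fin k => ω j) (x : ℂ))
        atTop (nhds ((hβR β ω x : ℝ) : ℂ)))
    -- the sequence β_n → ∞ provided by Corollary 5.2, and the corresponding limit
    -- H_∞(ω,x) = lim_n H_{β_n}(ω,x), where H_β(ω,x) = (1/β) log h_β(ω,x) on Σ × I
    (βseq : ℕ → ℝ) (hβseq1 : ∀ n, 1 ≤ βseq n)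
    (Hinf : (ℕ → Fin d) → ℝ → ℝ)
    (hHinf : ∀ ω : ℕ → Fin d, ∀ x ∈ Icc (0:ℝ) 1,
      Tendsto (fun n : ℕ => (1 / βseq n) * Real.log (hβR (βseq n) ω x))
        atTop (nhds (Hinf ω x))) :
    -- conclusion: H_∞ is an involution kernel for A = log g
    ∃ Astar : (ℕ → Fin d) → ℝ, ∀ w : ℕ → Fin d, ∀ x ∈ Icc (0:ℝ) 1,
      Astar w = Real.log ((g (w 0) (ψ (w 0) (x : ℂ))).re)
        + Hinf (fun n => w (n + 1)) ((ψ (w 0) (x : ℂ)).re) - Hinf w x := by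
  have hr : ∀ i, ∀ x ∈ Icc (0:ℝ) 1, ((r i x).re : ℂ) = r i x := fun i x hx => by
    apply Complex.ext <;> simp [hrreal i x (hIO x hx)]
  have hψI : ∀ i, ∀ x ∈ Icc (0:ℝ) 1, ((ψ i x).re : ℂ) = ψ i x ∧ (ψ i x).re ∈ Icc (0:ℝ) 1 := by
    intro i x hx
    obtain ⟨y, hy, hψy⟩ := hψreal i x hx
    exact ⟨by rw [hψy, Complex.ofReal_re], by rwa [hψy, Complex.ofReal_re]⟩
  have hcocycle : ∀ (β : ℝ) (w : ℕ → Fin d) (k : ℕ) (z : ℂ),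
      htilβ β (List.ofFn fun j : Fin (k + 2) => w j) z = Complex.exp (β * r (w 0) z)
        * htilβ β (List.ofFn fun j : Fin (k + 1) => w (j + 1)) (ψ (w 0) z) := fun β w k z => by
    rw [List.ofFn_succ_eq_cons]
    exact cons_eq_mul_of_append_singleton (htilβone β)
      (fun γ hγ i x => by rw [htilβrec β γ hγ, hψw]) _ (by simp) z
  have hinv : ∀ w : ℕ → Fin d, ∀ x ∈ Icc (0:ℝ) 1, ∀ y ∈ Icc (0:ℝ) 1,
      (r (w 0) x).re + Hinf (fun n => w (n + 1)) (ψ (w 0) x).re - Hinf w x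
        = (r (w 0) y).re + Hinf (fun n => w (n + 1)) (ψ (w 0) y).re - Hinf w y := by
    intro w x hx y hy
    have hlim := fun z (hz : z ∈ Icc (0:ℝ) 1) =>
      ((hHinf w z hz).sub (tendsto_const_nhds (x := (r (w 0) z).re))).sub
        (hHinf (fun n => w (n + 1)) _ (hψI (w 0) z hz).2)
    suffices Hinf w x - (r (w 0) x).re - Hinf (fun n => w (n + 1)) (ψ (w 0) x).re
        = Hinf w y - (r (w 0) y).re - Hinf (fun n => w (n + 1)) (ψ (w 0) y).re by linarith
    refine tendsto_nhds_unique_of_eventuallyEq (hlim x hx) (hlim y hy) (.of_forall fun n => ?_)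
    have hβ := hβseq1 n
    have htail := fun m ω z hz => (hhβR _ hβ ω z hz).2.comp (tendsto_add_atTop_nat m)
    refine one_div_mul_log_sub_eq_of_tendsto (by positivity) (hhβR _ hβ w x hx).1
      (hhβR _ hβ _ _ (hψI _ x hx).2).1 (hhβR _ hβ w y hy).1 (hhβR _ hβ _ _ (hψI _ y hy).2).1
      (htail 2 w x hx) (htail 1 _ _ (hψI _ x hx).2) (htail 2 w y hy) (htail 1 _ _ (hψI _ y hy).2)
      fun k => ?_
    simp only [Function.comp_apply, hhβf, hcocycle, Complex.ofReal_exp, Complex.ofReal_mul,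
      hr _ x hx, hr _ y hy, (hψI _ x hx).1, (hψI _ y hy).1]
    ring
  refine ⟨fun w => (r (w 0) (0 : ℝ)).re + Hinf (fun n => w (n + 1)) (ψ (w 0) (0 : ℝ)).re
    - Hinf w 0, fun w x hx => ?_⟩
  rw [hrexp _ _ (hIO x hx), ← hr _ x hx, ← Complex.ofReal_exp, Complex.ofReal_re, Real.log_exp]
  exact hinv w 0 ⟨le_rfl, zero_le_one⟩ x hx

/-- Proposition 5.2 of the paper.
The function `H_∞` restricted to `Σ × I` is an involution kernel for `A = log g`:
there is `A* : Σ → ℝ` with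
`A*(w) = log g(ψ_{w₀}(x)) + H_∞(σ(w), ψ_{w₀}(x)) − H_∞(w, x)` for every `w ∈ Σ`, `x ∈ I`;
in particular the right-hand side depends only on `w`. -/
theorem stmt8
    -- the degree
    (d : ℕ) (hd : 1 ≤ d)
    -- the complex neighborhood O of I = [0,1]
    (O : Set ℂ) (hOopen : IsOpen O) (hObdd : Bornology.IsBounded O)
    (hOsc : SimplyConnectedSpace O)
    (hIO : ∀ x : ℝ, x ∈ Icc (0:ℝ) 1 → (x : ℂ) ∈ O)
    -- the expanding map f and its inverse branches ψ_i, extended univalently to O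
    (f : ℝ → ℝ) (ψ : Fin d → ℂ → ℂ) (lam : ℝ) (hlam : lam < 1)
    (hψdiff : ∀ i, DifferentiableOn ℂ (ψ i) O)
    (hψinj : ∀ i, InjOn (ψ i) O)
    (hψcont : ∀ i, ContinuousOn (ψ i) (closure O))
    (hψmap : ∀ i, ψ i '' (closure O) ⊆ O)
    (hψderiv : ∀ i, ∀ x ∈ O, ‖deriv (ψ i) x‖ ≤ lam)
    (hψreal : ∀ i, ∀ x ∈ Icc (0:ℝ) 1, ∃ y ∈ Icc (0:ℝ) 1, ψ i (x : ℂ) = (y : ℂ))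
    (hψsection : ∀ i, ∀ x ∈ Icc (0:ℝ) 1, f ((ψ i (x : ℂ)).re) = x)
    -- the complex analytic potential g, through its branches g_i
    (g : Fin d → ℂ → ℂ)
    (hgdiff : ∀ i, DifferentiableOn ℂ (g i) (ψ i '' O))
    (hgcont : ∀ i, ContinuousOn (g i) (closure (ψ i '' O)))
    (hgne : ∀ i, ∀ z ∈ closure (ψ i '' O), g i z ≠ 0)
    (hgpos : ∀ i, ∀ z ∈ ψ i '' O, z.im = 0 → (g i z).im = 0 ∧ 0 < (g i z).re)
    -- the holomorphic branches r_i of log(g_i ∘ ψ_i), real on O ∩ ℝ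
    (r : Fin d → ℂ → ℂ)
    (hrdiff : ∀ i, DifferentiableOn ℂ (r i) O)
    (hrexp : ∀ i, ∀ z ∈ O, g i (ψ i z) = Complex.exp (r i z))
    (hrreal : ∀ i, ∀ x : ℝ, (x : ℂ) ∈ O → (r i (x : ℂ)).im = 0)
    -- compositions ψ_γ along finite words γ = (i₁,…,i_k), the intervals I_γ = ψ_γ(I)
    (ψw : List (Fin d) → ℂ → ℂ)
    (hψw : ∀ γ x, ψw γ x = γ.foldl (fun z i => ψ i z) x)
    (Iw : List (Fin d) → Set ℝ)
    (hIw : ∀ γ, Iw γ = {y : ℝ | ∃ x ∈ Icc (0:ℝ) 1, ψw γ (x : ℂ) = (y : ℂ)})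
    -- the β-twisted products h̃^β_γ
    (htilβ : ℝ → List (Fin d) → ℂ → ℂ)
    (htilβone : ∀ β : ℝ, ∀ i x, htilβ β [i] x = Complex.exp (β * r i x))
    (htilβrec : ∀ β : ℝ, ∀ γ, γ ≠ [] → ∀ i x,
      htilβ β (γ ++ [i]) x = htilβ β γ x * Complex.exp (β * r i (ψw γ x)))
    -- for each β ≥ 1, the eigenvalue α_β and the conformal probability μ̃_β for P_{β log g}
    (αβ : ℝ → ℝ) (μβ : ℝ → Measure ℝ)
    (hβdata : ∀ β : ℝ, 1 ≤ β →
      0 < αβ β ∧ IsProbabilityMeasure (μβ β) ∧ μβ β (Icc (0:ℝ) 1) = 1 ∧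
      (∀ x : ℝ, μβ β {x} = 0) ∧
      (∀ s : Set ℝ, IsOpen s → (s ∩ Icc (0:ℝ) 1).Nonempty → 0 < μβ β s) ∧
      ∀ q : ℝ → ℝ, ContinuousOn q (Icc (0:ℝ) 1) →
        ∫ x in Icc (0:ℝ) 1,
            (∑ i : Fin d, Real.exp (β * (r i (x : ℂ)).re) * q ((ψ i (x : ℂ)).re)) ∂(μβ β)
          = αβ β * ∫ x in Icc (0:ℝ) 1, q x ∂(μβ β))
    -- the normalized products h_β(γ, ·) = h̃^β_γ / (α_β^{|γ|} μ̃_β(I_γ))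
    (hβf : ℝ → List (Fin d) → ℂ → ℂ)
    (hhβf : ∀ β γ x, hβf β γ x = htilβ β γ x / ((αβ β ^ γ.length * (μβ β (Iw γ)).toReal : ℝ) : ℂ))
    -- the positive limits h_β(ω,x) = lim_k h_β(ω_k,x) on Σ × I
    (hβR : ℝ → (ℕ → Fin d) → ℝ → ℝ)
    (hhβR : ∀ β : ℝ, 1 ≤ β → ∀ ω : ℕ → Fin d, ∀ x ∈ Icc (0:ℝ) 1,
      0 < hβR β ω x ∧
      Tendsto (fun k : ℕ => hβf β (List.ofFn fun j : Fin k => ω j) (x : ℂ))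
        atTop (nhds ((hβR β ω x : ℝ) : ℂ)))
    -- the sequence β_n → ∞ provided by Corollary 5.2, and the corresponding limit
    -- H_∞(ω,x) = lim_n H_{β_n}(ω,x), where H_β(ω,x) = (1/β) log h_β(ω,x) on Σ × I
    (βseq : ℕ → ℝ) (hβseq1 : ∀ n, 1 ≤ βseq n) (hβseqtop : Tendsto βseq atTop atTop)
    (Hinf : (ℕ → Fin d) → ℝ → ℝ)
    (hHinf : ∀ ω : ℕ → Fin d, ∀ x ∈ Icc (0:ℝ) 1,
      Tendsto (fun n : ℕ => (1 / βseq n) * Real.log (hβR (βseq n) ω x))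
        atTop (nhds (Hinf ω x))) :
    -- conclusion: H_∞ is an involution kernel for A = log g
    ∃ Astar : (ℕ → Fin d) → ℝ, ∀ w : ℕ → Fin d, ∀ x ∈ Icc (0:ℝ) 1,
      Astar w = Real.log ((g (w 0) (ψ (w 0) (x : ℂ))).re)
        + Hinf (fun n => w (n + 1)) ((ψ (w 0) (x : ℂ)).re) - Hinf w x :=
  stmt8_general d O hIO ψ hψreal g r hrexp hrreal ψw hψw Iw htilβ htilβone htilβrec αβ μβ hβf hhβf
    hβR hhβR βseq hβseq1 Hinf hHinf
end

section
/- With 𝕋^{-1}(w, x) = (σ(w), ψ_{w_0}(x)): (a) b(w, x) − b(𝕋^{-1}(w, x)) = R(ψ_{w_0}(x)) for every (w, x) ∈ Σ × I with I*(w) < ∞; (b) b(𝕋^{-1}(w, x)) ≤ b(w, x) for every such (w, x), i.e. b is non-decreasing along trajectories of 𝕋; (c) the set Γ_V = {(w, x) : b(w, x) = 0} is backward invariant: 𝕋^{-1}(Γ_V) ⊆ Γ_V; (d) if (w, x) is optimal, i.e. b(w, x) = 0, then R(ψ_{w_0}(x)) = 0. -/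
/-!
The involution-kernel identity `A*(w) = A(ψ_{w₀} x) + W(σw, ψ_{w₀} x) − W(w, x)`, together with the
definitions of `R` and `R*`, shows that `V*(w) + V(x) − W(w, x) + R*(w)` is unchanged when `(w, x)`
is replaced by `𝕋⁻¹(w, x)` and `R*(w)` by `R(ψ_{w₀} x)`. Since `I*(w) = R*(w) + I*(σw)`, this gives
`b(w, x) = b(𝕋⁻¹(w, x)) + R(ψ_{w₀} x)` in `EReal`, and all four claims follow from `R ≥ 0` and
`b ≥ 0`.
-/

open Set
open scoped NNReal ENNReal

theorem EReal.coe_add_ofReal_add_of_add_eq {c c' ρ r : ℝ} (hρ : 0 ≤ ρ) (h : c + ρ = c' + r)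
    (J : ℝ≥0∞) :
    (c : EReal) + ((ENNReal.ofReal ρ + J : ℝ≥0∞) : EReal) = (c' : EReal) + J + r := by
  rw [EReal.coe_ennreal_add, EReal.coe_ennreal_ofReal, max_eq_left hρ, ← add_assoc,
    ← EReal.coe_add, h, EReal.coe_add, add_right_comm]

section InverseBranch

variable {α X : Type*} {S : Set X} {f : X → X} {ψ : α → X → X} {A V R : X → ℝ}
  {W : (ℕ → α) → X → ℝ} {Astar Vstar Rstar : (ℕ → α) → ℝ} {Istar : (ℕ → α) → ℝ≥0∞}
  {b : (ℕ → α) → X → EReal}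

theorem add_Rstar_eq_add_R (hfψ : ∀ i, ∀ x ∈ S, f (ψ i x) = x)
    (hW : ∀ w : ℕ → α, ∀ x ∈ S,
      Astar w = A (ψ (w 0) x) + W (fun n => w (n + 1)) (ψ (w 0) x) - W w x)
    (hR : ∀ x, R x = V (f x) - V x - A x)
    (hRstar : ∀ w : ℕ → α, Rstar w = Vstar (fun n => w (n + 1)) - Vstar w - Astar w)
    (w : ℕ → α) {x : X} (hx : x ∈ S) :
    Vstar w + V x - W w x + Rstar w =
      Vstar (fun n => w (n + 1)) + V (ψ (w 0) x) - W (fun n => w (n + 1)) (ψ (w 0) x) +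
        R (ψ (w 0) x) := by
  rw [hRstar, hR, hfψ _ _ hx, hW w x hx]
  ring

theorem Istar_eq_ofReal_add_Istar_shift
    (hIstar : ∀ w : ℕ → α, Istar w = ∑' n : ℕ, ENNReal.ofReal (Rstar (fun m => w (m + n))))
    (w : ℕ → α) :
    Istar w = ENNReal.ofReal (Rstar w) + Istar (fun n => w (n + 1)) := by
  rw [hIstar, hIstar, tsum_eq_zero_add' ENNReal.summable]
  rfl

theorem Istar_shift_ne_top
    (hIstar : ∀ w : ℕ → α, Istar w = ∑' n : ℕ, ENNReal.ofReal (Rstar (fun m => w (m + n))))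
    {w : ℕ → α} (hw : Istar w ≠ ⊤) :
    Istar (fun n => w (n + 1)) ≠ ⊤ := by
  rw [Istar_eq_ofReal_add_Istar_shift hIstar] at hw
  exact (ENNReal.add_ne_top.1 hw).2

theorem b_eq_coe_of_Istar_ne_top
    (hb : ∀ w x, b w x = ((Vstar w + V x - W w x : ℝ) : EReal) + (Istar w : EReal))
    {w : ℕ → α} (hw : Istar w ≠ ⊤) (x : X) :
    b w x = ((Vstar w + V x - W w x + (Istar w).toReal : ℝ) : EReal) := by
  rw [hb, EReal.coe_add, EReal.coe_ennreal_toReal hw]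

theorem b_eq_b_inverse_branch_add_R (hfψ : ∀ i, ∀ x ∈ S, f (ψ i x) = x)
    (hW : ∀ w : ℕ → α, ∀ x ∈ S,
      Astar w = A (ψ (w 0) x) + W (fun n => w (n + 1)) (ψ (w 0) x) - W w x)
    (hR : ∀ x, R x = V (f x) - V x - A x)
    (hRstar : ∀ w : ℕ → α, Rstar w = Vstar (fun n => w (n + 1)) - Vstar w - Astar w)
    (hRstarnonneg : ∀ w, 0 ≤ Rstar w)
    (hIstar : ∀ w : ℕ → α, Istar w = ∑' n : ℕ, ENNReal.ofReal (Rstar (fun m => w (m + n))))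
    (hb : ∀ w x, b w x = ((Vstar w + V x - W w x : ℝ) : EReal) + (Istar w : EReal))
    (w : ℕ → α) {x : X} (hx : x ∈ S) :
    b w x = b (fun n => w (n + 1)) (ψ (w 0) x) + R (ψ (w 0) x) := by
  rw [hb, hb, Istar_eq_ofReal_add_Istar_shift hIstar]
  exact EReal.coe_add_ofReal_add_of_add_eq (hRstarnonneg w)
    (add_Rstar_eq_add_R hfψ hW hR hRstar w hx) _

end InverseBranch

theorem stmt10_general
    -- the degree
    (d : ℕ)
    -- the expanding onto map f of degree d and its inverse branches ψ_i
    (f : ℝ → ℝ) (ψ : Fin d → ℝ → ℝ)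
    (hψI : ∀ i, ∀ x ∈ Icc (0:ℝ) 1, ψ i x ∈ Icc (0:ℝ) 1)
    (hfψ : ∀ i, ∀ x ∈ Icc (0:ℝ) 1, f (ψ i x) = x)
    -- the Hölder potential A, with m(A) = 0
    (A : ℝ → ℝ)
    -- a continuous involution kernel W for A, with Hölder dual potential A*, m(A*) = 0
    (W : (ℕ → Fin d) → ℝ → ℝ)
    (Astar : (ℕ → Fin d) → ℝ)
    (hW : ∀ w : ℕ → Fin d, ∀ x ∈ Icc (0:ℝ) 1,
      Astar w = A (ψ (w 0) x) + W (fun n => w (n + 1)) (ψ (w 0) x) - W w x)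
    -- calibrated subactions V for A and V* for A*
    (V : ℝ → ℝ)
    (Vstar : (ℕ → Fin d) → ℝ)
    -- R, R*, the deviation function I*, and the function b
    (R : ℝ → ℝ) (hR : ∀ x, R x = V (f x) - V x - A x)
    (hRnonneg : ∀ x ∈ Icc (0:ℝ) 1, 0 ≤ R x)
    (Rstar : (ℕ → Fin d) → ℝ)
    (hRstar : ∀ w : ℕ → Fin d, Rstar w = Vstar (fun n => w (n + 1)) - Vstar w - Astar w)
    (hRstarnonneg : ∀ w, 0 ≤ Rstar w)
    (Istar : (ℕ → Fin d) → ℝ≥0∞)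
    (hIstar : ∀ w : ℕ → Fin d, Istar w = ∑' n : ℕ, ENNReal.ofReal (Rstar (fun m => w (m + n))))
    (b : (ℕ → Fin d) → ℝ → EReal)
    (hb : ∀ w x, b w x = ((Vstar w + V x - W w x : ℝ) : EReal) + (Istar w : EReal))
    -- V(x) = sup_w (W(w,x) − V*(w) − I*(w)), so that b ≥ 0, and optimal w's exist
    (hbnonneg : ∀ w : ℕ → Fin d, ∀ x ∈ Icc (0:ℝ) 1, 0 ≤ b w x)
    :
    -- (a)
    (∀ w : ℕ → Fin d, ∀ x ∈ Icc (0:ℝ) 1, Istar w ≠ ⊤ →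
      b w x - b (fun n => w (n + 1)) (ψ (w 0) x) = ((R (ψ (w 0) x) : ℝ) : EReal)) ∧
    -- (b)
    (∀ w : ℕ → Fin d, ∀ x ∈ Icc (0:ℝ) 1, Istar w ≠ ⊤ →
      b (fun n => w (n + 1)) (ψ (w 0) x) ≤ b w x) ∧
    -- (c)
    (∀ w : ℕ → Fin d, ∀ x ∈ Icc (0:ℝ) 1, b w x = 0 →
      b (fun n => w (n + 1)) (ψ (w 0) x) = 0) ∧
    -- (d)
    (∀ w : ℕ → Fin d, ∀ x ∈ Icc (0:ℝ) 1, b w x = 0 → R (ψ (w 0) x) = 0) := by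
  have hstep : ∀ w, ∀ x ∈ Icc (0:ℝ) 1,
      b w x = b (fun n => w (n + 1)) (ψ (w 0) x) + R (ψ (w 0) x) := fun w x hx =>
    b_eq_b_inverse_branch_add_R hfψ hW hR hRstar hRstarnonneg hIstar hb w hx
  have hR_branch : ∀ w : ℕ → Fin d, ∀ x ∈ Icc (0:ℝ) 1, (0 : EReal) ≤ R (ψ (w 0) x) :=
    fun w x hx => EReal.coe_nonneg.2 (hRnonneg _ (hψI _ x hx))
  have hzero : ∀ w, ∀ x ∈ Icc (0:ℝ) 1, b w x = 0 →
      b (fun n => w (n + 1)) (ψ (w 0) x) = 0 ∧ (R (ψ (w 0) x) : EReal) = 0 := fun w x hx h0 =>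
    (add_eq_zero_iff_of_nonneg (hbnonneg _ _ (hψI _ x hx)) (hR_branch w x hx)).1
      (h0 ▸ hstep w x hx).symm
  refine ⟨fun w x hx hw => ?_, fun w x hx _ => ?_, fun w x hx h0 => (hzero w x hx h0).1,
    fun w x hx h0 => EReal.coe_eq_zero.1 (hzero w x hx h0).2⟩
  · rw [hstep w x hx, b_eq_coe_of_Istar_ne_top hb (Istar_shift_ne_top hIstar hw),
      EReal.add_sub_cancel_left]
  · rw [hstep w x hx]
    exact le_add_of_nonneg_right (hR_branch w x hx)

/-- Lemma 6.1 of the paper.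
With `𝕋⁻¹(w,x) = (σ(w), ψ_{w₀}(x))`:
(a) `b(w,x) − b(𝕋⁻¹(w,x)) = R(ψ_{w₀}(x))` whenever `I*(w) < ∞`;
(b) `b(𝕋⁻¹(w,x)) ≤ b(w,x)` for every such `(w,x)`;
(c) `Γ_V = {b = 0}` is backward invariant;
(d) if `b(w,x) = 0` then `R(ψ_{w₀}(x)) = 0`. -/
theorem stmt10
    -- the degree
    (d : ℕ) (hd : 1 ≤ d)
    -- the expanding onto map f of degree d and its inverse branches ψ_i
    (f : ℝ → ℝ) (ψ : Fin d → ℝ → ℝ)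
    (hψI : ∀ i, ∀ x ∈ Icc (0:ℝ) 1, ψ i x ∈ Icc (0:ℝ) 1)
    (hfψ : ∀ i, ∀ x ∈ Icc (0:ℝ) 1, f (ψ i x) = x)
    -- the metric d(ω,γ) = 2^{-n} on Σ, n the first position at which ω and γ disagree
    (dSig : (ℕ → Fin d) → (ℕ → Fin d) → ℝ)
    (hdSigeq : ∀ ω, dSig ω ω = 0)
    (hdSig : ∀ ω γ : ℕ → Fin d, ∀ n : ℕ, (∀ m, m < n → ω m = γ m) → ω n ≠ γ n →
      dSig ω γ = (2:ℝ)⁻¹ ^ n)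
    -- the Hölder potential A, with m(A) = 0
    (A : ℝ → ℝ) (hA : ∃ (C r : ℝ≥0), 0 < r ∧ HolderWith C r A)
    (hmA : (∀ ν : MeasureTheory.Measure ℝ, MeasureTheory.IsProbabilityMeasure ν →
        ν (Icc (0:ℝ) 1) = 1 → (∀ s : Set ℝ, MeasurableSet s → ν (f ⁻¹' s) = ν s) →
        ∫ x, A x ∂ν ≤ 0) ∧
      ∃ ν : MeasureTheory.Measure ℝ, MeasureTheory.IsProbabilityMeasure ν ∧
        ν (Icc (0:ℝ) 1) = 1 ∧ (∀ s : Set ℝ, MeasurableSet s → ν (f ⁻¹' s) = ν s) ∧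
        ∫ x, A x ∂ν = 0)
    -- a continuous involution kernel W for A, with Hölder dual potential A*, m(A*) = 0
    (W : (ℕ → Fin d) → ℝ → ℝ)
    (hWcont : Continuous (fun p : (ℕ → Fin d) × ℝ => W p.1 p.2))
    (Astar : (ℕ → Fin d) → ℝ)
    (hAstarHolder : ∃ C θ : ℝ, 0 < C ∧ 0 < θ ∧
      ∀ w w' : ℕ → Fin d, |Astar w - Astar w'| ≤ C * (dSig w w') ^ θ)
    (hW : ∀ w : ℕ → Fin d, ∀ x ∈ Icc (0:ℝ) 1,
      Astar w = A (ψ (w 0) x) + W (fun n => w (n + 1)) (ψ (w 0) x) - W w x)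
    (hmAstar : (∀ ν : MeasureTheory.Measure (ℕ → Fin d),
        MeasureTheory.IsProbabilityMeasure ν →
        (∀ s : Set (ℕ → Fin d), MeasurableSet s →
          ν ((fun (w : ℕ → Fin d) (n : ℕ) => w (n + 1)) ⁻¹' s) = ν s) →
        ∫ w, Astar w ∂ν ≤ 0) ∧
      ∃ ν : MeasureTheory.Measure (ℕ → Fin d), MeasureTheory.IsProbabilityMeasure ν ∧
        (∀ s : Set (ℕ → Fin d), MeasurableSet s →
          ν ((fun (w : ℕ → Fin d) (n : ℕ) => w (n + 1)) ⁻¹' s) = ν s) ∧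
        ∫ w, Astar w ∂ν = 0)
    -- calibrated subactions V for A and V* for A*
    (V : ℝ → ℝ)
    (hVcal : ∀ x ∈ Icc (0:ℝ) 1,
      (∀ y ∈ Icc (0:ℝ) 1, f y = x → V y + A y ≤ V x) ∧
      ∃ y ∈ Icc (0:ℝ) 1, f y = x ∧ V x = V y + A y)
    (Vstar : (ℕ → Fin d) → ℝ)
    (hVstarcal : ∀ w : ℕ → Fin d,
      (∀ w' : ℕ → Fin d, (fun n => w' (n + 1)) = w → Vstar w' + Astar w' ≤ Vstar w) ∧
      ∃ w' : ℕ → Fin d, (fun n => w' (n + 1)) = w ∧ Vstar w = Vstar w' + Astar w')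
    -- R, R*, the deviation function I*, and the function b
    (R : ℝ → ℝ) (hR : ∀ x, R x = V (f x) - V x - A x)
    (hRnonneg : ∀ x ∈ Icc (0:ℝ) 1, 0 ≤ R x)
    (Rstar : (ℕ → Fin d) → ℝ)
    (hRstar : ∀ w : ℕ → Fin d, Rstar w = Vstar (fun n => w (n + 1)) - Vstar w - Astar w)
    (hRstarnonneg : ∀ w, 0 ≤ Rstar w)
    (Istar : (ℕ → Fin d) → ℝ≥0∞)
    (hIstar : ∀ w : ℕ → Fin d, Istar w = ∑' n : ℕ, ENNReal.ofReal (Rstar (fun m => w (m + n))))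
    (b : (ℕ → Fin d) → ℝ → EReal)
    (hb : ∀ w x, b w x = ((Vstar w + V x - W w x : ℝ) : EReal) + (Istar w : EReal))
    -- V(x) = sup_w (W(w,x) − V*(w) − I*(w)), so that b ≥ 0, and optimal w's exist
    (hVsup : ∀ x ∈ Icc (0:ℝ) 1,
      (V x : EReal) = ⨆ w : ℕ → Fin d, (((W w x - Vstar w : ℝ) : EReal) - (Istar w : EReal)))
    (hbnonneg : ∀ w : ℕ → Fin d, ∀ x ∈ Icc (0:ℝ) 1, 0 ≤ b w x)
    (hopt : ∀ x ∈ Icc (0:ℝ) 1, ∃ w : ℕ → Fin d, b w x = 0)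
    :
    -- (a)
    (∀ w : ℕ → Fin d, ∀ x ∈ Icc (0:ℝ) 1, Istar w ≠ ⊤ →
      b w x - b (fun n => w (n + 1)) (ψ (w 0) x) = ((R (ψ (w 0) x) : ℝ) : EReal)) ∧
    -- (b)
    (∀ w : ℕ → Fin d, ∀ x ∈ Icc (0:ℝ) 1, Istar w ≠ ⊤ →
      b (fun n => w (n + 1)) (ψ (w 0) x) ≤ b w x) ∧
    -- (c)
    (∀ w : ℕ → Fin d, ∀ x ∈ Icc (0:ℝ) 1, b w x = 0 →
      b (fun n => w (n + 1)) (ψ (w 0) x) = 0) ∧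
    -- (d)
    (∀ w : ℕ → Fin d, ∀ x ∈ Icc (0:ℝ) 1, b w x = 0 → R (ψ (w 0) x) = 0) :=
  stmt10_general d f ψ hψI hfψ A W Astar hW V Vstar R hR hRnonneg Rstar hRstar hRstarnonneg Istar
    hIstar b hb hbnonneg
end

section
/- Suppose W satisfies the twist condition. If x < x' in I, and w is optimal for x (i.e. W(w, x) − φ(w) = sup_{w'' ∈ Σ} (W(w'', x) − φ(w''))) and w' is optimal for x', then w' ≤ w in the lexicographic order. That is, the (multi-valued) map x ↦ w(x) assigning optimal sequences is monotone non-increasing. -/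
/-!
If `w` is optimal at `x` and `w'` at `x'`, testing each against the other gives
`W w' x + W w x' ≤ W w x + W w' x'` (the values of `φ` at optimal points are finite, so they
cancel). When `x < x'` and `w < w'` lexicographically, the twist condition asserts the strict
reverse inequality; hence `w' ≤ w`.
-/

open Set

theorem Pi.toLex_lt_toLex_iff_nat {α : Type*} [LinearOrder α] (a a' : ℕ → α) :
    toLex a < toLex a' ↔ ∃ n, (∀ m, m < n → a m = a' m) ∧ a n < a' n :=
  Iff.rfl

section Optimal

variable {ι : Type*} {φ : ι → EReal}

theorem EReal.ne_top_of_coe_sub_eq_iSup {f : ι → ℝ} (htop : ∃ j, φ j ≠ ⊤) {i : ι}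
    (hi : (f i : EReal) - φ i = ⨆ j, (f j : EReal) - φ j) : φ i ≠ ⊤ := by
  obtain ⟨j, hj⟩ := htop
  intro hφi
  have hle : (f j : EReal) - φ j ≤ ⊥ := by
    rw [← EReal.sub_top (f i : EReal), ← hφi, hi]
    exact le_iSup (fun k => (f k : EReal) - φ k) j
  generalize φ j = y at hj hle
  induction y using EReal.rec with
  | bot => simp at hle
  | coe r => exact EReal.coe_ne_bot _ (le_bot_iff.mp (EReal.coe_sub _ r ▸ hle))
  | top => exact hj rfl

theorem add_le_add_of_coe_sub_eq_iSup {f g : ι → ℝ} (hbot : ∀ k, φ k ≠ ⊥)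
    (htop : ∃ k, φ k ≠ ⊤) {i j : ι}
    (hi : (f i : EReal) - φ i = ⨆ k, (f k : EReal) - φ k)
    (hj : (g j : EReal) - φ j = ⨆ k, (g k : EReal) - φ k) :
    f j + g i ≤ f i + g j := by
  have hφi := EReal.coe_toReal (EReal.ne_top_of_coe_sub_eq_iSup htop hi) (hbot i)
  have hφj := EReal.coe_toReal (EReal.ne_top_of_coe_sub_eq_iSup htop hj) (hbot j)
  have h₁ : (f j : EReal) - φ j ≤ (f i : EReal) - φ i :=
    hi ▸ le_iSup (fun k => (f k : EReal) - φ k) j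
  have h₂ : (g i : EReal) - φ i ≤ (g j : EReal) - φ j :=
    hj ▸ le_iSup (fun k => (g k : EReal) - φ k) i
  rw [← hφi, ← hφj, ← EReal.coe_sub, ← EReal.coe_sub, EReal.coe_le_coe_iff] at h₁ h₂
  linarith

end Optimal

theorem stmt11_general
    -- the alphabet size
    (d : ℕ)
    -- the strict lexicographic order on Σ = {1,…,d}^ℕ
    (lexLt : (ℕ → Fin d) → (ℕ → Fin d) → Prop)
    (hlex : ∀ a a' : ℕ → Fin d,
      lexLt a a' ↔ ∃ n : ℕ, (∀ m, m < n → a m = a' m) ∧ a n < a' n)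
    -- a continuous function W on Σ × I
    (W : (ℕ → Fin d) → ℝ → ℝ)
    -- a function φ : Σ → ℝ ∪ {+∞}, never −∞ and not identically +∞
    (φ : (ℕ → Fin d) → EReal)
    (hφbot : ∀ w, φ w ≠ ⊥) (hφtop : ∃ w, φ w ≠ ⊤)
    -- the twist condition
    (htwist : ∀ a a' : ℕ → Fin d, ∀ x x' : ℝ, x ∈ Icc (0:ℝ) 1 → x' ∈ Icc (0:ℝ) 1 →
      lexLt a a' → x < x' → W a x + W a' x' < W a x' + W a' x) :
    -- conclusion
    ∀ x ∈ Icc (0:ℝ) 1, ∀ x' ∈ Icc (0:ℝ) 1, x < x' →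
      ∀ w w' : ℕ → Fin d,
        (((W w x : ℝ) : EReal) - φ w = ⨆ w'' : ℕ → Fin d, (((W w'' x : ℝ) : EReal) - φ w'')) →
        (((W w' x' : ℝ) : EReal) - φ w'
            = ⨆ w'' : ℕ → Fin d, (((W w'' x' : ℝ) : EReal) - φ w'')) →
        w' = w ∨ lexLt w' w := by
  intro x hx x' hx' hxx' w w' hw hw'
  simp only [hlex, ← Pi.toLex_lt_toLex_iff_nat] at htwist ⊢
  rcases lt_trichotomy (toLex w') (toLex w) with hlt | heq | hgt
  · exact Or.inr hlt
  · exact Or.inl (toLex_inj.mp heq)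
  · have hexchange :=
      add_le_add_of_coe_sub_eq_iSup (f := (W · x)) (g := (W · x')) hφbot hφtop hw hw'
    linarith [htwist w w' x x' hx hx' hgt hxx']

/-- Proposition 6.2 of the paper.
If `W` is twist, `x < x'` in `I`, `w` is optimal for `x` and `w'` is optimal for `x'`,
then `w' ≤ w` in the lexicographic order: the multi-valued map `x ↦ w(x)` is monotone
non-increasing. -/
theorem stmt11
    -- the alphabet size
    (d : ℕ) (hd : 1 ≤ d)
    -- the strict lexicographic order on Σ = {1,…,d}^ℕ
    (lexLt : (ℕ → Fin d) → (ℕ → Fin d) → Prop)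
    (hlex : ∀ a a' : ℕ → Fin d,
      lexLt a a' ↔ ∃ n : ℕ, (∀ m, m < n → a m = a' m) ∧ a n < a' n)
    -- a continuous function W on Σ × I
    (W : (ℕ → Fin d) → ℝ → ℝ)
    (hWcont : Continuous (fun p : (ℕ → Fin d) × ℝ => W p.1 p.2))
    -- a function φ : Σ → ℝ ∪ {+∞}, never −∞ and not identically +∞
    (φ : (ℕ → Fin d) → EReal)
    (hφbot : ∀ w, φ w ≠ ⊥) (hφtop : ∃ w, φ w ≠ ⊤)
    -- the twist condition
    (htwist : ∀ a a' : ℕ → Fin d, ∀ x x' : ℝ, x ∈ Icc (0:ℝ) 1 → x' ∈ Icc (0:ℝ) 1 →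
      lexLt a a' → x < x' → W a x + W a' x' < W a x' + W a' x) :
    -- conclusion
    ∀ x ∈ Icc (0:ℝ) 1, ∀ x' ∈ Icc (0:ℝ) 1, x < x' →
      ∀ w w' : ℕ → Fin d,
        (((W w x : ℝ) : EReal) - φ w = ⨆ w'' : ℕ → Fin d, (((W w'' x : ℝ) : EReal) - φ w'')) →
        (((W w' x' : ℝ) : EReal) - φ w'
            = ⨆ w'' : ℕ → Fin d, (((W w'' x' : ℝ) : EReal) - φ w'')) →
        w' = w ∨ lexLt w' w :=
  stmt11_general d lexLt hlex W φ hφbot hφtop htwist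
end

section
/- If W satisfies the twist condition and the turning point c satisfies 0 < c < 1, then c is a solution of V(ψ_1(c)) + A(ψ_1(c)) = V(ψ_0(c)) + A(ψ_0(c)). -/
/-!
Calibration gives `V (ψ i c) + A (ψ i c) ≤ V c` for both branches. For the reverse inequalities,
`c` is a limit both of points all of whose optimal symbols begin with `1` and (since `c < 1`) of
points having an optimal symbol beginning with `0`. If `(w, x)` is optimal with `w 0 = i` and `x`
is close to `c`, then comparing `b(w, x) = 0` with `b ≥ 0` at `(σ w, ψ i c)` and using the
involution kernel relation gives `V (ψ i c) + A (ψ i c) ≥ V c - 2ε`, where `ε` bounds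
`|W(·, x) - W(·, c)|` uniformly, by compactness of `Σ`.
-/

open Set Filter Topology
open scoped NNReal ENNReal

lemma EReal.coe_add_coe_ennreal_of_ne_top (r : ℝ) {e : ℝ≥0∞} (he : e ≠ ⊤) :
    (r : EReal) + e = ((r + e.toReal : ℝ) : EReal) := by
  rw [EReal.coe_add, ← EReal.toReal_coe_ennreal,
    EReal.coe_toReal (EReal.coe_ennreal_eq_top_iff.not.2 he) (EReal.coe_ennreal_ne_bot e)]

lemma EReal.ne_top_of_coe_add_coe_ennreal_eq_zero {r : ℝ} {e : ℝ≥0∞}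
    (h : (r : EReal) + e = 0) : e ≠ ⊤ := by
  rintro rfl
  simp [EReal.coe_ennreal_top] at h

lemma tsum_orbit_eq_add_tsum_orbit_tail {α : Type*} (g : (ℕ → α) → ℝ≥0∞) (w : ℕ → α) :
    ∑' n, g (fun m => w (m + n)) = g w + ∑' n, g (fun m => w (m + n + 1)) :=
  tsum_eq_zero_add' ENNReal.summable

lemma eventually_forall_dist_lt_of_continuous {Y X E : Type*} [TopologicalSpace Y]
    [CompactSpace Y] [TopologicalSpace X] [PseudoMetricSpace E] {F : Y → X → E}
    (hF : Continuous (fun p : Y × X => F p.1 p.2)) (c : X) {ε : ℝ} (hε : 0 < ε) :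
    ∀ᶠ x in 𝓝 c, ∀ y, dist (F y x) (F y c) < ε := by
  have hd : Continuous (fun z : X × Y => dist (F z.2 z.1) (F z.2 c)) :=
    (hF.comp continuous_swap).dist (hF.comp (continuous_snd.prodMk continuous_const))
  simpa using isCompact_univ.eventually_forall_of_forall_eventually fun y _ =>
    (hd.tendsto (c, y)).eventually_lt_const (by simpa using hε)

section OptimalPairs

variable {α X : Type*} {W : (ℕ → α) → X → ℝ} {Vstar : (ℕ → α) → ℝ} {V : X → ℝ}
  {Istar : (ℕ → α) → ℝ≥0∞} {b : (ℕ → α) → X → EReal}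

lemma real_eq_zero_of_b_eq_zero
    (hb : ∀ w x, b w x = ((Vstar w + V x - W w x : ℝ) : EReal) + (Istar w : EReal))
    {w : ℕ → α} {x : X} (h : b w x = 0) :
    Istar w ≠ ⊤ ∧ Vstar w + V x - W w x + (Istar w).toReal = 0 := by
  rw [hb] at h
  have hne := EReal.ne_top_of_coe_add_coe_ennreal_eq_zero h
  rw [EReal.coe_add_coe_ennreal_of_ne_top _ hne] at h
  exact ⟨hne, EReal.coe_eq_zero.1 h⟩

lemma real_nonneg_of_b_nonneg
    (hb : ∀ w x, b w x = ((Vstar w + V x - W w x : ℝ) : EReal) + (Istar w : EReal))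
    {w : ℕ → α} {x : X} (h : 0 ≤ b w x) (hne : Istar w ≠ ⊤) :
    0 ≤ Vstar w + V x - W w x + (Istar w).toReal := by
  rwa [hb, EReal.coe_add_coe_ennreal_of_ne_top _ hne, EReal.coe_nonneg] at h

lemma add_sub_le_of_b_eq_zero
    (hb : ∀ w x, b w x = ((Vstar w + V x - W w x : ℝ) : EReal) + (Istar w : EReal))
    {w : ℕ → α} {c x : X} (hc : b w c = 0) (hx : 0 ≤ b w x) :
    V c + W w x - W w c ≤ V x := by
  obtain ⟨hne, hc⟩ := real_eq_zero_of_b_eq_zero hb hc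
  linarith [real_nonneg_of_b_nonneg hb hx hne]

/-- Compare `b(w, x) = 0` with `b ≥ 0` at `𝕋⁻¹(w, c) = (σ w, ψ_{w 0} c)`, splitting
`I*(w) = R*(w)⁺ + I*(σ w)`. -/
lemma add_sub_le_branch_of_b_eq_zero {Rstar Astar : (ℕ → α) → ℝ} {A : X → ℝ} {ψ : α → X → X}
    (hb : ∀ w x, b w x = ((Vstar w + V x - W w x : ℝ) : EReal) + (Istar w : EReal))
    (hIstar : ∀ w, Istar w = ∑' n : ℕ, ENNReal.ofReal (Rstar (fun m => w (m + n))))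
    (hRstar : ∀ w, Rstar w = Vstar (fun n => w (n + 1)) - Vstar w - Astar w)
    {w : ℕ → α} {c x : X}
    (hWc : Astar w = A (ψ (w 0) c) + W (fun n => w (n + 1)) (ψ (w 0) c) - W w c)
    (hx : b w x = 0) (hψc : 0 ≤ b (fun n => w (n + 1)) (ψ (w 0) c)) :
    V x + W w c - W w x ≤ V (ψ (w 0) c) + A (ψ (w 0) c) := by
  have hsplit : Istar w = ENNReal.ofReal (Rstar w) + Istar (fun n => w (n + 1)) := by
    rw [hIstar, hIstar, tsum_orbit_eq_add_tsum_orbit_tail (fun v => ENNReal.ofReal (Rstar v))]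
  obtain ⟨hne, hx⟩ := real_eq_zero_of_b_eq_zero hb hx
  have hne' : Istar (fun n => w (n + 1)) ≠ ⊤ := by
    rw [hsplit] at hne
    exact (ENNReal.add_ne_top.1 hne).2
  have hIstar_toReal : Rstar w + (Istar (fun n => w (n + 1))).toReal ≤ (Istar w).toReal := by
    rw [hsplit, ENNReal.toReal_add ENNReal.ofReal_ne_top hne', ENNReal.toReal_ofReal']
    linarith [le_max_left (Rstar w) 0]
  linarith [real_nonneg_of_b_nonneg hb hψc hne', hRstar w]

lemma le_branch_of_mem_closure [TopologicalSpace α] [CompactSpace α] [TopologicalSpace X]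
    {Rstar Astar : (ℕ → α) → ℝ} {A : X → ℝ} {ψ : α → X → X} {I : Set X}
    (hWcont : Continuous (fun p : (ℕ → α) × X => W p.1 p.2))
    (hb : ∀ w x, b w x = ((Vstar w + V x - W w x : ℝ) : EReal) + (Istar w : EReal))
    (hIstar : ∀ w, Istar w = ∑' n : ℕ, ENNReal.ofReal (Rstar (fun m => w (m + n))))
    (hRstar : ∀ w, Rstar w = Vstar (fun n => w (n + 1)) - Vstar w - Astar w)
    (hbnonneg : ∀ w, ∀ x ∈ I, 0 ≤ b w x) {c : X} (hopt : ∃ w, b w c = 0)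
    (hW : ∀ w, Astar w = A (ψ (w 0) c) + W (fun n => w (n + 1)) (ψ (w 0) c) - W w c)
    {i : α} (hψI : ψ i c ∈ I) (hc : c ∈ closure {x ∈ I | ∃ w, b w x = 0 ∧ w 0 = i}) :
    V c ≤ V (ψ i c) + A (ψ i c) := by
  obtain ⟨wc, hwc⟩ := hopt
  refine le_of_forall_pos_le_add fun ε hε => ?_
  have hunif := eventually_forall_dist_lt_of_continuous hWcont c (half_pos hε)
  obtain ⟨x, hWx, ⟨hxI, w, hwx, rfl⟩⟩ :=
    (hunif.and_frequently (mem_closure_iff_frequently.1 hc)).exists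
  have hVc := add_sub_le_of_b_eq_zero hb hwc (hbnonneg wc x hxI)
  have hVx := add_sub_le_branch_of_b_eq_zero hb hIstar hRstar (hW w) hwx (hbnonneg _ _ hψI)
  have h1 := abs_lt.1 (hWx wc)
  have h2 := abs_lt.1 (hWx w)
  linarith [h1.1, h2.2]

end OptimalPairs

lemma Real.sSup_mem_closure_of_ne_zero {S : Set ℝ} (hS : BddAbove S) (h0 : sSup S ≠ 0) :
    sSup S ∈ closure S := by
  refine csSup_mem_closure ?_ hS
  by_contra hne
  exact h0 (by rw [not_nonempty_iff_eq_empty.1 hne, Real.sSup_empty])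

lemma sSup_mem_closure_Icc_diff {S : Set ℝ} {a b : ℝ} (hS : BddAbove S) (ha : a ≤ sSup S)
    (hb : sSup S < b) : sSup S ∈ closure (Icc a b \ S) := by
  have hsub : Ioo (sSup S) b ⊆ Icc a b \ S := fun x hx =>
    ⟨⟨ha.trans hx.1.le, hx.2.le⟩, fun hxS => (le_csSup hS hxS).not_gt hx.1⟩
  apply closure_mono hsub
  rw [closure_Ioo hb.ne]
  exact ⟨le_rfl, hb.le⟩

theorem stmt12_general
    -- the expanding onto map f of degree d and its inverse branches ψ_i
    (f : ℝ → ℝ) (ψ : Fin 2 → ℝ → ℝ)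
    (hψI : ∀ i, ∀ x ∈ Icc (0:ℝ) 1, ψ i x ∈ Icc (0:ℝ) 1)
    (hfψ : ∀ i, ∀ x ∈ Icc (0:ℝ) 1, f (ψ i x) = x)
    -- the Hölder potential A, with m(A) = 0
    (A : ℝ → ℝ)
    -- a continuous involution kernel W for A, with Hölder dual potential A*, m(A*) = 0
    (W : (ℕ → Fin 2) → ℝ → ℝ)
    (hWcont : Continuous (fun p : (ℕ → Fin 2) × ℝ => W p.1 p.2))
    (Astar : (ℕ → Fin 2) → ℝ)
    (hW : ∀ w : ℕ → Fin 2, ∀ x ∈ Icc (0:ℝ) 1,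
      Astar w = A (ψ (w 0) x) + W (fun n => w (n + 1)) (ψ (w 0) x) - W w x)
    -- calibrated subactions V for A and V* for A*
    (V : ℝ → ℝ)
    (hVcal : ∀ x ∈ Icc (0:ℝ) 1,
      (∀ y ∈ Icc (0:ℝ) 1, f y = x → V y + A y ≤ V x) ∧
      ∃ y ∈ Icc (0:ℝ) 1, f y = x ∧ V x = V y + A y)
    (Vstar : (ℕ → Fin 2) → ℝ)
    -- R, R*, the deviation function I*, and the function b
    (Rstar : (ℕ → Fin 2) → ℝ)
    (hRstar : ∀ w : ℕ → Fin 2, Rstar w = Vstar (fun n => w (n + 1)) - Vstar w - Astar w)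
    (Istar : (ℕ → Fin 2) → ℝ≥0∞)
    (hIstar : ∀ w : ℕ → Fin 2, Istar w = ∑' n : ℕ, ENNReal.ofReal (Rstar (fun m => w (m + n))))
    (b : (ℕ → Fin 2) → ℝ → EReal)
    (hb : ∀ w x, b w x = ((Vstar w + V x - W w x : ℝ) : EReal) + (Istar w : EReal))
    -- V(x) = sup_w (W(w,x) − V*(w) − I*(w)), so that b ≥ 0, and optimal w's exist
    (hbnonneg : ∀ w : ℕ → Fin 2, ∀ x ∈ Icc (0:ℝ) 1, 0 ≤ b w x)
    (hopt : ∀ x ∈ Icc (0:ℝ) 1, ∃ w : ℕ → Fin 2, b w x = 0)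
    -- the turning point c
    (c : ℝ)
    (hcdef : c = sSup {x | x ∈ Icc (0:ℝ) 1 ∧
      ∀ w : ℕ → Fin 2, b w x = 0 → w 0 = 1})
    (hc01 : 0 < c ∧ c < 1)
    :
    V (ψ 1 c) + A (ψ 1 c) = V (ψ 0 c) + A (ψ 0 c) := by
  obtain ⟨hc0, hc1⟩ := hc01
  have hcI : c ∈ Icc (0:ℝ) 1 := ⟨hc0.le, hc1.le⟩
  set S := {x | x ∈ Icc (0:ℝ) 1 ∧ ∀ w : ℕ → Fin 2, b w x = 0 → w 0 = 1}
  have hSbdd : BddAbove S := ⟨1, fun x hx => hx.1.2⟩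
  have hlower : ∀ i : Fin 2, c ∈ closure {x ∈ Icc (0:ℝ) 1 | ∃ w, b w x = 0 ∧ w 0 = i} →
      V c ≤ V (ψ i c) + A (ψ i c) := fun i =>
    le_branch_of_mem_closure hWcont hb hIstar hRstar hbnonneg (hopt c hcI)
      (fun w => hW w c hcI) (hψI i c hcI)
  have hS1 : S ⊆ {x ∈ Icc (0:ℝ) 1 | ∃ w, b w x = 0 ∧ w 0 = 1} := fun x hx => by
    obtain ⟨w, hw⟩ := hopt x hx.1
    exact ⟨hx.1, w, hw, hx.2 w hw⟩
  have hS0 : Icc (0:ℝ) 1 \ S ⊆ {x ∈ Icc (0:ℝ) 1 | ∃ w, b w x = 0 ∧ w 0 = 0} := by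
    rintro x ⟨hxI, hxS⟩
    obtain ⟨w, hw, hw1⟩ : ∃ w : ℕ → Fin 2, b w x = 0 ∧ w 0 ≠ 1 := by
      simpa [S, hxI.1, hxI.2] using hxS
    exact ⟨hxI, w, hw, by omega⟩
  have hlower1 := hlower 1 <| closure_mono hS1
    (hcdef ▸ Real.sSup_mem_closure_of_ne_zero hSbdd (hcdef ▸ hc0.ne'))
  have hlower0 := hlower 0 <| closure_mono hS0
    (hcdef ▸ sSup_mem_closure_Icc_diff hSbdd (hcdef ▸ hc0.le) (hcdef ▸ hc1))
  linarith [(hVcal c hcI).1 _ (hψI 0 c hcI) (hfψ 0 c hcI),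
    (hVcal c hcI).1 _ (hψI 1 c hcI) (hfψ 1 c hcI)]

/-- Lemma 6.2 of the paper.
If `W` satisfies the twist condition and the turning point `c` satisfies `0 < c < 1`,
then `c` solves `V(ψ₁(c)) + A(ψ₁(c)) = V(ψ₀(c)) + A(ψ₀(c))`. -/
theorem stmt12
    -- the expanding onto map f of degree d and its inverse branches ψ_i
    (f : ℝ → ℝ) (ψ : Fin 2 → ℝ → ℝ)
    (hψI : ∀ i, ∀ x ∈ Icc (0:ℝ) 1, ψ i x ∈ Icc (0:ℝ) 1)
    (hfψ : ∀ i, ∀ x ∈ Icc (0:ℝ) 1, f (ψ i x) = x)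
    -- the metric d(ω,γ) = 2^{-n} on Σ, n the first position at which ω and γ disagree
    (dSig : (ℕ → Fin 2) → (ℕ → Fin 2) → ℝ)
    (hdSigeq : ∀ ω, dSig ω ω = 0)
    (hdSig : ∀ ω γ : ℕ → Fin 2, ∀ n : ℕ, (∀ m, m < n → ω m = γ m) → ω n ≠ γ n →
      dSig ω γ = (2:ℝ)⁻¹ ^ n)
    -- the Hölder potential A, with m(A) = 0
    (A : ℝ → ℝ) (hA : ∃ (C r : ℝ≥0), 0 < r ∧ HolderWith C r A)
    (hmA : (∀ ν : MeasureTheory.Measure ℝ, MeasureTheory.IsProbabilityMeasure ν →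
        ν (Icc (0:ℝ) 1) = 1 → (∀ s : Set ℝ, MeasurableSet s → ν (f ⁻¹' s) = ν s) →
        ∫ x, A x ∂ν ≤ 0) ∧
      ∃ ν : MeasureTheory.Measure ℝ, MeasureTheory.IsProbabilityMeasure ν ∧
        ν (Icc (0:ℝ) 1) = 1 ∧ (∀ s : Set ℝ, MeasurableSet s → ν (f ⁻¹' s) = ν s) ∧
        ∫ x, A x ∂ν = 0)
    -- a continuous involution kernel W for A, with Hölder dual potential A*, m(A*) = 0
    (W : (ℕ → Fin 2) → ℝ → ℝ)
    (hWcont : Continuous (fun p : (ℕ → Fin 2) × ℝ => W p.1 p.2))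
    (Astar : (ℕ → Fin 2) → ℝ)
    (hAstarHolder : ∃ C θ : ℝ, 0 < C ∧ 0 < θ ∧
      ∀ w w' : ℕ → Fin 2, |Astar w - Astar w'| ≤ C * (dSig w w') ^ θ)
    (hW : ∀ w : ℕ → Fin 2, ∀ x ∈ Icc (0:ℝ) 1,
      Astar w = A (ψ (w 0) x) + W (fun n => w (n + 1)) (ψ (w 0) x) - W w x)
    (hmAstar : (∀ ν : MeasureTheory.Measure (ℕ → Fin 2),
        MeasureTheory.IsProbabilityMeasure ν →
        (∀ s : Set (ℕ → Fin 2), MeasurableSet s →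
          ν ((fun (w : ℕ → Fin 2) (n : ℕ) => w (n + 1)) ⁻¹' s) = ν s) →
        ∫ w, Astar w ∂ν ≤ 0) ∧
      ∃ ν : MeasureTheory.Measure (ℕ → Fin 2), MeasureTheory.IsProbabilityMeasure ν ∧
        (∀ s : Set (ℕ → Fin 2), MeasurableSet s →
          ν ((fun (w : ℕ → Fin 2) (n : ℕ) => w (n + 1)) ⁻¹' s) = ν s) ∧
        ∫ w, Astar w ∂ν = 0)
    -- calibrated subactions V for A and V* for A*
    (V : ℝ → ℝ)
    (hVcal : ∀ x ∈ Icc (0:ℝ) 1,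
      (∀ y ∈ Icc (0:ℝ) 1, f y = x → V y + A y ≤ V x) ∧
      ∃ y ∈ Icc (0:ℝ) 1, f y = x ∧ V x = V y + A y)
    (Vstar : (ℕ → Fin 2) → ℝ)
    (hVstarcal : ∀ w : ℕ → Fin 2,
      (∀ w' : ℕ → Fin 2, (fun n => w' (n + 1)) = w → Vstar w' + Astar w' ≤ Vstar w) ∧
      ∃ w' : ℕ → Fin 2, (fun n => w' (n + 1)) = w ∧ Vstar w = Vstar w' + Astar w')
    -- R, R*, the deviation function I*, and the function b
    (R : ℝ → ℝ) (hR : ∀ x, R x = V (f x) - V x - A x)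
    (hRnonneg : ∀ x ∈ Icc (0:ℝ) 1, 0 ≤ R x)
    (Rstar : (ℕ → Fin 2) → ℝ)
    (hRstar : ∀ w : ℕ → Fin 2, Rstar w = Vstar (fun n => w (n + 1)) - Vstar w - Astar w)
    (hRstarnonneg : ∀ w, 0 ≤ Rstar w)
    (Istar : (ℕ → Fin 2) → ℝ≥0∞)
    (hIstar : ∀ w : ℕ → Fin 2, Istar w = ∑' n : ℕ, ENNReal.ofReal (Rstar (fun m => w (m + n))))
    (b : (ℕ → Fin 2) → ℝ → EReal)
    (hb : ∀ w x, b w x = ((Vstar w + V x - W w x : ℝ) : EReal) + (Istar w : EReal))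
    -- V(x) = sup_w (W(w,x) − V*(w) − I*(w)), so that b ≥ 0, and optimal w's exist
    (hVsup : ∀ x ∈ Icc (0:ℝ) 1,
      (V x : EReal) = ⨆ w : ℕ → Fin 2, (((W w x - Vstar w : ℝ) : EReal) - (Istar w : EReal)))
    (hbnonneg : ∀ w : ℕ → Fin 2, ∀ x ∈ Icc (0:ℝ) 1, 0 ≤ b w x)
    (hopt : ∀ x ∈ Icc (0:ℝ) 1, ∃ w : ℕ → Fin 2, b w x = 0)
    -- f preserves orientation: the inverse branches are increasing, ψ₀ to the left of ψ₁
    (hψmono : ∀ i, StrictMonoOn (ψ i) (Icc (0:ℝ) 1))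
    (hψorder : ∀ x ∈ Icc (0:ℝ) 1, ∀ y ∈ Icc (0:ℝ) 1, ψ 0 x ≤ ψ 1 y)
    -- the strict lexicographic order on Σ = {0,1}^ℕ and the twist condition for W
    (lexLt : (ℕ → Fin 2) → (ℕ → Fin 2) → Prop)
    (hlex : ∀ a a' : ℕ → Fin 2,
      lexLt a a' ↔ ∃ n : ℕ, (∀ m, m < n → a m = a' m) ∧ a n < a' n)
    (htwist : ∀ a a' : ℕ → Fin 2, ∀ x x' : ℝ, x ∈ Icc (0:ℝ) 1 → x' ∈ Icc (0:ℝ) 1 →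
      lexLt a a' → x < x' → W a x + W a' x' < W a x' + W a' x)
    -- the turning point c
    (c : ℝ)
    (hcdef : c = sSup {x | x ∈ Icc (0:ℝ) 1 ∧
      ∀ w : ℕ → Fin 2, b w x = 0 → w 0 = 1})
    (hc01 : 0 < c ∧ c < 1)
    :
    V (ψ 1 c) + A (ψ 1 c) = V (ψ 0 c) + A (ψ 0 c) :=
  stmt12_general f ψ hψI hfψ A W hWcont Astar hW V hVcal Vstar Rstar hRstar Istar hIstar b hb
    hbnonneg hopt c hcdef hc01
end

section
/- Suppose W satisfies the twist condition and A satisfies the countable condition (the set of w ∈ Σ that are optimal for some x ∈ I is countable). Then the turning point c is isolated from its forward orbit on both sides: there exist δ > 0 and w⁻, w⁺ ∈ Σ such that b(w⁻, x) = 0 for all x ∈ (c − δ, c] and b(w⁺, x) = 0 for all x ∈ [c, c + δ). -/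
/-!
For each `w ∈ Σ` let `J w ⊆ [0,1]` be the set of points at which `w` is optimal. The twist
condition makes `J` antitone for the lexicographic order, so each `J w` is a closed interval
and distinct intervals share at most an endpoint. Call a point of `(0,1)` a kink if it is
interior to no `J w`. Kinks are endpoints, hence countable by the countable condition, and they
exist because the first symbol of optimal sequences changes at `c`. A countable set cannot be
preperfect, so some kink `y` is isolated; near `y` one `w` is optimal on the left and another
`w'` on the right. Following `y` along the inverse branches prescribed by `w` (resp. `w'`), the
two optimal sequences agree until the orbit reaches `c`, which it must since they differ; the
corresponding shift of `w` (resp. `w'`) is then optimal on a left (resp. right) neighbourhood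
of `c`.
-/

open Set Filter Topology
open scoped NNReal ENNReal

theorem Set.OrdConnected.eq_csInf_or_eq_csSup_of_notMem_interior {α : Type*}
    [ConditionallyCompleteLinearOrder α] [TopologicalSpace α] [OrderTopology α] {s : Set α}
    (hs : s.OrdConnected) (hbelow : BddBelow s) (habove : BddAbove s) {x : α} (hx : x ∈ s)
    (hint : x ∉ interior s) : x = sInf s ∨ x = sSup s := by
  by_contra! h
  obtain ⟨a, ha, hax⟩ := exists_lt_of_csInf_lt ⟨x, hx⟩ ((csInf_le hbelow hx).lt_of_ne h.1.symm)
  obtain ⟨b, hb, hxb⟩ := exists_lt_of_lt_csSup ⟨x, hx⟩ ((le_csSup habove hx).lt_of_ne h.2)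
  exact hint (interior_maximal (Ioo_subset_Icc_self.trans (hs.out ha hb)) isOpen_Ioo ⟨hax, hxb⟩)

theorem not_countable_nat_bool : ¬ Countable (ℕ → Bool) := by
  rw [← Cardinal.mk_le_aleph0_iff, not_le]
  simpa using Cardinal.cantor Cardinal.aleph0

theorem exists_not_accPt_of_countable_closure {α : Type*} [MetricSpace α] [CompleteSpace α]
    {s : Set α} (hne : s.Nonempty) (hcount : (closure s).Countable) :
    ∃ y ∈ s, ¬ AccPt y (𝓟 s) := by
  by_contra! h
  obtain ⟨f, hrange, -, hinj⟩ :=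
    (Preperfect.perfect_closure h).exists_nat_bool_injection hne.closure
  have hpre := (hcount.mono hrange).preimage hinj
  rw [preimage_range] at hpre
  exact not_countable_nat_bool (countable_univ_iff.mp hpre)

structure IsAntitoneCover {ι : Type*} [LinearOrder ι] (s : ι → Set ℝ) : Prop where
  subset_Icc : ∀ i, s i ⊆ Icc 0 1
  exists_mem : ∀ x ∈ Icc (0 : ℝ) 1, ∃ i, x ∈ s i
  isClosed : ∀ i, IsClosed (s i)
  le_of_lt : ∀ {i j x y}, x ∈ s i → y ∈ s j → x < y → j ≤ i

namespace IsAntitoneCover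

variable {ι : Type*} [LinearOrder ι] {s : ι → Set ℝ}

theorem eq_of_lt {i j : ι} {x y : ℝ} (hs : IsAntitoneCover s) (hxy : x < y) (hxi : x ∈ s i)
    (hyi : y ∈ s i) (hxj : x ∈ s j) (hyj : y ∈ s j) : i = j :=
  le_antisymm (hs.le_of_lt hxj hyi hxy) (hs.le_of_lt hxi hyj hxy)

theorem ordConnected (hs : IsAntitoneCover s) (i : ι) : (s i).OrdConnected := by
  refine ⟨fun x hx y hy t ht => ?_⟩
  obtain ⟨j, hj⟩ :=
    hs.exists_mem t ⟨(hs.subset_Icc i hx).1.trans ht.1, ht.2.trans (hs.subset_Icc i hy).2⟩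
  rcases ht.1.eq_or_lt with rfl | hxt
  · exact hx
  rcases ht.2.eq_or_lt with rfl | hty
  · exact hy
  rwa [← le_antisymm (hs.le_of_lt hx hj hxt) (hs.le_of_lt hj hy hty)]

theorem disjoint_interior (hs : IsAntitoneCover s) {i j : ι} (hij : i ≠ j) :
    Disjoint (interior (s i)) (interior (s j)) := by
  rw [Set.disjoint_left]
  intro x hxi hxj
  have hnhds : ∀ᶠ y in 𝓝 x, y ∈ s i ∧ y ∈ s j :=
    Filter.Eventually.and (mem_interior_iff_mem_nhds.mp hxi) (mem_interior_iff_mem_nhds.mp hxj)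
  obtain ⟨y, hxy, hyi, hyj⟩ := hnhds.exists_gt
  exact hij (hs.eq_of_lt hxy (interior_subset hxi) hyi (interior_subset hxj) hyj)

theorem exists_Icc_subset (hs : IsAntitoneCover s) {a b : ℝ} (hab : a < b)
    (hreg : Ioo a b ⊆ ⋃ i, interior (s i)) : ∃ i, Icc a b ⊆ s i := by
  have hmid : (a + b) / 2 ∈ Ioo a b := ⟨left_lt_add_div_two.mpr hab, add_div_two_lt_right.mpr hab⟩
  obtain ⟨i, hi⟩ := mem_iUnion.mp (hreg hmid)
  refine ⟨i, ?_⟩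
  have hsub : Ioo a b ⊆ interior (s i) := by
    refine isPreconnected_Ioo.subset_left_of_subset_union (v := ⋃ (j) (_ : j ≠ i), interior (s j))
      isOpen_interior (isOpen_biUnion fun j _ => isOpen_interior) ?_ ?_ ⟨_, hmid, hi⟩
    · exact disjoint_iUnion_right.mpr fun j => disjoint_iUnion_right.mpr fun hj =>
        hs.disjoint_interior (Ne.symm hj)
    · intro t ht
      obtain ⟨j, hj⟩ := mem_iUnion.mp (hreg ht)
      by_cases hji : j = i
      · exact Or.inl (hji ▸ hj)
      · exact Or.inr (mem_iUnion₂.mpr ⟨j, hji, hj⟩)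
  rw [← closure_Ioo hab.ne]
  exact closure_minimal (hsub.trans interior_subset) (hs.isClosed i)

def kinks (s : ι → Set ℝ) : Set ℝ := Ioo 0 1 \ ⋃ i, interior (s i)

theorem countable_closure_kinks (hs : IsAntitoneCover s)
    (hcount : {i | (s i).Nonempty}.Countable) : (closure (kinks s)).Countable := by
  have hclosed : IsClosed (Icc (0 : ℝ) 1 \ ⋃ i, interior (s i)) :=
    isClosed_Icc.sdiff (isOpen_iUnion fun _ => isOpen_interior)
  refine (hcount.biUnion fun i _ => (countable_singleton (sSup (s i))).insert (sInf (s i))).mono ?_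
  refine (closure_minimal (sdiff_subset_sdiff_left Ioo_subset_Icc_self) hclosed).trans ?_
  rintro x ⟨hx, hreg⟩
  obtain ⟨i, hi⟩ := hs.exists_mem x hx
  refine mem_iUnion₂.mpr ⟨i, ⟨x, hi⟩, ?_⟩
  exact (hs.ordConnected i).eq_csInf_or_eq_csSup_of_notMem_interior
    (bddBelow_Icc.mono (hs.subset_Icc i)) (bddAbove_Icc.mono (hs.subset_Icc i)) hi
    fun h => hreg (mem_iUnion.mpr ⟨i, h⟩)

theorem exists_adjacent_Icc_subset (hs : IsAntitoneCover s)
    (hcount : {i | (s i).Nonempty}.Countable) (hne : ∀ i, ¬ Icc 0 1 ⊆ s i) :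
    ∃ y ε, 0 < ε ∧ ∃ i j, i ≠ j ∧ Icc (y - ε) y ⊆ s i ∧ Icc y (y + ε) ⊆ s j := by
  have hkinks : (kinks s).Nonempty := by
    by_contra! h
    obtain ⟨i, hi⟩ := hs.exists_Icc_subset one_pos (sdiff_eq_empty.mp h)
    exact hne i hi
  obtain ⟨y, ⟨hy, hyreg⟩, hisol⟩ :=
    exists_not_accPt_of_countable_closure hkinks (hs.countable_closure_kinks hcount)
  rw [accPt_iff_nhds] at hisol
  push Not at hisol
  obtain ⟨U, hU, hUkinks⟩ := hisol
  obtain ⟨ε, hε, hball⟩ := Metric.mem_nhds_iff.mp (inter_mem hU (isOpen_Ioo.mem_nhds hy))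
  rw [Real.ball_eq_Ioo] at hball
  have hreg : ∀ z ∈ Ioo (y - ε) (y + ε), z ≠ y → z ∈ ⋃ i, interior (s i) := fun z hz hzy => by
    by_contra hz'
    exact hzy (hUkinks z ⟨(hball hz).1, (hball hz).2, hz'⟩)
  obtain ⟨i, hi⟩ := hs.exists_Icc_subset (sub_lt_self y hε)
    fun z hz => hreg z (Ioo_subset_Ioo_right (by linarith) hz) hz.2.ne
  obtain ⟨j, hj⟩ := hs.exists_Icc_subset (lt_add_of_pos_right y hε)
    fun z hz => hreg z (Ioo_subset_Ioo_left (by linarith) hz) hz.1.ne'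
  refine ⟨y, ε, hε, i, j, ?_, hi, hj⟩
  rintro rfl
  have hIcc : Icc (y - ε) (y + ε) ⊆ s i := by
    rw [← Icc_union_Icc_eq_Icc (sub_le_self y hε.le) (le_add_of_nonneg_right hε.le)]
    exact union_subset hi hj
  exact hyreg (mem_iUnion.mpr ⟨i, interior_mono hIcc (by
    rw [interior_Icc]; exact ⟨sub_lt_self y hε, lt_add_of_pos_right y hε⟩)⟩)

end IsAntitoneCover

def branchOrbit (ψ : Fin 2 → ℝ → ℝ) : (ℕ → Fin 2) → ℝ → ℕ → ℝ
  | _, x, 0 => x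
  | w, x, k + 1 => branchOrbit ψ (fun n => w (n + 1)) (ψ (w 0) x) k

def IsBranchInvariant (ψ : Fin 2 → ℝ → ℝ) (opt : (ℕ → Fin 2) → Set ℝ) : Prop :=
  ∀ w, ∀ x ∈ opt w, ψ (w 0) x ∈ opt fun n => w (n + 1)

def IsTurningPoint (opt : (ℕ → Fin 2) → Set ℝ) (c : ℝ) : Prop :=
  (∀ w, ∀ x ∈ opt w, x < c → w 0 = 1) ∧ ∀ w, ∀ x ∈ opt w, c < x → w 0 = 0

section Symbolic

variable {opt : (ℕ → Fin 2) → Set ℝ} {ψ : Fin 2 → ℝ → ℝ} {c : ℝ}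

theorem IsBranchInvariant.branchOrbit_mem (hψ : IsBranchInvariant ψ opt) {w : ℕ → Fin 2} {x : ℝ}
    (hx : x ∈ opt w) (k : ℕ) : branchOrbit ψ w x k ∈ opt fun n => w (n + k) := by
  induction k generalizing w x with
  | zero => exact hx
  | succ k ih => exact ih (hψ w x hx)

theorem IsBranchInvariant.branchOrbit_lt (hψ : IsBranchInvariant ψ opt)
    (hsub : ∀ w, opt w ⊆ Icc 0 1) (hmono : ∀ i, StrictMonoOn (ψ i) (Icc 0 1))
    {w : ℕ → Fin 2} {x y : ℝ} (hx : x ∈ opt w) (hy : y ∈ opt w) (hxy : x < y) (k : ℕ) :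
    branchOrbit ψ w x k < branchOrbit ψ w y k := by
  induction k generalizing w x y with
  | zero => exact hxy
  | succ k ih => exact ih (hψ w x hx) (hψ w y hy) (hmono (w 0) (hsub w hx) (hsub w hy) hxy)

theorem IsTurningPoint.eq_of_apply_zero_ne (hc : IsTurningPoint opt c) {w w' : ℕ → Fin 2} {x : ℝ}
    (hw : x ∈ opt w) (hw' : x ∈ opt w') (h : w 0 ≠ w' 0) : x = c := by
  rcases lt_trichotomy x c with hxc | hxc | hxc
  · exact absurd ((hc.1 w x hw hxc).trans (hc.1 w' x hw' hxc).symm) h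
  · exact hxc
  · exact absurd ((hc.2 w x hw hxc).trans (hc.2 w' x hw' hxc).symm) h

theorem exists_branchOrbit_eq (hψ : IsBranchInvariant ψ opt) (hc : IsTurningPoint opt c)
    {w w' : ℕ → Fin 2} {x : ℝ} (hw : x ∈ opt w) (hw' : x ∈ opt w') (hne : w ≠ w') :
    ∃ k, branchOrbit ψ w x k = c := by
  obtain ⟨n, hn⟩ := Function.ne_iff.mp hne
  clear hne
  induction n generalizing w w' x with
  | zero => exact ⟨0, hc.eq_of_apply_zero_ne hw hw' hn⟩
  | succ n ih =>
    by_cases h0 : w 0 = w' 0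
    · obtain ⟨k, hk⟩ := ih (hψ w x hw) (h0 ▸ hψ w' x hw') hn
      exact ⟨k + 1, hk⟩
    · exact ⟨0, hc.eq_of_apply_zero_ne hw hw' h0⟩

theorem apply_zero_le_of_lt (hs : IsAntitoneCover fun w : Lex (ℕ → Fin 2) => opt (ofLex w))
    {v w : ℕ → Fin 2} {x y : ℝ} (hx : x ∈ opt w) (hy : y ∈ opt v) (hxy : x < y) : v 0 ≤ w 0 := by
  by_contra! h
  exact (hs.le_of_lt (i := toLex w) (j := toLex v) hx hy hxy).not_gt
    ⟨0, fun m hm => absurd hm m.not_lt_zero, h⟩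

theorem isTurningPoint_of_eq_sSup
    (hs : IsAntitoneCover fun w : Lex (ℕ → Fin 2) => opt (ofLex w))
    (hc : c = sSup {x | x ∈ Icc 0 1 ∧ ∀ w, x ∈ opt w → w 0 = 1}) (hc0 : 0 < c) :
    IsTurningPoint opt c := by
  have hbdd : BddAbove {x | x ∈ Icc (0 : ℝ) 1 ∧ ∀ w, x ∈ opt w → w 0 = 1} :=
    ⟨1, fun x hx => hx.1.2⟩
  refine ⟨fun w x hx hxc => ?_, fun w y hy hcy => ?_⟩
  · have hne : {x | x ∈ Icc (0 : ℝ) 1 ∧ ∀ w, x ∈ opt w → w 0 = 1}.Nonempty := by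
      by_contra! h
      rw [h, Real.sSup_empty] at hc
      exact hc0.ne' hc
    obtain ⟨x', ⟨hx'I, hx'⟩, hxx'⟩ := exists_lt_of_lt_csSup hne (hc ▸ hxc)
    obtain ⟨v, hv⟩ := hs.exists_mem x' hx'I
    have := apply_zero_le_of_lt hs hx hv hxx'
    rw [hx' _ hv] at this
    omega
  · by_contra h
    have hw : w 0 = 1 := by omega
    have hmid : (c + y) / 2 ∈ {x | x ∈ Icc (0 : ℝ) 1 ∧ ∀ w, x ∈ opt w → w 0 = 1} := by
      refine ⟨⟨by linarith, by linarith [(hs.subset_Icc (toLex w) hy).2]⟩, fun v hv => ?_⟩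
      have := apply_zero_le_of_lt hs hv hy (by linarith)
      omega
    have := le_csSup hbdd hmid
    rw [← hc] at this
    linarith

theorem exists_Ioc_subset_of_mem (hs : IsAntitoneCover fun w : Lex (ℕ → Fin 2) => opt (ofLex w))
    (hψ : IsBranchInvariant ψ opt) (hmono : ∀ i, StrictMonoOn (ψ i) (Icc 0 1))
    (hc : IsTurningPoint opt c) {w w' : ℕ → Fin 2} {x y : ℝ} (hx : x ∈ opt w) (hy : y ∈ opt w)
    (hxy : x < y) (hy' : y ∈ opt w') (hne : w ≠ w') : ∃ δ > 0, ∃ v, Ioc (c - δ) c ⊆ opt v := by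
  obtain ⟨k, hk⟩ := exists_branchOrbit_eq hψ hc hy hy' hne
  have hlt := hψ.branchOrbit_lt (fun w => hs.subset_Icc (toLex w)) hmono hx hy hxy k
  rw [hk] at hlt
  refine ⟨c - branchOrbit ψ w x k, sub_pos.mpr hlt, fun n => w (n + k), ?_⟩
  rw [sub_sub_cancel]
  exact Ioc_subset_Icc_self.trans ((hs.ordConnected (toLex _)).out
    (hψ.branchOrbit_mem hx k) (hk ▸ hψ.branchOrbit_mem hy k))

theorem exists_Ico_subset_of_mem (hs : IsAntitoneCover fun w : Lex (ℕ → Fin 2) => opt (ofLex w))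
    (hψ : IsBranchInvariant ψ opt) (hmono : ∀ i, StrictMonoOn (ψ i) (Icc 0 1))
    (hc : IsTurningPoint opt c) {w w' : ℕ → Fin 2} {x y : ℝ} (hx : x ∈ opt w) (hy : y ∈ opt w)
    (hxy : x < y) (hx' : x ∈ opt w') (hne : w ≠ w') : ∃ δ > 0, ∃ v, Ico c (c + δ) ⊆ opt v := by
  obtain ⟨k, hk⟩ := exists_branchOrbit_eq hψ hc hx hx' hne
  have hlt := hψ.branchOrbit_lt (fun w => hs.subset_Icc (toLex w)) hmono hx hy hxy k
  rw [hk] at hlt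
  refine ⟨branchOrbit ψ w y k - c, sub_pos.mpr hlt, fun n => w (n + k), ?_⟩
  rw [add_sub_cancel]
  exact Ico_subset_Icc_self.trans ((hs.ordConnected (toLex _)).out
    (hk ▸ hψ.branchOrbit_mem hx k) (hψ.branchOrbit_mem hy k))

theorem exists_Ioc_Ico_subset_of_isTurningPoint
    (hs : IsAntitoneCover fun w : Lex (ℕ → Fin 2) => opt (ofLex w))
    (hcount : {w | (opt w).Nonempty}.Countable) (hψ : IsBranchInvariant ψ opt)
    (hmono : ∀ i, StrictMonoOn (ψ i) (Icc 0 1)) (hc : IsTurningPoint opt c) (hc0 : 0 < c)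
    (hc1 : c < 1) :
    ∃ δ > 0, ∃ wminus wplus, Ioc (c - δ) c ⊆ opt wminus ∧ Ico c (c + δ) ⊆ opt wplus := by
  have hne : ∀ w : Lex (ℕ → Fin 2), ¬ Icc 0 1 ⊆ opt (ofLex w) := fun w hw => by
    have h1 := hc.1 _ 0 (hw ⟨le_rfl, zero_le_one⟩) hc0
    rw [hc.2 _ 1 (hw ⟨zero_le_one, le_rfl⟩) hc1] at h1
    exact absurd h1 (by decide)
  obtain ⟨y, ε, hε, i, j, hij, hi, hj⟩ :=
    hs.exists_adjacent_Icc_subset (hcount.preimage ofLex.injective) hne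
  have hyi : y ∈ opt (ofLex i) := hi ⟨sub_le_self y hε.le, le_rfl⟩
  have hyj : y ∈ opt (ofLex j) := hj ⟨le_rfl, le_add_of_nonneg_right hε.le⟩
  obtain ⟨δ₁, hδ₁, wminus, hminus⟩ := exists_Ioc_subset_of_mem hs hψ hmono hc
    (hi ⟨le_rfl, sub_le_self y hε.le⟩) hyi (sub_lt_self y hε) hyj hij
  obtain ⟨δ₂, hδ₂, wplus, hplus⟩ := exists_Ico_subset_of_mem hs hψ hmono hc
    hyj (hj ⟨le_add_of_nonneg_right hε.le, le_rfl⟩) (lt_add_of_pos_right y hε) hyi hij.symm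
  refine ⟨min δ₁ δ₂, lt_min hδ₁ hδ₂, wminus, wplus, ?_, ?_⟩
  · exact (Ioc_subset_Ioc_left (sub_le_sub_left (min_le_left δ₁ δ₂) c)).trans hminus
  · exact (Ico_subset_Ico_right (add_le_add_right (min_le_right δ₁ δ₂) c)).trans hplus

end Symbolic

noncomputable def optimalityGap (W : (ℕ → Fin 2) → ℝ → ℝ) (V : ℝ → ℝ) (Vstar : (ℕ → Fin 2) → ℝ)
    (Istar : (ℕ → Fin 2) → ℝ≥0∞) (w : ℕ → Fin 2) (x : ℝ) : EReal :=
  ((Vstar w + V x - W w x : ℝ) : EReal) + (Istar w : EReal)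

section InvolutionKernel

variable {W : (ℕ → Fin 2) → ℝ → ℝ} {V : ℝ → ℝ} {Vstar : (ℕ → Fin 2) → ℝ}
  {Istar : (ℕ → Fin 2) → ℝ≥0∞} {w w' : ℕ → Fin 2} {x : ℝ}

theorem ne_top_of_optimalityGap_eq_zero (h : optimalityGap W V Vstar Istar w x = 0) :
    Istar w ≠ ⊤ := by
  intro htop
  rw [optimalityGap, htop, EReal.coe_ennreal_top, EReal.coe_add_top] at h
  exact EReal.top_ne_zero h

theorem optimalityGap_eq_coe (hfin : Istar w ≠ ⊤) :
    optimalityGap W V Vstar Istar w x =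
      ((Vstar w + V x - W w x + (Istar w).toReal : ℝ) : EReal) := by
  rw [optimalityGap, EReal.coe_add, EReal.coe_ennreal_toReal hfin]

theorem real_eq_zero_of_optimalityGap_eq_zero (h : optimalityGap W V Vstar Istar w x = 0) :
    Vstar w + V x - W w x + (Istar w).toReal = 0 := by
  rwa [optimalityGap_eq_coe (ne_top_of_optimalityGap_eq_zero h), EReal.coe_eq_zero] at h

theorem real_nonneg_of_optimalityGap_nonneg (h : 0 ≤ optimalityGap W V Vstar Istar w x)
    (hfin : Istar w ≠ ⊤) : 0 ≤ Vstar w + V x - W w x + (Istar w).toReal := by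
  rwa [optimalityGap_eq_coe hfin, EReal.coe_nonneg] at h

theorem cost_le_of_optimalityGap_eq_zero
    (hbnonneg : ∀ w, ∀ x ∈ Icc (0 : ℝ) 1, 0 ≤ optimalityGap W V Vstar Istar w x)
    (hx : x ∈ Icc 0 1) (h : optimalityGap W V Vstar Istar w x = 0) (hfin' : Istar w' ≠ ⊤) :
    Vstar w - W w x + (Istar w).toReal ≤ Vstar w' - W w' x + (Istar w').toReal := by
  linarith [real_eq_zero_of_optimalityGap_eq_zero h,
    real_nonneg_of_optimalityGap_nonneg (hbnonneg w' x hx) hfin']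

/-- `V x` cancels from the comparison of two gaps at `x`, so optimality is a family of closed
conditions on `x` even though `V` is not known to be continuous. -/
theorem optimalityGap_eq_zero_iff
    (hbnonneg : ∀ w, ∀ x ∈ Icc (0 : ℝ) 1, 0 ≤ optimalityGap W V Vstar Istar w x)
    (hopt : ∀ x ∈ Icc (0 : ℝ) 1, ∃ w, optimalityGap W V Vstar Istar w x = 0) (hx : x ∈ Icc 0 1) :
    optimalityGap W V Vstar Istar w x = 0 ↔ Istar w ≠ ⊤ ∧ ∀ w' : {w' // Istar w' ≠ ⊤},
      Vstar w - W w x + (Istar w).toReal ≤ Vstar w' - W w' x + (Istar w').toReal := by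
  refine ⟨fun h => ⟨ne_top_of_optimalityGap_eq_zero h,
    fun w' => cost_le_of_optimalityGap_eq_zero hbnonneg hx h w'.2⟩, fun ⟨hfin, hle⟩ => ?_⟩
  obtain ⟨w'', h''⟩ := hopt x hx
  have hle'' := hle ⟨w'', ne_top_of_optimalityGap_eq_zero h''⟩
  rw [optimalityGap_eq_coe hfin, EReal.coe_eq_zero]
  linarith [real_eq_zero_of_optimalityGap_eq_zero h'',
    real_nonneg_of_optimalityGap_nonneg (hbnonneg w x hx) hfin]

theorem isClosed_setOf_optimalityGap_eq_zero
    (hWcont : Continuous fun p : (ℕ → Fin 2) × ℝ => W p.1 p.2)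
    (hbnonneg : ∀ w, ∀ x ∈ Icc (0 : ℝ) 1, 0 ≤ optimalityGap W V Vstar Istar w x)
    (hopt : ∀ x ∈ Icc (0 : ℝ) 1, ∃ w, optimalityGap W V Vstar Istar w x = 0) (w : ℕ → Fin 2) :
    IsClosed {x | x ∈ Icc 0 1 ∧ optimalityGap W V Vstar Istar w x = 0} := by
  have hcont (w : ℕ → Fin 2) : Continuous fun x => Vstar w - W w x + (Istar w).toReal :=
    (continuous_const.sub (hWcont.comp (continuous_const.prodMk continuous_id))).add
      continuous_const
  have heq : {x | x ∈ Icc 0 1 ∧ optimalityGap W V Vstar Istar w x = 0} =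
      Icc 0 1 ∩ ({_x | Istar w ≠ ⊤} ∩ ⋂ w' : {w' // Istar w' ≠ ⊤},
        {x | Vstar w - W w x + (Istar w).toReal ≤ Vstar w' - W w' x + (Istar w').toReal}) := by
    ext x
    simp only [mem_ofPred_eq, mem_inter_iff, mem_iInter]
    exact and_congr_right (optimalityGap_eq_zero_iff hbnonneg hopt)
  rw [heq]
  exact isClosed_Icc.inter
    (isClosed_const.inter (isClosed_iInter fun w' => isClosed_le (hcont w) (hcont w')))

theorem toLex_le_of_twist
    (hbnonneg : ∀ w, ∀ x ∈ Icc (0 : ℝ) 1, 0 ≤ optimalityGap W V Vstar Istar w x)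
    (lexLt : (ℕ → Fin 2) → (ℕ → Fin 2) → Prop)
    (hlex : ∀ a a' : ℕ → Fin 2,
      lexLt a a' ↔ ∃ n : ℕ, (∀ m, m < n → a m = a' m) ∧ a n < a' n)
    (htwist : ∀ a a' : ℕ → Fin 2, ∀ x x' : ℝ, x ∈ Icc (0 : ℝ) 1 → x' ∈ Icc (0 : ℝ) 1 →
      lexLt a a' → x < x' → W a x + W a' x' < W a x' + W a' x) {x' : ℝ}
    (hx : x ∈ Icc 0 1 ∧ optimalityGap W V Vstar Istar w x = 0)
    (hx' : x' ∈ Icc 0 1 ∧ optimalityGap W V Vstar Istar w' x' = 0) (hxx' : x < x') :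
    toLex w' ≤ toLex w := by
  by_contra! hlt
  have := htwist w w' x x' hx.1 hx'.1 ((hlex w w').mpr hlt) hxx'
  linarith [cost_le_of_optimalityGap_eq_zero hbnonneg hx.1 hx.2
      (ne_top_of_optimalityGap_eq_zero hx'.2),
    cost_le_of_optimalityGap_eq_zero hbnonneg hx'.1 hx'.2 (ne_top_of_optimalityGap_eq_zero hx.2)]

theorem isAntitoneCover_of_twist (hWcont : Continuous fun p : (ℕ → Fin 2) × ℝ => W p.1 p.2)
    (hbnonneg : ∀ w, ∀ x ∈ Icc (0 : ℝ) 1, 0 ≤ optimalityGap W V Vstar Istar w x)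
    (hopt : ∀ x ∈ Icc (0 : ℝ) 1, ∃ w, optimalityGap W V Vstar Istar w x = 0)
    (lexLt : (ℕ → Fin 2) → (ℕ → Fin 2) → Prop)
    (hlex : ∀ a a' : ℕ → Fin 2,
      lexLt a a' ↔ ∃ n : ℕ, (∀ m, m < n → a m = a' m) ∧ a n < a' n)
    (htwist : ∀ a a' : ℕ → Fin 2, ∀ x x' : ℝ, x ∈ Icc (0 : ℝ) 1 → x' ∈ Icc (0 : ℝ) 1 →
      lexLt a a' → x < x' → W a x + W a' x' < W a x' + W a' x) :
    IsAntitoneCover fun w : Lex (ℕ → Fin 2) =>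
      {x | x ∈ Icc 0 1 ∧ optimalityGap W V Vstar Istar (ofLex w) x = 0} where
  subset_Icc _ _ hx := hx.1
  exists_mem x hx := (hopt x hx).imp fun _ hw => ⟨hx, hw⟩
  isClosed w := isClosed_setOf_optimalityGap_eq_zero hWcont hbnonneg hopt (ofLex w)
  le_of_lt hx hy hxy := toLex_le_of_twist hbnonneg lexLt hlex htwist hx hy hxy

theorem Istar_eq_add {Rstar : (ℕ → Fin 2) → ℝ}
    (hIstar : ∀ w : ℕ → Fin 2, Istar w = ∑' n : ℕ, ENNReal.ofReal (Rstar (fun m => w (m + n))))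
    (w : ℕ → Fin 2) : Istar w = ENNReal.ofReal (Rstar w) + Istar fun n => w (n + 1) := by
  rw [hIstar w, hIstar, tsum_eq_zero_add' ENNReal.summable]
  rfl

theorem isBranchInvariant_of_involutionKernel {f : ℝ → ℝ} {ψ : Fin 2 → ℝ → ℝ} {A : ℝ → ℝ}
    {Astar : (ℕ → Fin 2) → ℝ} {R : ℝ → ℝ} {Rstar : (ℕ → Fin 2) → ℝ}
    (hψI : ∀ i, ∀ x ∈ Icc (0 : ℝ) 1, ψ i x ∈ Icc (0 : ℝ) 1)
    (hfψ : ∀ i, ∀ x ∈ Icc (0 : ℝ) 1, f (ψ i x) = x)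
    (hW : ∀ w : ℕ → Fin 2, ∀ x ∈ Icc (0 : ℝ) 1,
      Astar w = A (ψ (w 0) x) + W (fun n => w (n + 1)) (ψ (w 0) x) - W w x)
    (hR : ∀ x, R x = V (f x) - V x - A x) (hRnonneg : ∀ x ∈ Icc (0 : ℝ) 1, 0 ≤ R x)
    (hRstar : ∀ w : ℕ → Fin 2, Rstar w = Vstar (fun n => w (n + 1)) - Vstar w - Astar w)
    (hRstarnonneg : ∀ w, 0 ≤ Rstar w)
    (hIstar : ∀ w : ℕ → Fin 2, Istar w = ∑' n : ℕ, ENNReal.ofReal (Rstar (fun m => w (m + n))))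
    (hbnonneg : ∀ w, ∀ x ∈ Icc (0 : ℝ) 1, 0 ≤ optimalityGap W V Vstar Istar w x) :
    IsBranchInvariant ψ fun w => {x | x ∈ Icc 0 1 ∧ optimalityGap W V Vstar Istar w x = 0} := by
  intro w x hx
  have hy := hψI (w 0) x hx.1
  have hsplit := Istar_eq_add hIstar w
  have hfin := ne_top_of_optimalityGap_eq_zero hx.2
  have hfin' : Istar (fun n => w (n + 1)) ≠ ⊤ := fun h => hfin (by rw [hsplit, h, add_top])
  have htoReal : (Istar w).toReal = Rstar w + (Istar fun n => w (n + 1)).toReal := by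
    rw [hsplit, ENNReal.toReal_add ENNReal.ofReal_ne_top hfin',
      ENNReal.toReal_ofReal (hRstarnonneg w)]
  have hRy : R (ψ (w 0) x) = V x - V (ψ (w 0) x) - A (ψ (w 0) x) := by rw [hR, hfψ _ _ hx.1]
  -- b(σw, ψ_{w₀} x) = b(w, x) - R(ψ_{w₀} x), and both b and R are nonnegative
  refine ⟨hy, ?_⟩
  rw [optimalityGap_eq_coe hfin', EReal.coe_eq_zero]
  linarith [real_eq_zero_of_optimalityGap_eq_zero hx.2,
    real_nonneg_of_optimalityGap_nonneg (hbnonneg _ _ hy) hfin', hRnonneg _ hy, hW w x hx.1,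
    hRstar w]

end InvolutionKernel

theorem stmt16_general
    -- the expanding onto map f of degree d and its inverse branches ψ_i
    (f : ℝ → ℝ) (ψ : Fin 2 → ℝ → ℝ)
    (hψI : ∀ i, ∀ x ∈ Icc (0:ℝ) 1, ψ i x ∈ Icc (0:ℝ) 1)
    (hfψ : ∀ i, ∀ x ∈ Icc (0:ℝ) 1, f (ψ i x) = x)
    -- the Hölder potential A, with m(A) = 0
    (A : ℝ → ℝ)
    -- a continuous involution kernel W for A, with Hölder dual potential A*, m(A*) = 0
    (W : (ℕ → Fin 2) → ℝ → ℝ)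
    (hWcont : Continuous (fun p : (ℕ → Fin 2) × ℝ => W p.1 p.2))
    (Astar : (ℕ → Fin 2) → ℝ)
    (hW : ∀ w : ℕ → Fin 2, ∀ x ∈ Icc (0:ℝ) 1,
      Astar w = A (ψ (w 0) x) + W (fun n => w (n + 1)) (ψ (w 0) x) - W w x)
    -- calibrated subactions V for A and V* for A*
    (V : ℝ → ℝ)
    (Vstar : (ℕ → Fin 2) → ℝ)
    -- R, R*, the deviation function I*, and the function b
    (R : ℝ → ℝ) (hR : ∀ x, R x = V (f x) - V x - A x)
    (hRnonneg : ∀ x ∈ Icc (0:ℝ) 1, 0 ≤ R x)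
    (Rstar : (ℕ → Fin 2) → ℝ)
    (hRstar : ∀ w : ℕ → Fin 2, Rstar w = Vstar (fun n => w (n + 1)) - Vstar w - Astar w)
    (hRstarnonneg : ∀ w, 0 ≤ Rstar w)
    (Istar : (ℕ → Fin 2) → ℝ≥0∞)
    (hIstar : ∀ w : ℕ → Fin 2, Istar w = ∑' n : ℕ, ENNReal.ofReal (Rstar (fun m => w (m + n))))
    (b : (ℕ → Fin 2) → ℝ → EReal)
    (hb : ∀ w x, b w x = ((Vstar w + V x - W w x : ℝ) : EReal) + (Istar w : EReal))
    -- V(x) = sup_w (W(w,x) − V*(w) − I*(w)), so that b ≥ 0, and optimal w's exist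
    (hbnonneg : ∀ w : ℕ → Fin 2, ∀ x ∈ Icc (0:ℝ) 1, 0 ≤ b w x)
    (hopt : ∀ x ∈ Icc (0:ℝ) 1, ∃ w : ℕ → Fin 2, b w x = 0)
    -- f preserves orientation: the inverse branches are increasing, ψ₀ to the left of ψ₁
    (hψmono : ∀ i, StrictMonoOn (ψ i) (Icc (0:ℝ) 1))
    -- the strict lexicographic order on Σ = {0,1}^ℕ and the twist condition for W
    (lexLt : (ℕ → Fin 2) → (ℕ → Fin 2) → Prop)
    (hlex : ∀ a a' : ℕ → Fin 2,
      lexLt a a' ↔ ∃ n : ℕ, (∀ m, m < n → a m = a' m) ∧ a n < a' n)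
    (htwist : ∀ a a' : ℕ → Fin 2, ∀ x x' : ℝ, x ∈ Icc (0:ℝ) 1 → x' ∈ Icc (0:ℝ) 1 →
      lexLt a a' → x < x' → W a x + W a' x' < W a x' + W a' x)
    -- the turning point c
    (c : ℝ)
    (hcdef : c = sSup {x | x ∈ Icc (0:ℝ) 1 ∧
      ∀ w : ℕ → Fin 2, b w x = 0 → w 0 = 1})
    (hc01 : 0 < c ∧ c < 1)
    -- the countable condition
    (hcount : Set.Countable {w : ℕ → Fin 2 | ∃ x ∈ Icc (0:ℝ) 1, b w x = 0}) :
    -- conclusion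
    ∃ δ > (0:ℝ), ∃ wminus wplus : ℕ → Fin 2,
      (∀ x ∈ Ioc (c - δ) c, b wminus x = 0) ∧
      (∀ x ∈ Ico c (c + δ), b wplus x = 0) := by
  obtain rfl : b = optimalityGap W V Vstar Istar := funext₂ hb
  obtain ⟨hc0, hc1⟩ := hc01
  have hs := isAntitoneCover_of_twist hWcont hbnonneg hopt lexLt hlex htwist
  have hψ := isBranchInvariant_of_involutionKernel hψI hfψ hW hR hRnonneg hRstar hRstarnonneg
    hIstar hbnonneg
  have hc : c = sSup {x | x ∈ Icc 0 1 ∧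
      ∀ w, x ∈ {x | x ∈ Icc 0 1 ∧ optimalityGap W V Vstar Istar w x = 0} → w 0 = 1} := by
    rw [hcdef]
    congr 1
    ext x
    exact and_congr_right fun hx =>
      forall_congr' fun w => ⟨fun h hw => h hw.2, fun h hw => h ⟨hx, hw⟩⟩
  obtain ⟨δ, hδ, wminus, wplus, hminus, hplus⟩ := exists_Ioc_Ico_subset_of_isTurningPoint hs hcount
    hψ hψmono (isTurningPoint_of_eq_sSup hs hc hc0) hc0 hc1
  exact ⟨δ, hδ, wminus, wplus, fun x hx => (hminus hx).2, fun x hx => (hplus hx).2⟩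

/-- Lemma 7.2 of the paper.
If `W` is twist and `A` satisfies the countable condition (the set of `w ∈ Σ` optimal
for some `x ∈ I` is countable), then the turning point `c` is isolated from its forward
orbit on both sides: there are `δ > 0` and `w⁻, w⁺ ∈ Σ` with `b(w⁻,x) = 0` for all
`x ∈ (c−δ, c]` and `b(w⁺,x) = 0` for all `x ∈ [c, c+δ)`. -/
theorem stmt16
    -- the expanding onto map f of degree d and its inverse branches ψ_i
    (f : ℝ → ℝ) (ψ : Fin 2 → ℝ → ℝ)
    (hψI : ∀ i, ∀ x ∈ Icc (0:ℝ) 1, ψ i x ∈ Icc (0:ℝ) 1)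
    (hfψ : ∀ i, ∀ x ∈ Icc (0:ℝ) 1, f (ψ i x) = x)
    -- the metric d(ω,γ) = 2^{-n} on Σ, n the first position at which ω and γ disagree
    (dSig : (ℕ → Fin 2) → (ℕ → Fin 2) → ℝ)
    (hdSigeq : ∀ ω, dSig ω ω = 0)
    (hdSig : ∀ ω γ : ℕ → Fin 2, ∀ n : ℕ, (∀ m, m < n → ω m = γ m) → ω n ≠ γ n →
      dSig ω γ = (2:ℝ)⁻¹ ^ n)
    -- the Hölder potential A, with m(A) = 0
    (A : ℝ → ℝ) (hA : ∃ (C r : ℝ≥0), 0 < r ∧ HolderWith C r A)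
    (hmA : (∀ ν : MeasureTheory.Measure ℝ, MeasureTheory.IsProbabilityMeasure ν →
        ν (Icc (0:ℝ) 1) = 1 → (∀ s : Set ℝ, MeasurableSet s → ν (f ⁻¹' s) = ν s) →
        ∫ x, A x ∂ν ≤ 0) ∧
      ∃ ν : MeasureTheory.Measure ℝ, MeasureTheory.IsProbabilityMeasure ν ∧
        ν (Icc (0:ℝ) 1) = 1 ∧ (∀ s : Set ℝ, MeasurableSet s → ν (f ⁻¹' s) = ν s) ∧
        ∫ x, A x ∂ν = 0)
    -- a continuous involution kernel W for A, with Hölder dual potential A*, m(A*) = 0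
    (W : (ℕ → Fin 2) → ℝ → ℝ)
    (hWcont : Continuous (fun p : (ℕ → Fin 2) × ℝ => W p.1 p.2))
    (Astar : (ℕ → Fin 2) → ℝ)
    (hAstarHolder : ∃ C θ : ℝ, 0 < C ∧ 0 < θ ∧
      ∀ w w' : ℕ → Fin 2, |Astar w - Astar w'| ≤ C * (dSig w w') ^ θ)
    (hW : ∀ w : ℕ → Fin 2, ∀ x ∈ Icc (0:ℝ) 1,
      Astar w = A (ψ (w 0) x) + W (fun n => w (n + 1)) (ψ (w 0) x) - W w x)
    (hmAstar : (∀ ν : MeasureTheory.Measure (ℕ → Fin 2),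
        MeasureTheory.IsProbabilityMeasure ν →
        (∀ s : Set (ℕ → Fin 2), MeasurableSet s →
          ν ((fun (w : ℕ → Fin 2) (n : ℕ) => w (n + 1)) ⁻¹' s) = ν s) →
        ∫ w, Astar w ∂ν ≤ 0) ∧
      ∃ ν : MeasureTheory.Measure (ℕ → Fin 2), MeasureTheory.IsProbabilityMeasure ν ∧
        (∀ s : Set (ℕ → Fin 2), MeasurableSet s →
          ν ((fun (w : ℕ → Fin 2) (n : ℕ) => w (n + 1)) ⁻¹' s) = ν s) ∧
        ∫ w, Astar w ∂ν = 0)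
    -- calibrated subactions V for A and V* for A*
    (V : ℝ → ℝ)
    (hVcal : ∀ x ∈ Icc (0:ℝ) 1,
      (∀ y ∈ Icc (0:ℝ) 1, f y = x → V y + A y ≤ V x) ∧
      ∃ y ∈ Icc (0:ℝ) 1, f y = x ∧ V x = V y + A y)
    (Vstar : (ℕ → Fin 2) → ℝ)
    (hVstarcal : ∀ w : ℕ → Fin 2,
      (∀ w' : ℕ → Fin 2, (fun n => w' (n + 1)) = w → Vstar w' + Astar w' ≤ Vstar w) ∧
      ∃ w' : ℕ → Fin 2, (fun n => w' (n + 1)) = w ∧ Vstar w = Vstar w' + Astar w')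
    -- R, R*, the deviation function I*, and the function b
    (R : ℝ → ℝ) (hR : ∀ x, R x = V (f x) - V x - A x)
    (hRnonneg : ∀ x ∈ Icc (0:ℝ) 1, 0 ≤ R x)
    (Rstar : (ℕ → Fin 2) → ℝ)
    (hRstar : ∀ w : ℕ → Fin 2, Rstar w = Vstar (fun n => w (n + 1)) - Vstar w - Astar w)
    (hRstarnonneg : ∀ w, 0 ≤ Rstar w)
    (Istar : (ℕ → Fin 2) → ℝ≥0∞)
    (hIstar : ∀ w : ℕ → Fin 2, Istar w = ∑' n : ℕ, ENNReal.ofReal (Rstar (fun m => w (m + n))))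
    (b : (ℕ → Fin 2) → ℝ → EReal)
    (hb : ∀ w x, b w x = ((Vstar w + V x - W w x : ℝ) : EReal) + (Istar w : EReal))
    -- V(x) = sup_w (W(w,x) − V*(w) − I*(w)), so that b ≥ 0, and optimal w's exist
    (hVsup : ∀ x ∈ Icc (0:ℝ) 1,
      (V x : EReal) = ⨆ w : ℕ → Fin 2, (((W w x - Vstar w : ℝ) : EReal) - (Istar w : EReal)))
    (hbnonneg : ∀ w : ℕ → Fin 2, ∀ x ∈ Icc (0:ℝ) 1, 0 ≤ b w x)
    (hopt : ∀ x ∈ Icc (0:ℝ) 1, ∃ w : ℕ → Fin 2, b w x = 0)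
    -- f preserves orientation: the inverse branches are increasing, ψ₀ to the left of ψ₁
    (hψmono : ∀ i, StrictMonoOn (ψ i) (Icc (0:ℝ) 1))
    (hψorder : ∀ x ∈ Icc (0:ℝ) 1, ∀ y ∈ Icc (0:ℝ) 1, ψ 0 x ≤ ψ 1 y)
    -- the strict lexicographic order on Σ = {0,1}^ℕ and the twist condition for W
    (lexLt : (ℕ → Fin 2) → (ℕ → Fin 2) → Prop)
    (hlex : ∀ a a' : ℕ → Fin 2,
      lexLt a a' ↔ ∃ n : ℕ, (∀ m, m < n → a m = a' m) ∧ a n < a' n)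
    (htwist : ∀ a a' : ℕ → Fin 2, ∀ x x' : ℝ, x ∈ Icc (0:ℝ) 1 → x' ∈ Icc (0:ℝ) 1 →
      lexLt a a' → x < x' → W a x + W a' x' < W a x' + W a' x)
    -- the turning point c
    (c : ℝ)
    (hcdef : c = sSup {x | x ∈ Icc (0:ℝ) 1 ∧
      ∀ w : ℕ → Fin 2, b w x = 0 → w 0 = 1})
    (hc01 : 0 < c ∧ c < 1)
    -- the countable condition
    (hcount : Set.Countable {w : ℕ → Fin 2 | ∃ x ∈ Icc (0:ℝ) 1, b w x = 0}) :
    -- conclusion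
    ∃ δ > (0:ℝ), ∃ wminus wplus : ℕ → Fin 2,
      (∀ x ∈ Ioc (c - δ) c, b wminus x = 0) ∧
      (∀ x ∈ Ico c (c + δ), b wplus x = 0) :=
  stmt16_general f ψ hψI hfψ A W hWcont Astar hW V Vstar R hR hRnonneg Rstar hRstar hRstarnonneg
    Istar hIstar b hb hbnonneg hopt hψmono lexLt hlex htwist c hcdef hc01 hcount
end

section
/- Suppose W satisfies the twist condition, the maximizing probability for A is unique and is supported on a periodic orbit of f, and the turning point c is eventually periodic for f (fⁿ(c) = f^m(c) for some n ≠ m). Then the calibrated subaction V is real analytic up to a finite number of points: there exist finitely many points 0 = t_0 < t_1 < … < t_N = 1 such that V is real analytic on each open interval (t_{j−1}, t_j). -/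
/-!
By the twist condition, optimal codings are lexicographically nonincreasing in `x`, so an optimal
coding of `x` starts with `1` left of the turning point `c` and with `0` right of it. Optimality
passes from `(w, x)` to `(σ w, ψ_{w 0} x)`, so the `n`-th symbol of an optimal coding of `x` is read
off the side of `c` on which the `n`-th backward image of `x` lies. On an interval avoiding the
forward orbit of `c` these backward images never cross `c`, hence all its points share one optimal
coding `w`, and there `V = W(w, ·) - V*(w) - I*(w)` is the restriction of a holomorphic function.
As `c` is eventually periodic, its forward orbit is finite and cuts `[0, 1]` into finitely many
such intervals.
-/

open Set Filter Topology
open scoped NNReal ENNReal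

theorem Function.exists_iterate_eq_of_lt_of_iterate_eq {α : Type*} {f : α → α} {x : α} {m n : ℕ}
    (hmn : m < n) (h : f^[n] x = f^[m] x) (k : ℕ) : ∃ j < n, f^[k] x = f^[j] x := by
  induction k using Nat.strong_induction_on with
  | _ k ih =>
    rcases lt_or_ge k n with hk | hk
    · exact ⟨k, hk, rfl⟩
    · obtain ⟨j, hj, hkj⟩ := ih (k - (n - m)) (by omega)
      refine ⟨j, hj, ?_⟩
      calc f^[k] x = f^[k - n] (f^[n] x) := by rw [← Function.iterate_add_apply]; congr 1; omega
        _ = f^[k - (n - m)] x := by rw [h, ← Function.iterate_add_apply]; congr 1; omega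
        _ = f^[j] x := hkj

theorem Function.finite_range_iterate_of_iterate_eq {α : Type*} {f : α → α} {x : α} {m n : ℕ}
    (hmn : m ≠ n) (h : f^[m] x = f^[n] x) : (range fun k => f^[k] x).Finite := by
  wlog hlt : m < n generalizing m n
  · exact this hmn.symm h.symm (by omega)
  refine (Set.finite_Iio n).image (fun k => f^[k] x) |>.subset ?_
  rintro _ ⟨k, rfl⟩
  obtain ⟨j, hj, hkj⟩ := Function.exists_iterate_eq_of_lt_of_iterate_eq hlt h.symm k
  exact ⟨j, hj, hkj.symm⟩

theorem exists_partition_subset_Ioo_diff_finite {α : Type*} [LinearOrder α] {a b : α} (hab : a < b)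
    {T : Set α} (hT : T.Finite) :
    ∃ n : ℕ, 0 < n ∧ ∃ t : ℕ → α, t 0 = a ∧ t n = b ∧ (∀ j < n, t j < t (j + 1)) ∧
      ∀ j < n, Ioo (t j) (t (j + 1)) ⊆ Ioo a b \ T := by
  classical
  set s : Finset α := insert a (insert b (hT.toFinset.filter (· ∈ Icc a b)))
  have hs : ∀ z ∈ s, z ∈ Icc a b := by
    simp only [s, Finset.mem_insert, Finset.mem_filter]
    rintro z (rfl | rfl | ⟨-, hz⟩)
    exacts [left_mem_Icc.2 hab.le, right_mem_Icc.2 hab.le, hz]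
  have has : a ∈ s := Finset.mem_insert_self _ _
  have hbs : b ∈ s := Finset.mem_insert_of_mem (Finset.mem_insert_self _ _)
  have hcard : 1 < s.card := Finset.one_lt_card.2 ⟨a, has, b, hbs, hab.ne⟩
  set e := s.orderEmbOfFin rfl
  set t : ℕ → α := fun j => e ⟨min j (s.card - 1), by omega⟩
  have ht : ∀ j, t j ∈ s := fun j => Finset.orderEmbOfFin_mem s rfl _
  have hlt : ∀ j < s.card - 1, t j < t (j + 1) := fun j hj => by
    simp only [t]
    exact e.strictMono (Fin.mk_lt_mk.2 (by omega))
  have hsurj : ∀ z ∈ s, ∃ i, e i = z := fun z hz => by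
    rwa [← Set.mem_range, Finset.range_orderEmbOfFin]
  refine ⟨s.card - 1, by omega, t, ?_, ?_, hlt, fun j hj => ?_⟩
  · obtain ⟨i, hi⟩ := hsurj a has
    refine le_antisymm ?_ (hs _ (ht 0)).1
    rw [← hi]
    exact e.monotone (Fin.mk_le_mk.2 (by omega))
  · obtain ⟨i, hi⟩ := hsurj b hbs
    refine le_antisymm (hs _ (ht _)).2 ?_
    rw [← hi]
    exact e.monotone (Fin.mk_le_mk.2 (by omega))
  · intro z hz
    refine ⟨⟨(hs _ (ht j)).1.trans_lt hz.1, hz.2.trans_le (hs _ (ht (j + 1))).2⟩, fun hzT => ?_⟩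
    have hzs : z ∈ s := Finset.mem_insert_of_mem <| Finset.mem_insert_of_mem <|
      Finset.mem_filter.2 ⟨hT.mem_toFinset.2 hzT,
        (hs _ (ht j)).1.trans hz.1.le, hz.2.le.trans (hs _ (ht (j + 1))).2⟩
    obtain ⟨i, rfl⟩ := hsurj z hzs
    have h1 := e.lt_iff_lt.1 hz.1
    have h2 := e.lt_iff_lt.1 hz.2
    simp only [Fin.lt_def] at h1 h2
    omega

def backwardOrbit {ι α : Type*} (ψ : ι → α → α) (u : ℕ → ι) (x : α) : ℕ → α
  | 0 => x
  | n + 1 => ψ (u n) (backwardOrbit ψ u x n)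

section BackwardOrbit

variable {ι α : Type*} {ψ : ι → α → α} {s : Set α} {u : ℕ → ι} {x : α}

theorem backwardOrbit_mem (hψ : ∀ i, MapsTo (ψ i) s s) (hx : x ∈ s) :
    ∀ n, backwardOrbit ψ u x n ∈ s
  | 0 => hx
  | n + 1 => hψ (u n) (backwardOrbit_mem hψ hx n)

theorem iterate_backwardOrbit {f : α → α} (hψ : ∀ i, MapsTo (ψ i) s s)
    (hfψ : ∀ i, LeftInvOn f (ψ i) s) (hx : x ∈ s) : ∀ n, f^[n] (backwardOrbit ψ u x n) = x
  | 0 => rfl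
  | n + 1 => by
    rw [Function.iterate_succ_apply, backwardOrbit, hfψ _ (backwardOrbit_mem hψ hx n)]
    exact iterate_backwardOrbit hψ hfψ hx n

theorem backwardOrbit_congr {u' : ℕ → ι} :
    ∀ n, (∀ m < n, u m = u' m) → backwardOrbit ψ u x n = backwardOrbit ψ u' x n
  | 0, _ => rfl
  | n + 1, h => by
    rw [backwardOrbit, backwardOrbit, h n n.lt_succ_self,
      backwardOrbit_congr n fun m hm => h m (hm.trans n.lt_succ_self)]

theorem continuousOn_backwardOrbit [TopologicalSpace α] (hψ : ∀ i, MapsTo (ψ i) s s)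
    (hψc : ∀ i, ContinuousOn (ψ i) s) (u : ℕ → ι) :
    ∀ n, ContinuousOn (fun ξ => backwardOrbit ψ u ξ n) s
  | 0 => continuousOn_id
  | n + 1 => (hψc (u n)).comp (continuousOn_backwardOrbit hψ hψc u n)
      fun _ hξ => backwardOrbit_mem hψ hξ n

theorem opt_backwardOrbit {opt : (ℕ → ι) → α → Prop} (hψ : ∀ i, MapsTo (ψ i) s s)
    (hshift : ∀ u x, x ∈ s → opt u x → opt (fun n => u (n + 1)) (ψ (u 0) x))
    (hx : x ∈ s) (hu : opt u x) : ∀ n, opt (fun m => u (m + n)) (backwardOrbit ψ u x n)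
  | 0 => hu
  | n + 1 => by
    have h := hshift _ _ (backwardOrbit_mem hψ hx n) (opt_backwardOrbit hψ hshift hx hu n)
    simp only [zero_add, add_right_comm _ 1 n] at h
    exact h

end BackwardOrbit

def FirstSymbolAntitone (opt : (ℕ → Fin 2) → ℝ → Prop) : Prop :=
  ∀ u u' x x', x ∈ Icc (0:ℝ) 1 → x' ∈ Icc (0:ℝ) 1 → x < x' → opt u x → opt u' x' → u' 0 ≤ u 0

noncomputable def turningPoint (opt : (ℕ → Fin 2) → ℝ → Prop) : ℝ :=
  sSup {x | x ∈ Icc (0:ℝ) 1 ∧ ∀ w : ℕ → Fin 2, opt w x → w 0 = 1}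

section TurningPoint

variable {opt : (ℕ → Fin 2) → ℝ → Prop} {u u' : ℕ → Fin 2} {x x' : ℝ}

theorem eq_one_of_lt_turningPoint (hanti : FirstSymbolAntitone opt)
    (hex : ∀ x ∈ Icc (0:ℝ) 1, ∃ u, opt u x)
    (hx : x ∈ Icc (0:ℝ) 1) (hu : opt u x) (hxc : x < turningPoint opt) : u 0 = 1 := by
  have hne : {x | x ∈ Icc (0:ℝ) 1 ∧ ∀ w : ℕ → Fin 2, opt w x → w 0 = 1}.Nonempty := by
    by_contra h
    rw [not_nonempty_iff_eq_empty] at h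
    rw [turningPoint, h, Real.sSup_empty] at hxc
    linarith [hx.1]
  obtain ⟨y, ⟨hy, hy1⟩, hxy⟩ := exists_lt_of_lt_csSup hne hxc
  obtain ⟨w, hw⟩ := hex y hy
  have := hanti u w x y hx hy hxy hu hw
  have := hy1 w hw
  omega

theorem eq_zero_of_turningPoint_lt
    (hanti : FirstSymbolAntitone opt) (hx : x ∈ Icc (0:ℝ) 1) (hu : opt u x)
    (hcx : turningPoint opt < x) : u 0 = 0 := by
  by_contra hu0
  obtain ⟨z, hcz, hzx⟩ := exists_between hcx
  have hc0 : 0 ≤ turningPoint opt := Real.sSup_nonneg fun y hy => hy.1.1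
  have hz : z ∈ Icc (0:ℝ) 1 := ⟨by linarith, by linarith [hx.2]⟩
  have hzS : z ∈ {x | x ∈ Icc (0:ℝ) 1 ∧ ∀ w : ℕ → Fin 2, opt w x → w 0 = 1} :=
    ⟨hz, fun w hw => by have := hanti w u z x hz hx hzx hw hu; omega⟩
  exact (le_csSup ⟨1, fun y hy => hy.1.2⟩ hzS).not_gt hcz

theorem apply_zero_eq_of_turningPoint_notMem_uIcc (hanti : FirstSymbolAntitone opt)
    (hex : ∀ x ∈ Icc (0:ℝ) 1, ∃ u, opt u x)
    (hx : x ∈ Icc (0:ℝ) 1) (hx' : x' ∈ Icc (0:ℝ) 1) (hu : opt u x) (hu' : opt u' x')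
    (hc : turningPoint opt ∉ uIcc x x') : u 0 = u' 0 := by
  have hxc : x ≠ turningPoint opt := fun h => hc (h ▸ left_mem_uIcc)
  have hx'c : x' ≠ turningPoint opt := fun h => hc (h ▸ right_mem_uIcc)
  rcases hxc.lt_or_gt with h | h <;> rcases hx'c.lt_or_gt with h' | h'
  · rw [eq_one_of_lt_turningPoint hanti hex hx hu h,
      eq_one_of_lt_turningPoint hanti hex hx' hu' h']
  · exact absurd (mem_uIcc.2 (Or.inl ⟨h.le, h'.le⟩)) hc
  · exact absurd (mem_uIcc.2 (Or.inr ⟨h'.le, h.le⟩)) hc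
  · rw [eq_zero_of_turningPoint_lt hanti hx hu h, eq_zero_of_turningPoint_lt hanti hx' hu' h']

variable {f : ℝ → ℝ} {ψ : Fin 2 → ℝ → ℝ}

theorem eq_of_opt_of_disjoint_uIcc (hψ : ∀ i, MapsTo (ψ i) (Icc (0:ℝ) 1) (Icc 0 1))
    (hψc : ∀ i, ContinuousOn (ψ i) (Icc (0:ℝ) 1)) (hfψ : ∀ i, LeftInvOn f (ψ i) (Icc (0:ℝ) 1))
    (hshift : ∀ u x, x ∈ Icc (0:ℝ) 1 → opt u x → opt (fun n => u (n + 1)) (ψ (u 0) x))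
    (hanti : FirstSymbolAntitone opt) (hex : ∀ x ∈ Icc (0:ℝ) 1, ∃ u, opt u x)
    (hx : x ∈ Icc (0:ℝ) 1) (hx' : x' ∈ Icc (0:ℝ) 1)
    (hgap : Disjoint (uIcc x x') (range fun n => f^[n] (turningPoint opt)))
    (hu : opt u x) (hu' : opt u' x') : u = u' := by
  have hsub : uIcc x x' ⊆ Icc 0 1 := ordConnected_Icc.uIcc_subset hx hx'
  funext n
  induction n using Nat.strong_induction_on with
  | _ n ih =>
  -- Were `c` between the `n`-th backward iterates, by continuity some `ξ ∈ [x, x']` would have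
  -- `c` as `n`-th backward iterate, i.e. `f^[n] c = ξ`.
  have hc : turningPoint opt ∉ uIcc (backwardOrbit ψ u x n) (backwardOrbit ψ u' x' n) := by
    rw [← backwardOrbit_congr n ih]
    intro hc
    obtain ⟨ξ, hξ, hξc⟩ :=
      intermediate_value_uIcc ((continuousOn_backwardOrbit hψ hψc u n).mono hsub) hc
    refine disjoint_left.1 hgap hξ ⟨n, ?_⟩
    rw [← hξc]
    exact iterate_backwardOrbit hψ hfψ (hsub hξ) n
  simpa only [zero_add] using apply_zero_eq_of_turningPoint_notMem_uIcc hanti hex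
    (backwardOrbit_mem hψ hx n) (backwardOrbit_mem hψ hx' n)
    (opt_backwardOrbit hψ hshift hx hu n) (opt_backwardOrbit hψ hshift hx' hu' n) hc

theorem opt_of_mem_of_disjoint (hψ : ∀ i, MapsTo (ψ i) (Icc (0:ℝ) 1) (Icc 0 1))
    (hψc : ∀ i, ContinuousOn (ψ i) (Icc (0:ℝ) 1)) (hfψ : ∀ i, LeftInvOn f (ψ i) (Icc (0:ℝ) 1))
    (hshift : ∀ u x, x ∈ Icc (0:ℝ) 1 → opt u x → opt (fun n => u (n + 1)) (ψ (u 0) x))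
    (hanti : FirstSymbolAntitone opt) (hex : ∀ x ∈ Icc (0:ℝ) 1, ∃ u, opt u x)
    {J : Set ℝ} (hJ : J ⊆ Icc 0 1) (hJc : J.OrdConnected)
    (hgap : Disjoint J (range fun n => f^[n] (turningPoint opt))) (hx : x ∈ J) (hu : opt u x) :
    ∀ y ∈ J, opt u y := by
  intro y hy
  obtain ⟨w, hw⟩ := hex y (hJ hy)
  rwa [eq_of_opt_of_disjoint_uIcc hψ hψc hfψ hshift hanti hex (hJ hy) (hJ hx)
    (hgap.mono_left (hJc.uIcc_subset hy hx)) hw hu] at hw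

end TurningPoint

theorem continuousOn_of_complex_extension {φ : ℝ → ℝ} {F : ℂ → ℂ} {s : Set ℝ} {O : Set ℂ}
    (hF : ContinuousOn F O) (hsO : ∀ x ∈ s, (x : ℂ) ∈ O) (hFφ : ∀ x ∈ s, F x = φ x) :
    ContinuousOn φ s := by
  refine (Complex.continuous_re.comp_continuousOn
    (hF.comp Complex.continuous_ofReal.continuousOn hsO)).congr fun x hx => ?_
  simp [hFφ x hx]

theorem analyticAt_re_comp_ofReal {F : ℂ → ℂ} {O : Set ℂ} (hF : DifferentiableOn ℂ F O)
    (hO : IsOpen O) {x : ℝ} (hx : (x : ℂ) ∈ O) : AnalyticAt ℝ (fun y : ℝ => (F y).re) x :=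
  (Complex.reCLM.analyticAt _).comp
    ((hF.analyticOnNhd hO _ hx).restrictScalars.comp (Complex.ofRealCLM.analyticAt x))

theorem EReal.coe_add_coe_ennreal_eq_zero_iff {r : ℝ} {e : ℝ≥0∞} :
    (r : EReal) + e = 0 ↔ e ≠ ⊤ ∧ r + e.toReal = 0 := by
  by_cases he : e = ⊤
  · simp [he]
  · rw [← EReal.coe_ennreal_toReal he, ← EReal.coe_add, EReal.coe_eq_zero]
    simp [he]

theorem EReal.coe_add_coe_ennreal_nonneg_iff {r : ℝ} {e : ℝ≥0∞} (he : e ≠ ⊤) :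
    0 ≤ (r : EReal) + e ↔ 0 ≤ r + e.toReal := by
  rw [← EReal.coe_ennreal_toReal he, ← EReal.coe_add, EReal.coe_nonneg]

section InvolutionKernel

variable {W : (ℕ → Fin 2) → ℝ → ℝ} {V : ℝ → ℝ} {Vstar : (ℕ → Fin 2) → ℝ}
  {Istar : (ℕ → Fin 2) → ℝ≥0∞} {b : (ℕ → Fin 2) → ℝ → EReal}

theorem firstSymbolAntitone_of_twist
    (hb : ∀ w x, b w x = ((Vstar w + V x - W w x : ℝ) : EReal) + (Istar w : EReal))
    (hbnonneg : ∀ w : ℕ → Fin 2, ∀ x ∈ Icc (0:ℝ) 1, 0 ≤ b w x)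
    {lexLt : (ℕ → Fin 2) → (ℕ → Fin 2) → Prop}
    (hlex : ∀ a a' : ℕ → Fin 2,
      lexLt a a' ↔ ∃ n : ℕ, (∀ m, m < n → a m = a' m) ∧ a n < a' n)
    (htwist : ∀ a a' : ℕ → Fin 2, ∀ x x' : ℝ, x ∈ Icc (0:ℝ) 1 → x' ∈ Icc (0:ℝ) 1 →
      lexLt a a' → x < x' → W a x + W a' x' < W a x' + W a' x) :
    FirstSymbolAntitone fun w x => b w x = 0 := by
  intro u u' x x' hx hx' hxx' hu hu'
  rw [hb, EReal.coe_add_coe_ennreal_eq_zero_iff] at hu hu'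
  have h₁ := hbnonneg u x' hx'
  have h₂ := hbnonneg u' x hx
  rw [hb, EReal.coe_add_coe_ennreal_nonneg_iff hu.1] at h₁
  rw [hb, EReal.coe_add_coe_ennreal_nonneg_iff hu'.1] at h₂
  by_contra h
  have hlt : lexLt u u' := (hlex u u').2 ⟨0, fun m hm => absurd hm m.not_lt_zero, by omega⟩
  linarith [htwist u u' x x' hx hx' hlt hxx', hu.2, hu'.2]

theorem optimal_shift {f : ℝ → ℝ} {ψ : Fin 2 → ℝ → ℝ} {A R : ℝ → ℝ}
    {Astar Rstar : (ℕ → Fin 2) → ℝ}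
    (hψ : ∀ i, MapsTo (ψ i) (Icc (0:ℝ) 1) (Icc 0 1)) (hfψ : ∀ i, LeftInvOn f (ψ i) (Icc (0:ℝ) 1))
    (hW : ∀ w : ℕ → Fin 2, ∀ x ∈ Icc (0:ℝ) 1,
      Astar w = A (ψ (w 0) x) + W (fun n => w (n + 1)) (ψ (w 0) x) - W w x)
    (hR : ∀ x, R x = V (f x) - V x - A x) (hRnonneg : ∀ x ∈ Icc (0:ℝ) 1, 0 ≤ R x)
    (hRstar : ∀ w : ℕ → Fin 2, Rstar w = Vstar (fun n => w (n + 1)) - Vstar w - Astar w)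
    (hRstarnonneg : ∀ w, 0 ≤ Rstar w)
    (hIstar : ∀ w : ℕ → Fin 2,
      Istar w = ∑' n : ℕ, ENNReal.ofReal (Rstar (fun m => w (m + n))))
    (hb : ∀ w x, b w x = ((Vstar w + V x - W w x : ℝ) : EReal) + (Istar w : EReal))
    (hbnonneg : ∀ w : ℕ → Fin 2, ∀ x ∈ Icc (0:ℝ) 1, 0 ≤ b w x)
    {u : ℕ → Fin 2} {x : ℝ} (hx : x ∈ Icc (0:ℝ) 1) (hu : b u x = 0) :
    b (fun n => u (n + 1)) (ψ (u 0) x) = 0 := by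
  have hsplit : Istar u = ENNReal.ofReal (Rstar u) + Istar (fun n => u (n + 1)) := by
    rw [hIstar u, hIstar (fun n => u (n + 1)), tsum_eq_zero_add' ENNReal.summable]
    rfl
  rw [hb, EReal.coe_add_coe_ennreal_eq_zero_iff] at hu ⊢
  have hfin : Istar (fun n => u (n + 1)) ≠ ⊤ := fun h => hu.1 (by rw [hsplit, h, add_top])
  have htoReal : (Istar u).toReal = Rstar u + (Istar (fun n => u (n + 1))).toReal := by
    rw [hsplit, ENNReal.toReal_add ENNReal.ofReal_ne_top hfin,
      ENNReal.toReal_ofReal (hRstarnonneg u)]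
  have hy := hψ (u 0) hx
  have hnonneg := hbnonneg (fun n => u (n + 1)) _ hy
  rw [hb, EReal.coe_add_coe_ennreal_nonneg_iff hfin] at hnonneg
  have hRy := hRnonneg _ hy
  rw [hR, hfψ (u 0) hx] at hRy
  -- `b (σ u) (ψ_{u 0} x) = b u x - R (ψ_{u 0} x)`, so it is both `≥ 0` and `≤ 0`.
  exact ⟨hfin, le_antisymm (by linarith [hW u x hx, hRstar u, hu.2]) hnonneg⟩

theorem analyticOnNhd_of_optimal
    (hb : ∀ w x, b w x = ((Vstar w + V x - W w x : ℝ) : EReal) + (Istar w : EReal))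
    {u : ℕ → Fin 2} {F : ℂ → ℂ} {O : Set ℂ} (hO : IsOpen O) (hF : DifferentiableOn ℂ F O)
    {J : Set ℝ} (hJo : IsOpen J) (hJO : ∀ x ∈ J, (x : ℂ) ∈ O) (hFW : ∀ x ∈ J, F x = W u x)
    (hu : ∀ y ∈ J, b u y = 0) : AnalyticOnNhd ℝ V J := by
  intro z hz
  have hV : ∀ y ∈ J, (F y).re - (Vstar u + (Istar u).toReal) = V y := fun y hy => by
    have h := hu y hy
    rw [hb, EReal.coe_add_coe_ennreal_eq_zero_iff] at h
    rw [hFW y hy, Complex.ofReal_re]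
    linarith [h.2]
  exact ((analyticAt_re_comp_ofReal hF hO (hJO z hz)).sub analyticAt_const).congr
    (eventuallyEq_of_mem (hJo.mem_nhds hz) hV)

end InvolutionKernel

theorem stmt18_general
    -- the expanding onto map f of degree d and its inverse branches ψ_i
    (f : ℝ → ℝ) (ψ : Fin 2 → ℝ → ℝ)
    (hψI : ∀ i, ∀ x ∈ Icc (0:ℝ) 1, ψ i x ∈ Icc (0:ℝ) 1)
    (hfψ : ∀ i, ∀ x ∈ Icc (0:ℝ) 1, f (ψ i x) = x)
    -- the Hölder potential A, with m(A) = 0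
    (A : ℝ → ℝ)
    -- a continuous involution kernel W for A, with Hölder dual potential A*, m(A*) = 0
    (W : (ℕ → Fin 2) → ℝ → ℝ)
    (Astar : (ℕ → Fin 2) → ℝ)
    (hW : ∀ w : ℕ → Fin 2, ∀ x ∈ Icc (0:ℝ) 1,
      Astar w = A (ψ (w 0) x) + W (fun n => w (n + 1)) (ψ (w 0) x) - W w x)
    -- calibrated subactions V for A and V* for A*
    (V : ℝ → ℝ)
    (Vstar : (ℕ → Fin 2) → ℝ)
    -- R, R*, the deviation function I*, and the function b
    (R : ℝ → ℝ) (hR : ∀ x, R x = V (f x) - V x - A x)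
    (hRnonneg : ∀ x ∈ Icc (0:ℝ) 1, 0 ≤ R x)
    (Rstar : (ℕ → Fin 2) → ℝ)
    (hRstar : ∀ w : ℕ → Fin 2, Rstar w = Vstar (fun n => w (n + 1)) - Vstar w - Astar w)
    (hRstarnonneg : ∀ w, 0 ≤ Rstar w)
    (Istar : (ℕ → Fin 2) → ℝ≥0∞)
    (hIstar : ∀ w : ℕ → Fin 2, Istar w = ∑' n : ℕ, ENNReal.ofReal (Rstar (fun m => w (m + n))))
    (b : (ℕ → Fin 2) → ℝ → EReal)
    (hb : ∀ w x, b w x = ((Vstar w + V x - W w x : ℝ) : EReal) + (Istar w : EReal))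
    -- V(x) = sup_w (W(w,x) − V*(w) − I*(w)), so that b ≥ 0, and optimal w's exist
    (hbnonneg : ∀ w : ℕ → Fin 2, ∀ x ∈ Icc (0:ℝ) 1, 0 ≤ b w x)
    (hopt : ∀ x ∈ Icc (0:ℝ) 1, ∃ w : ℕ → Fin 2, b w x = 0)
    -- the strict lexicographic order on Σ = {0,1}^ℕ and the twist condition for W
    (lexLt : (ℕ → Fin 2) → (ℕ → Fin 2) → Prop)
    (hlex : ∀ a a' : ℕ → Fin 2,
      lexLt a a' ↔ ∃ n : ℕ, (∀ m, m < n → a m = a' m) ∧ a n < a' n)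
    (htwist : ∀ a a' : ℕ → Fin 2, ∀ x x' : ℝ, x ∈ Icc (0:ℝ) 1 → x' ∈ Icc (0:ℝ) 1 →
      lexLt a a' → x < x' → W a x + W a' x' < W a x' + W a' x)
    -- the turning point c
    (c : ℝ)
    (hcdef : c = sSup {x | x ∈ Icc (0:ℝ) 1 ∧
      ∀ w : ℕ → Fin 2, b w x = 0 → w 0 = 1})
    -- the complex neighborhood O of I, univalent extensions of the inverse branches
    (O : Set ℂ) (hOopen : IsOpen O)
    (hIO : ∀ x : ℝ, x ∈ Icc (0:ℝ) 1 → (x : ℂ) ∈ O)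
    (Ψ : Fin 2 → ℂ → ℂ)
    (hΨdiff : ∀ i, DifferentiableOn ℂ (Ψ i) O)
    (hΨψ : ∀ i, ∀ x ∈ Icc (0:ℝ) 1, Ψ i (x : ℂ) = ((ψ i x : ℝ) : ℂ))
    -- for each fixed w, x ↦ W(w,x) extends holomorphically to O, uniformly boundedly in w
    (M : ℝ) (Wext : (ℕ → Fin 2) → ℂ → ℂ)
    (hWext : ∀ w : ℕ → Fin 2, DifferentiableOn ℂ (Wext w) O ∧
      (∀ x ∈ Icc (0:ℝ) 1, Wext w (x : ℂ) = ((W w x : ℝ) : ℂ)) ∧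
      ∀ z ∈ O, ‖Wext w z‖ ≤ M)
    -- the turning point c is eventually periodic for f
    (hcper : ∃ n m : ℕ, n ≠ m ∧ f^[n] c = f^[m] c) :
    -- conclusion: V is piecewise real analytic with finitely many pieces
    ∃ NN : ℕ, 0 < NN ∧ ∃ t : ℕ → ℝ, t 0 = 0 ∧ t NN = 1 ∧
      (∀ j, j < NN → t j < t (j + 1)) ∧
      ∀ j, j < NN → AnalyticOnNhd ℝ V (Ioo (t j) (t (j + 1))) := by
  have hψmaps : ∀ i, MapsTo (ψ i) (Icc (0:ℝ) 1) (Icc 0 1) := fun i _ hx => hψI i _ hx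
  have hψinv : ∀ i, LeftInvOn f (ψ i) (Icc (0:ℝ) 1) := fun i _ hx => hfψ i _ hx
  have hψc : ∀ i, ContinuousOn (ψ i) (Icc (0:ℝ) 1) := fun i =>
    continuousOn_of_complex_extension (hΨdiff i).continuousOn hIO (hΨψ i)
  have hshift : ∀ u x, x ∈ Icc (0:ℝ) 1 → b u x = 0 → b (fun n => u (n + 1)) (ψ (u 0) x) = 0 :=
    fun u x hx hu => optimal_shift hψmaps hψinv hW hR hRnonneg hRstar hRstarnonneg hIstar hb
      hbnonneg hx hu
  have hanti := firstSymbolAntitone_of_twist hb hbnonneg hlex htwist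
  obtain ⟨n, m, hnm, hcnm⟩ := hcper
  obtain ⟨NN, hNN, t, ht0, ht1, hlt, hpieces⟩ := exists_partition_subset_Ioo_diff_finite
    zero_lt_one (Function.finite_range_iterate_of_iterate_eq hnm hcnm)
  refine ⟨NN, hNN, t, ht0, ht1, hlt, fun j hj => ?_⟩
  have hJ : Ioo (t j) (t (j + 1)) ⊆ Icc 0 1 :=
    (hpieces j hj).trans (sdiff_subset.trans Ioo_subset_Icc_self)
  obtain ⟨x, hx⟩ := nonempty_Ioo.2 (hlt j hj)
  obtain ⟨u, hu⟩ := hopt x (hJ hx)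
  subst hcdef
  exact analyticOnNhd_of_optimal hb hOopen (hWext u).1 isOpen_Ioo (fun y hy => hIO y (hJ hy))
    (fun y hy => (hWext u).2.1 y (hJ hy))
    (opt_of_mem_of_disjoint hψmaps hψc hψinv hshift hanti hopt hJ ordConnected_Ioo
      (disjoint_sdiff_left.mono_left (hpieces j hj)) hx hu)

/-- Theorem 7.2, the main theorem of the paper.
If `W` is twist, the maximizing probability for `A` is unique and supported on a
periodic orbit, and the turning point `c` is eventually periodic for `f`, then the
calibrated subaction `V` is real analytic up to a finite number of points: there are
`0 = t₀ < t₁ < … < t_N = 1` with `V` real analytic on each `(t_{j−1}, t_j)`. -/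
theorem stmt18
    -- the expanding onto map f of degree d and its inverse branches ψ_i
    (f : ℝ → ℝ) (ψ : Fin 2 → ℝ → ℝ)
    (hψI : ∀ i, ∀ x ∈ Icc (0:ℝ) 1, ψ i x ∈ Icc (0:ℝ) 1)
    (hfψ : ∀ i, ∀ x ∈ Icc (0:ℝ) 1, f (ψ i x) = x)
    -- the metric d(ω,γ) = 2^{-n} on Σ, n the first position at which ω and γ disagree
    (dSig : (ℕ → Fin 2) → (ℕ → Fin 2) → ℝ)
    (hdSigeq : ∀ ω, dSig ω ω = 0)
    (hdSig : ∀ ω γ : ℕ → Fin 2, ∀ n : ℕ, (∀ m, m < n → ω m = γ m) → ω n ≠ γ n →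
      dSig ω γ = (2:ℝ)⁻¹ ^ n)
    -- the Hölder potential A, with m(A) = 0
    (A : ℝ → ℝ) (hA : ∃ (C r : ℝ≥0), 0 < r ∧ HolderWith C r A)
    (hmA : (∀ ν : MeasureTheory.Measure ℝ, MeasureTheory.IsProbabilityMeasure ν →
        ν (Icc (0:ℝ) 1) = 1 → (∀ s : Set ℝ, MeasurableSet s → ν (f ⁻¹' s) = ν s) →
        ∫ x, A x ∂ν ≤ 0) ∧
      ∃ ν : MeasureTheory.Measure ℝ, MeasureTheory.IsProbabilityMeasure ν ∧
        ν (Icc (0:ℝ) 1) = 1 ∧ (∀ s : Set ℝ, MeasurableSet s → ν (f ⁻¹' s) = ν s) ∧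
        ∫ x, A x ∂ν = 0)
    -- a continuous involution kernel W for A, with Hölder dual potential A*, m(A*) = 0
    (W : (ℕ → Fin 2) → ℝ → ℝ)
    (hWcont : Continuous (fun p : (ℕ → Fin 2) × ℝ => W p.1 p.2))
    (Astar : (ℕ → Fin 2) → ℝ)
    (hAstarHolder : ∃ C θ : ℝ, 0 < C ∧ 0 < θ ∧
      ∀ w w' : ℕ → Fin 2, |Astar w - Astar w'| ≤ C * (dSig w w') ^ θ)
    (hW : ∀ w : ℕ → Fin 2, ∀ x ∈ Icc (0:ℝ) 1,
      Astar w = A (ψ (w 0) x) + W (fun n => w (n + 1)) (ψ (w 0) x) - W w x)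
    (hmAstar : (∀ ν : MeasureTheory.Measure (ℕ → Fin 2),
        MeasureTheory.IsProbabilityMeasure ν →
        (∀ s : Set (ℕ → Fin 2), MeasurableSet s →
          ν ((fun (w : ℕ → Fin 2) (n : ℕ) => w (n + 1)) ⁻¹' s) = ν s) →
        ∫ w, Astar w ∂ν ≤ 0) ∧
      ∃ ν : MeasureTheory.Measure (ℕ → Fin 2), MeasureTheory.IsProbabilityMeasure ν ∧
        (∀ s : Set (ℕ → Fin 2), MeasurableSet s →
          ν ((fun (w : ℕ → Fin 2) (n : ℕ) => w (n + 1)) ⁻¹' s) = ν s) ∧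
        ∫ w, Astar w ∂ν = 0)
    -- calibrated subactions V for A and V* for A*
    (V : ℝ → ℝ)
    (hVcal : ∀ x ∈ Icc (0:ℝ) 1,
      (∀ y ∈ Icc (0:ℝ) 1, f y = x → V y + A y ≤ V x) ∧
      ∃ y ∈ Icc (0:ℝ) 1, f y = x ∧ V x = V y + A y)
    (Vstar : (ℕ → Fin 2) → ℝ)
    (hVstarcal : ∀ w : ℕ → Fin 2,
      (∀ w' : ℕ → Fin 2, (fun n => w' (n + 1)) = w → Vstar w' + Astar w' ≤ Vstar w) ∧
      ∃ w' : ℕ → Fin 2, (fun n => w' (n + 1)) = w ∧ Vstar w = Vstar w' + Astar w')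
    -- R, R*, the deviation function I*, and the function b
    (R : ℝ → ℝ) (hR : ∀ x, R x = V (f x) - V x - A x)
    (hRnonneg : ∀ x ∈ Icc (0:ℝ) 1, 0 ≤ R x)
    (Rstar : (ℕ → Fin 2) → ℝ)
    (hRstar : ∀ w : ℕ → Fin 2, Rstar w = Vstar (fun n => w (n + 1)) - Vstar w - Astar w)
    (hRstarnonneg : ∀ w, 0 ≤ Rstar w)
    (Istar : (ℕ → Fin 2) → ℝ≥0∞)
    (hIstar : ∀ w : ℕ → Fin 2, Istar w = ∑' n : ℕ, ENNReal.ofReal (Rstar (fun m => w (m + n))))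
    (b : (ℕ → Fin 2) → ℝ → EReal)
    (hb : ∀ w x, b w x = ((Vstar w + V x - W w x : ℝ) : EReal) + (Istar w : EReal))
    -- V(x) = sup_w (W(w,x) − V*(w) − I*(w)), so that b ≥ 0, and optimal w's exist
    (hVsup : ∀ x ∈ Icc (0:ℝ) 1,
      (V x : EReal) = ⨆ w : ℕ → Fin 2, (((W w x - Vstar w : ℝ) : EReal) - (Istar w : EReal)))
    (hbnonneg : ∀ w : ℕ → Fin 2, ∀ x ∈ Icc (0:ℝ) 1, 0 ≤ b w x)
    (hopt : ∀ x ∈ Icc (0:ℝ) 1, ∃ w : ℕ → Fin 2, b w x = 0)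
    -- f preserves orientation: the inverse branches are increasing, ψ₀ to the left of ψ₁
    (hψmono : ∀ i, StrictMonoOn (ψ i) (Icc (0:ℝ) 1))
    (hψorder : ∀ x ∈ Icc (0:ℝ) 1, ∀ y ∈ Icc (0:ℝ) 1, ψ 0 x ≤ ψ 1 y)
    -- the strict lexicographic order on Σ = {0,1}^ℕ and the twist condition for W
    (lexLt : (ℕ → Fin 2) → (ℕ → Fin 2) → Prop)
    (hlex : ∀ a a' : ℕ → Fin 2,
      lexLt a a' ↔ ∃ n : ℕ, (∀ m, m < n → a m = a' m) ∧ a n < a' n)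
    (htwist : ∀ a a' : ℕ → Fin 2, ∀ x x' : ℝ, x ∈ Icc (0:ℝ) 1 → x' ∈ Icc (0:ℝ) 1 →
      lexLt a a' → x < x' → W a x + W a' x' < W a x' + W a' x)
    -- the turning point c
    (c : ℝ)
    (hcdef : c = sSup {x | x ∈ Icc (0:ℝ) 1 ∧
      ∀ w : ℕ → Fin 2, b w x = 0 → w 0 = 1})
    -- the complex neighborhood O of I, univalent extensions of the inverse branches
    (O : Set ℂ) (hOopen : IsOpen O) (hObdd : Bornology.IsBounded O)
    (hOsc : SimplyConnectedSpace O)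
    (hIO : ∀ x : ℝ, x ∈ Icc (0:ℝ) 1 → (x : ℂ) ∈ O)
    (Ψ : Fin 2 → ℂ → ℂ)
    (hΨdiff : ∀ i, DifferentiableOn ℂ (Ψ i) O) (hΨinj : ∀ i, InjOn (Ψ i) O)
    (hΨψ : ∀ i, ∀ x ∈ Icc (0:ℝ) 1, Ψ i (x : ℂ) = ((ψ i x : ℝ) : ℂ))
    -- A = log g with g real analytic and positive, admitting a nonvanishing
    -- complex analytic extension G to O
    (g : ℝ → ℝ) (hgpos : ∀ x ∈ Icc (0:ℝ) 1, 0 < g x)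
    (hAlog : ∀ x ∈ Icc (0:ℝ) 1, A x = Real.log (g x))
    (G : ℂ → ℂ) (hGdiff : DifferentiableOn ℂ G O) (hGne : ∀ z ∈ O, G z ≠ 0)
    (hGg : ∀ x ∈ Icc (0:ℝ) 1, G (x : ℂ) = ((g x : ℝ) : ℂ))
    -- for each fixed w, x ↦ W(w,x) extends holomorphically to O, uniformly boundedly in w
    (M : ℝ) (Wext : (ℕ → Fin 2) → ℂ → ℂ)
    (hWext : ∀ w : ℕ → Fin 2, DifferentiableOn ℂ (Wext w) O ∧
      (∀ x ∈ Icc (0:ℝ) 1, Wext w (x : ℂ) = ((W w x : ℝ) : ℂ)) ∧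
      ∀ z ∈ O, ‖Wext w z‖ ≤ M)
    -- the maximizing probability for A is unique and supported on a periodic orbit
    (νmax : MeasureTheory.Measure ℝ) (p : ℝ) (N : ℕ) (hN : 0 < N)
    (hpI : p ∈ Icc (0:ℝ) 1) (hper : f^[N] p = p)
    (hνmaxdef : νmax
      = (N : ENNReal)⁻¹ • ∑ j ∈ Finset.range N, MeasureTheory.Measure.dirac (f^[j] p))
    (hνmaxprob : MeasureTheory.IsProbabilityMeasure νmax)
    (hνmaxI : νmax (Icc (0:ℝ) 1) = 1)
    (hνmaxinv : ∀ s : Set ℝ, MeasurableSet s → νmax (f ⁻¹' s) = νmax s)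
    (hνmaxmax : ∫ x, A x ∂νmax = 0)
    (hνmaxuniq : ∀ ν : MeasureTheory.Measure ℝ, MeasureTheory.IsProbabilityMeasure ν →
      ν (Icc (0:ℝ) 1) = 1 → (∀ s : Set ℝ, MeasurableSet s → ν (f ⁻¹' s) = ν s) →
      ∫ x, A x ∂ν = 0 → ν = νmax)
    -- the turning point c is eventually periodic for f
    (hcper : ∃ n m : ℕ, n ≠ m ∧ f^[n] c = f^[m] c) :
    -- conclusion: V is piecewise real analytic with finitely many pieces
    ∃ NN : ℕ, 0 < NN ∧ ∃ t : ℕ → ℝ, t 0 = 0 ∧ t NN = 1 ∧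
      (∀ j, j < NN → t j < t (j + 1)) ∧
      ∀ j, j < NN → AnalyticOnNhd ℝ V (Ioo (t j) (t (j + 1))) :=
  stmt18_general f ψ hψI hfψ A W Astar hW V Vstar R hR hRnonneg Rstar hRstar hRstarnonneg Istar
    hIstar b hb hbnonneg hopt lexLt hlex htwist c hcdef O hOopen hIO Ψ hΨdiff hΨψ M Wext hWext hcper
end

section
/- Suppose H satisfies the twist condition. Then the set of x ∈ [0, 1] for which the set U(x) of optimal points is a singleton (i.e. U(x) = {u⁺(x)} = {u⁻(x)}, so the optimal w(x) is unique) is generic: it contains a dense G_δ subset of [0, 1]. -/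
open Set
open scoped ENNReal

/-!
Each `U(x)` is nonempty, since `H(·, x) - I*` is upper semicontinuous on the compact space `Σ`.
Adding the optimality inequalities of `a ∈ U(x)` and `b ∈ U(y)`, `x < y`, contradicts the twist
condition unless `b ≤ a`: optimal points move down as the parameter grows. Embed `Σ` into `ℝ`
monotonically by ternary expansions; then every `x` with two optimal points `a < b` gets a
rational strictly between their images, and by monotonicity distinct `x` get distinct rationals.
So `U(x)` is a singleton outside a countable set, whose complement in `[0,1]` is a dense `G_δ`.
-/

theorem Set.Countable.exists_diff_eq_inter_iInter {X : Type*} [TopologicalSpace X] [T1Space X]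
    {B : Set X} (hB : B.Countable) (s : Set X) :
    ∃ F : ℕ → Set X, (∀ n, IsOpen (F n)) ∧ s \ B = s ∩ ⋂ n, F n := by
  obtain ⟨F, hF, hBF⟩ := isGδ_iff_eq_iInter_nat.1 hB.isGδ_compl
  exact ⟨F, hF, by rw [sdiff_eq, hBF]⟩

theorem Set.Countable.Icc_subset_closure_Icc_diff {B : Set ℝ} (hB : B.Countable) {a b : ℝ}
    (hab : a ≠ b) : Icc a b ⊆ closure (Icc a b \ B) :=
  calc Icc a b = closure (Ioo a b) := (closure_Ioo hab).symm
    _ ⊆ closure (Ioo a b ∩ Bᶜ) :=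
      closure_minimal ((hB.dense_compl ℝ).open_subset_closure_inter isOpen_Ioo) isClosed_closure
    _ ⊆ closure (Icc a b \ B) := closure_mono (inter_subset_inter_left _ Ioo_subset_Icc_self)

theorem Set.Countable.setOf_nontrivial_of_antitone {α β : Type*} [LinearOrder α] [LinearOrder β]
    {e : α → ℝ} (he : StrictMono e) {s : Set β} {U : β → Set α}
    (hU : ∀ x ∈ s, ∀ y ∈ s, x < y → ∀ a ∈ U x, ∀ b ∈ U y, b ≤ a) :
    {x ∈ s | (U x).Nontrivial}.Countable := by
  set S := {x ∈ s | (U x).Nontrivial}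
  have hsep : ∀ x ∈ S, ∃ q : ℚ, ∃ a ∈ U x, ∃ b ∈ U x, e a < q ∧ (q : ℝ) < e b := by
    rintro x ⟨-, hx⟩
    obtain ⟨a, ha, b, hb, hab⟩ := hx.exists_lt
    obtain ⟨q, hq⟩ := exists_rat_btwn (he hab)
    exact ⟨q, a, ha, b, hb, hq⟩
  choose! q hq using hsep
  have hq_ne : ∀ x ∈ S, ∀ y ∈ S, x < y → q x ≠ q y := by
    intro x hx y hy hxy hq_eq
    obtain ⟨a, ha, -, -, hax, -⟩ := hq x hx
    obtain ⟨-, -, b, hb, -, hyb⟩ := hq y hy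
    have hba : e b ≤ e a := he.monotone (hU x hx.1 y hy.1 hxy a ha b hb)
    rw [hq_eq] at hax
    linarith
  refine (mapsTo_univ q S).countable_of_injOn (fun x hx y hy hxy => ?_) countable_univ
  by_contra hxy_ne
  rcases lt_or_gt_of_ne hxy_ne with h | h
  exacts [hq_ne x hx y hy h hxy, hq_ne y hy x hx h hxy.symm]

theorem strictMono_cantorFunction_ofLex :
    StrictMono fun w : Lex (ℕ → Fin 2) =>
      Cardinal.cantorFunction (1 / 3) (fun n => ofLex w n = 1) := by
  rintro a b ⟨n, hagree, hlt⟩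
  have hn : ofLex a n = 0 ∧ ofLex b n = 1 := by
    have : ofLex a n < ofLex b n := hlt
    omega
  refine Cardinal.increasing_cantorFunction (by norm_num) (by norm_num) (n := n) ?_ ?_ ?_
  · intro k hk
    rw [show ofLex a k = ofLex b k from hagree k hk]
  · simp [hn.1]
  · simp [hn.2]

section Optimization

variable {X P : Type*} (H : X → P → ℝ) (Istar : X → ℝ≥0∞)

noncomputable def payoff (x : P) (w : X) : EReal :=
  ((H w x : ℝ) : EReal) - (Istar w : EReal)

def optimalSet (x : P) : Set X :=
  {w | payoff H Istar x w = ⨆ w', payoff H Istar x w'}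

variable {H Istar}

theorem mem_optimalSet_iff {x : P} {w : X} :
    w ∈ optimalSet H Istar x ↔ ∀ w', payoff H Istar x w' ≤ payoff H Istar x w :=
  ⟨fun h w' => h ▸ le_iSup _ w', fun h => le_antisymm (le_iSup _ w) (iSup_le h)⟩

theorem payoff_eq_coe (x : P) {w : X} (hw : Istar w ≠ ⊤) :
    payoff H Istar x w = ((H w x - (Istar w).toReal : ℝ) : EReal) := by
  rw [payoff, ← EReal.coe_ennreal_toReal hw, ← EReal.coe_sub]

theorem payoff_eq_bot (x : P) {w : X} (hw : Istar w = ⊤) : payoff H Istar x w = ⊥ := by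
  rw [payoff, hw, EReal.coe_ennreal_top, EReal.sub_top]

theorem upperSemicontinuous_payoff [TopologicalSpace X] {x : P} (hH : Continuous (H · x))
    (hIstar : LowerSemicontinuous Istar) : UpperSemicontinuous (payoff H Istar x) := by
  have hneg : UpperSemicontinuous fun w => -(Istar w : EReal) :=
    (continuous_neg.comp continuous_coe_ennreal_ereal).comp_lowerSemicontinuous_antitone hIstar
      fun _ _ h => EReal.neg_le_neg_iff.2 (EReal.coe_ennreal_le_coe_ennreal_iff.2 h)
  exact (continuous_coe_real_ereal.comp hH).upperSemicontinuous.add' hneg fun w =>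
    EReal.continuousAt_add (Or.inl (EReal.coe_ne_top _)) (Or.inl (EReal.coe_ne_bot _))

theorem optimalSet_nonempty [TopologicalSpace X] [CompactSpace X] [Nonempty X] (x : P)
    (hH : Continuous (H · x)) (hIstar : LowerSemicontinuous Istar) :
    (optimalSet H Istar x).Nonempty := by
  obtain ⟨w, -, hw⟩ := ((upperSemicontinuous_payoff hH hIstar).upperSemicontinuousOn
    univ).exists_isMaxOn univ_nonempty isCompact_univ
  exact ⟨w, mem_optimalSet_iff.2 fun w' => hw (mem_univ w')⟩

theorem ne_top_of_mem_optimalSet (hfin : ∃ w, Istar w ≠ ⊤) {x : P} {w : X}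
    (hw : w ∈ optimalSet H Istar x) : Istar w ≠ ⊤ := by
  intro htop
  obtain ⟨w₀, hw₀⟩ := hfin
  have := mem_optimalSet_iff.1 hw w₀
  rw [payoff_eq_bot x htop, le_bot_iff, payoff_eq_coe x hw₀] at this
  exact EReal.coe_ne_bot _ this

theorem sub_toReal_le_of_mem_optimalSet (hfin : ∃ w, Istar w ≠ ⊤) {x : P} {w w' : X}
    (hw : w ∈ optimalSet H Istar x) (hw' : Istar w' ≠ ⊤) :
    H w' x - (Istar w').toReal ≤ H w x - (Istar w).toReal := by
  have := mem_optimalSet_iff.1 hw w'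
  rwa [payoff_eq_coe x hw', payoff_eq_coe x (ne_top_of_mem_optimalSet hfin hw),
    EReal.coe_le_coe_iff] at this

theorem le_of_mem_optimalSet_of_twist [LinearOrder X] [Preorder P] {s : Set P}
    (htwist : ∀ a a' : X, ∀ x ∈ s, ∀ x' ∈ s, a < a' → x < x' → H a x + H a' x' < H a x' + H a' x)
    (hfin : ∃ w, Istar w ≠ ⊤) {x y : P} (hx : x ∈ s) (hy : y ∈ s) (hxy : x < y) {a b : X}
    (ha : a ∈ optimalSet H Istar x) (hb : b ∈ optimalSet H Istar y) : b ≤ a := by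
  by_contra! hab
  have hopt_x := sub_toReal_le_of_mem_optimalSet hfin ha (ne_top_of_mem_optimalSet hfin hb)
  have hopt_y := sub_toReal_le_of_mem_optimalSet hfin hb (ne_top_of_mem_optimalSet hfin ha)
  linarith [htwist a b x hx y hy hab hxy]

end Optimization

/-- Theorem 8.1 of the paper.
If `H` satisfies the twist condition, then the set of `x ∈ [0,1]` for which the set
`U(x)` of optimal points is a singleton (so the optimal `w(x)` is unique) is generic:
it contains a dense `G_δ` subset of `[0,1]`. -/
theorem stmt19
    -- the strict lexicographic order on Σ = {0,1}^ℕ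
    (lexLt : (ℕ → Fin 2) → (ℕ → Fin 2) → Prop)
    (hlex : ∀ a a' : ℕ → Fin 2,
      lexLt a a' ↔ ∃ n : ℕ, (∀ m, m < n → a m = a' m) ∧ a n < a' n)
    -- a continuous function H on Σ × I
    (H : (ℕ → Fin 2) → ℝ → ℝ)
    (hHcont : Continuous (fun p : (ℕ → Fin 2) × ℝ => H p.1 p.2))
    -- a lower semicontinuous deviation function I* : Σ → [0,∞], not identically +∞
    (Istar : (ℕ → Fin 2) → ℝ≥0∞)
    (hIstarlsc : LowerSemicontinuous Istar)
    (hIstartop : ∃ w, Istar w ≠ ⊤)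
    -- the twist condition for H
    (htwist : ∀ a a' : ℕ → Fin 2, ∀ x x' : ℝ, x ∈ Icc (0:ℝ) 1 → x' ∈ Icc (0:ℝ) 1 →
      lexLt a a' → x < x' → H a x + H a' x' < H a x' + H a' x) :
    -- conclusion: {x : U(x) is a singleton} contains a dense G_δ subset of [0,1]
    ∃ G : Set ℝ, G ⊆ Icc (0:ℝ) 1 ∧
      (∃ F : ℕ → Set ℝ, (∀ n, IsOpen (F n)) ∧ G = Icc (0:ℝ) 1 ∩ ⋂ n, F n) ∧
      Icc (0:ℝ) 1 ⊆ closure G ∧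
      ∀ x ∈ G, ∃ w : ℕ → Fin 2,
        {w' : ℕ → Fin 2 |
            ((H w' x : ℝ) : EReal) - (Istar w' : EReal)
              = ⨆ w'' : ℕ → Fin 2, (((H w'' x : ℝ) : EReal) - (Istar w'' : EReal))}
          = {w} := by
  -- `hlex` says that `lexLt` is the order of `Lex (ℕ → Fin 2)`; we work there.
  let H' : Lex (ℕ → Fin 2) → ℝ → ℝ := fun w => H (ofLex w)
  let I' : Lex (ℕ → Fin 2) → ℝ≥0∞ := fun w => Istar (ofLex w)
  have hanti : ∀ x ∈ Icc (0 : ℝ) 1, ∀ y ∈ Icc (0 : ℝ) 1, x < y →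
      ∀ a : Lex (ℕ → Fin 2), a ∈ optimalSet H' I' x → ∀ b, b ∈ optimalSet H' I' y → b ≤ a :=
    fun x hx y hy hxy a ha b hb => le_of_mem_optimalSet_of_twist (H := H') (Istar := I')
      (fun a a' x hx x' hx' h => htwist _ _ x x' hx hx' ((hlex _ _).2 h)) hIstartop hx hy hxy ha hb
  have hB := Set.Countable.setOf_nontrivial_of_antitone strictMono_cantorFunction_ofLex hanti
  refine ⟨_, sdiff_subset, hB.exists_diff_eq_inter_iInter _, hB.Icc_subset_closure_Icc_diff
    zero_ne_one, ?_⟩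
  rintro x ⟨hxI, hx⟩
  have hne : (optimalSet H Istar x).Nonempty :=
    optimalSet_nonempty x (hHcont.comp (.prodMk_left x)) hIstarlsc
  obtain ⟨w, hw⟩ := hne.exists_eq_singleton_or_nontrivial.resolve_right fun h => hx ⟨hxI, h⟩
  exact ⟨w, hw⟩
end
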